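/- arXiv:2602.15443 — 4 statements merged into one kernel-verified Lean document; each statement's English description precedes it below -/
import Mathlib

section
/- (Cyclicity Theorem) Let A ∈ ℝ_max^{n×n} be irreducible, let λ ∈ ℝ be its unique eigenvalue, and let σ ≥ 1 be its cyclicity. Then there exists an integer T ≥ 1 such that for every t ≥ T, A^{⊗(t+σ)} = σλ + A^{⊗t} entrywise (the scalar σλ added to every entry, with σλ + (-∞) = -∞). -/
open Filter Topology

/-- `E(t) = e^t` for real `t`, and `E(-∞) = 0`. -/
noncomputable def E : WithBot ℝ → ℝ :=
  WithBot.recBotCoe 0 Real.exp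

/-- The magnitude `‖x‖ = max_i E(x_i) = e^{max_i x_i}` of a tropical vector. -/
noncomputable def tnorm {n : ℕ} (x : Fin n → WithBot ℝ) : ℝ :=
  E (Finset.univ.sup x)

/-- Tropical product of a row vector and a column vector: `a ⊗ x = max_j (a_j + x_j)`. -/
noncomputable def tdot {n : ℕ} (a x : Fin n → WithBot ℝ) : WithBot ℝ :=
  Finset.univ.sup fun j => a j + x j

/-- The tropical zero vector `ε = (-∞, …, -∞)ᵀ`. -/
def botVec (n : ℕ) : Fin n → WithBot ℝ := fun _ => ⊥

/-- The row vector `a` gives a tropical linear approximation of `g` at `ε`: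
`d(g(x), a ⊗ x) / ‖x‖ → 0` as `x → ε`. -/
def IsTropLinApprox {n : ℕ} (g : (Fin n → WithBot ℝ) → WithBot ℝ)
    (a : Fin n → WithBot ℝ) : Prop :=
  ∀ η : ℝ, 0 < η → ∃ δ : ℝ, 0 < δ ∧ ∀ x : Fin n → WithBot ℝ,
    0 < tnorm x → tnorm x < δ → |E (g x) - E (tdot a x)| ≤ η * tnorm x

/-- `lam` is a (tropical) eigenvalue of `A`. -/
def IsEigenvalue {n : ℕ} (A : Fin n → Fin n → WithBot ℝ) (lam : WithBot ℝ) : Prop :=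
  ∃ x : Fin n → WithBot ℝ, x ≠ botVec n ∧ ∀ i, tdot (A i) x = lam + x i

/-- A circuit (closed walk) of length `ℓ ≥ 1` in the weighted digraph `G(A)`. -/
def IsCircuit {n : ℕ} (A : Fin n → Fin n → WithBot ℝ) (ℓ : ℕ) (c : ℕ → Fin n) : Prop :=
  1 ≤ ℓ ∧ c ℓ = c 0 ∧ ∀ k < ℓ, A (c k) (c (k + 1)) ≠ ⊥

/-- The weight of a circuit: the sum of its edge weights. -/
noncomputable def circuitWeight {n : ℕ} (A : Fin n → Fin n → WithBot ℝ)
    (ℓ : ℕ) (c : ℕ → Fin n) : WithBot ℝ :=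
  ∑ k ∈ Finset.range ℓ, A (c k) (c (k + 1))

/-- Tropical matrix product. -/
noncomputable def tmul {n : ℕ} (A B : Fin n → Fin n → WithBot ℝ) :
    Fin n → Fin n → WithBot ℝ :=
  fun i j => Finset.univ.sup fun k => A i k + B k j

/-- Tropical matrix power; `A^{⊗0}` is the tropical identity matrix. -/
noncomputable def tpow {n : ℕ} (A : Fin n → Fin n → WithBot ℝ) :
    ℕ → Fin n → Fin n → WithBot ℝ
  | 0 => fun i j => if i = j then (0 : WithBot ℝ) else ⊥
  | k + 1 => tmul (tpow A k) A

/-- `G(A)` is strongly connected (i.e. `A` is irreducible). -/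
def StronglyConnected {n : ℕ} (A : Fin n → Fin n → WithBot ℝ) : Prop :=
  ∀ i j : Fin n, ∃ (ℓ : ℕ) (c : ℕ → Fin n),
    c 0 = i ∧ c ℓ = j ∧ ∀ k < ℓ, A (c k) (c (k + 1)) ≠ ⊥

/-- Stability of the fixed point `ε` of `x ↦ f(x)`. -/
def TropStable {n : ℕ} (f : (Fin n → WithBot ℝ) → (Fin n → WithBot ℝ)) : Prop :=
  ∀ α : ℝ, 0 < α → ∃ δ : ℝ, 0 < δ ∧
    ∀ x0 : Fin n → WithBot ℝ, tnorm x0 < δ → ∀ t : ℕ, tnorm (f^[t] x0) < α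

/-- Asymptotic stability of the fixed point `ε` of `x ↦ f(x)`. -/
def TropAsymptoticallyStable {n : ℕ}
    (f : (Fin n → WithBot ℝ) → (Fin n → WithBot ℝ)) : Prop :=
  TropStable f ∧ ∃ δ' : ℝ, 0 < δ' ∧ ∀ x0 : Fin n → WithBot ℝ, tnorm x0 < δ' →
    Filter.Tendsto (fun t : ℕ => tnorm (f^[t] x0)) Filter.atTop (nhds 0)

/-- `d` is the greatest common divisor of the set `S ⊆ ℕ`. -/
def IsGCDOf (S : Set ℕ) (d : ℕ) : Prop :=
  (∀ s ∈ S, d ∣ s) ∧ ∀ e : ℕ, (∀ s ∈ S, e ∣ s) → e ∣ d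

/-- `m` is the least common multiple of the set `S ⊆ ℕ`. -/
def IsLCMOf (S : Set ℕ) (m : ℕ) : Prop :=
  (∀ s ∈ S, s ∣ m) ∧ ∀ e : ℕ, (∀ s ∈ S, s ∣ e) → m ∣ e

/-- The set of lengths of critical circuits (circuits of average weight `lam`, the maximum
average circuit weight) through the vertex `v`. -/
def critLengths {n : ℕ} (A : Fin n → Fin n → WithBot ℝ) (lam : ℝ) (v : Fin n) : Set ℕ :=
  { ℓ : ℕ | ∃ c : ℕ → Fin n, IsCircuit A ℓ c ∧
      circuitWeight A ℓ c = (((ℓ : ℝ) * lam : ℝ) : WithBot ℝ) ∧ c 0 = v }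

/-- `σ` is the cyclicity of `A` (w.r.t. the maximum average circuit weight `lam`):
the lcm over the strongly connected components of the critical digraph `G^c(A)` of the gcd
of the lengths of the circuits contained in that component.  For a critical vertex `v`, the
gcd of the lengths of the critical circuits (closed walks) through `v` equals the gcd of the
lengths of the circuits contained in the component of `v`, so the set of component gcds is
`{ d | ∃ critical vertex v, d = gcd of critLengths A lam v }`. -/
def IsCyclicity {n : ℕ} (A : Fin n → Fin n → WithBot ℝ) (lam : ℝ) (σ : ℕ) : Prop :=
  IsLCMOf { d : ℕ | ∃ v : Fin n, (critLengths A lam v).Nonempty ∧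
      IsGCDOf (critLengths A lam v) d } σ

namespace Stmt5Aux

open Finset

variable {n : ℕ}

/-- weight of the walk `c` between positions `a` and `b`. -/
noncomputable def wt (B : Fin n → Fin n → WithBot ℝ) (c : ℕ → Fin n) (a b : ℕ) : WithBot ℝ :=
  ∑ k ∈ Finset.Ico a b, B (c k) (c (k + 1))

lemma wt_same (B : Fin n → Fin n → WithBot ℝ) (c : ℕ → Fin n) (a : ℕ) : wt B c a a = 0 := by
  simp [wt]

lemma wt_succ (B : Fin n → Fin n → WithBot ℝ) (c : ℕ → Fin n) {a b : ℕ} (h : a ≤ b) :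
    wt B c a (b + 1) = wt B c a b + B (c b) (c (b + 1)) :=
  Finset.sum_Ico_succ_top h _

lemma wt_split (B : Fin n → Fin n → WithBot ℝ) (c : ℕ → Fin n) {a b b' : ℕ}
    (h1 : a ≤ b) (h2 : b ≤ b') : wt B c a b + wt B c b b' = wt B c a b' :=
  Finset.sum_Ico_consecutive _ h1 h2

lemma wt_congr (B : Fin n → Fin n → WithBot ℝ) {c c' : ℕ → Fin n} {a b : ℕ}
    (h : ∀ k, a ≤ k → k ≤ b → c k = c' k) : wt B c a b = wt B c' a b := by
  unfold wt
  apply Finset.sum_congr rfl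
  intro k hk
  rw [Finset.mem_Ico] at hk
  rw [h k hk.1 (le_of_lt hk.2), h (k+1) (by omega) (by omega)]

lemma wt_rebase (B : Fin n → Fin n → WithBot ℝ) (c : ℕ → Fin n) (a ℓ : ℕ) :
    wt B (fun k => c (a + k)) 0 ℓ = wt B c a (a + ℓ) := by
  unfold wt
  conv_rhs => rw [Finset.sum_Ico_eq_sum_range]
  rw [show Finset.Ico 0 ℓ = Finset.range ℓ from by rw [Finset.range_eq_Ico]]
  simp only [Nat.add_sub_cancel_left]
  apply Finset.sum_congr rfl
  intro k _
  rw [show a + (k + 1) = a + k + 1 from by omega]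

lemma wt_rebase' (B : Fin n → Fin n → WithBot ℝ) (c : ℕ → Fin n) {a b : ℕ} (h : a ≤ b) :
    wt B c a b = wt B (fun k => c (a + k)) 0 (b - a) := by
  rw [wt_rebase B c a (b - a), show a + (b - a) = b from by omega]

/-! ### WithBot helpers -/

lemma wb_le_coe_sub {u : WithBot ℝ} {r s : ℝ} (h : u + (r : WithBot ℝ) ≤ (s : WithBot ℝ)) :
    u ≤ ((s - r : ℝ) : WithBot ℝ) := by
  cases u with
  | bot => exact bot_le
  | coe w =>
    rw [← WithBot.coe_add, WithBot.coe_le_coe] at h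
    rw [WithBot.coe_le_coe]; linarith

lemma wb_eq_coe_sub {u : WithBot ℝ} {r s : ℝ} (h : u + (r : WithBot ℝ) = (s : WithBot ℝ)) :
    u = ((s - r : ℝ) : WithBot ℝ) := by
  cases u with
  | bot => simp at h
  | coe w =>
    rw [← WithBot.coe_add, WithBot.coe_inj] at h
    rw [WithBot.coe_inj]; linarith

lemma wb_le_zero {u : WithBot ℝ} {r : ℝ} (h : u + (r : WithBot ℝ) ≤ (r : WithBot ℝ)) :
    u ≤ 0 := by
  have := wb_le_coe_sub h
  simpa using this

lemma sup_add (hn : 0 < n) (g : Fin n → WithBot ℝ) (z : WithBot ℝ) :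
    (Finset.univ.sup g) + z = Finset.univ.sup (fun m => g m + z) := by
  have hne : (Finset.univ : Finset (Fin n)).Nonempty := ⟨⟨0, hn⟩, Finset.mem_univ _⟩
  obtain ⟨m, -, hm⟩ := Finset.exists_mem_eq_sup _ hne g
  apply le_antisymm
  · rw [hm]; exact Finset.le_sup (f := fun m => g m + z) (Finset.mem_univ m)
  · apply Finset.sup_le
    intro x _
    exact add_le_add_left (Finset.le_sup (Finset.mem_univ x)) z

lemma sup_exists (hn : 0 < n) (g : Fin n → WithBot ℝ) :
    ∃ m : Fin n, Finset.univ.sup g = g m := by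
  have hne : (Finset.univ : Finset (Fin n)).Nonempty := ⟨⟨0, hn⟩, Finset.mem_univ _⟩
  obtain ⟨m, -, hm⟩ := Finset.exists_mem_eq_sup _ hne g
  exact ⟨m, hm⟩

lemma sum_ne_bot {s : Finset ℕ} {f : ℕ → WithBot ℝ} (h : (∑ k ∈ s, f k) ≠ ⊥) :
    ∀ k ∈ s, f k ≠ ⊥ := by
  induction s using Finset.induction_on with
  | empty => intro k hk; simp at hk
  | insert _ _ hx ih =>
    rename_i a t
    rw [Finset.sum_insert hx] at h
    intro k hk
    rcases Finset.mem_insert.mp hk with rfl | hk'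
    · intro hb; rw [hb] at h; simp [WithBot.add_eq_bot] at h
    · refine ih ?_ k hk'
      intro hb; rw [hb] at h; simp [WithBot.add_eq_bot] at h

lemma wt_ne_bot_edges {B : Fin n → Fin n → WithBot ℝ} {c : ℕ → Fin n} {a b : ℕ}
    (h : wt B c a b ≠ ⊥) : ∀ k, a ≤ k → k < b → B (c k) (c (k + 1)) ≠ ⊥ := by
  intro k h1 h2
  exact sum_ne_bot h k (Finset.mem_Ico.mpr ⟨h1, h2⟩)

lemma sum_const_add {m : ℕ} {f : ℕ → WithBot ℝ} {a : ℝ} :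
    ∑ k ∈ Finset.range m, (f k + (a : WithBot ℝ))
      = (∑ k ∈ Finset.range m, f k) + ((m * a : ℝ) : WithBot ℝ) := by
  induction m with
  | zero => simp
  | succ m ih =>
    rw [Finset.sum_range_succ, Finset.sum_range_succ, ih]
    have h1 : ((m + 1 : ℕ) : ℝ) * a = (m : ℝ) * a + a := by push_cast; ring
    rw [h1, WithBot.coe_add]
    abel

end Stmt5Aux

namespace Stmt5Aux2
open Stmt5Aux Finset

variable {n : ℕ}

lemma tpow_succ (B : Fin n → Fin n → WithBot ℝ) (k : ℕ) :
    tpow B (k + 1) = tmul (tpow B k) B := rfl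

lemma tpow_zero (B : Fin n → Fin n → WithBot ℝ) (i j : Fin n) :
    tpow B 0 i j = if i = j then (0 : WithBot ℝ) else ⊥ := rfl

lemma tpow_one (hn : 0 < n) (B : Fin n → Fin n → WithBot ℝ) (i j : Fin n) :
    tpow B 1 i j = B i j := by
  show (Finset.univ.sup fun m => tpow B 0 i m + B m j) = B i j
  apply le_antisymm
  · apply Finset.sup_le
    intro m _
    by_cases h : i = m
    · subst h; simp [tpow_zero]
    · simp [tpow_zero, if_neg h]
  · have := Finset.le_sup (f := fun m => tpow B 0 i m + B m j) (Finset.mem_univ i)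
    simpa [tpow_zero] using this

lemma walk_le_tpow (B : Fin n → Fin n → WithBot ℝ) :
    ∀ (t : ℕ) (c : ℕ → Fin n), wt B c 0 t ≤ tpow B t i j → True := fun _ _ _ => trivial

lemma walk_le (B : Fin n → Fin n → WithBot ℝ) (t : ℕ) (c : ℕ → Fin n) :
    wt B c 0 t ≤ tpow B t (c 0) (c t) := by
  induction t with
  | zero => simp [wt_same, tpow_zero]
  | succ t ih =>
    rw [wt_succ B c (Nat.zero_le t)]
    calc wt B c 0 t + B (c t) (c (t + 1))
        ≤ tpow B t (c 0) (c t) + B (c t) (c (t + 1)) := add_le_add_left ih _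
      _ ≤ _ := Finset.le_sup (f := fun m => tpow B t (c 0) m + B m (c (t + 1)))
          (Finset.mem_univ (c t))

lemma walk_attain (hn : 0 < n) (B : Fin n → Fin n → WithBot ℝ) :
    ∀ t, 1 ≤ t → ∀ i j : Fin n, ∃ c : ℕ → Fin n,
      c 0 = i ∧ c t = j ∧ wt B c 0 t = tpow B t i j := by
  intro t
  induction t with
  | zero => omega
  | succ t ih =>
    intro _ i j
    by_cases ht : 1 ≤ t
    · obtain ⟨m, hm⟩ := sup_exists hn (fun m => tpow B t i m + B m j)
      obtain ⟨c, hc0, hct, hcw⟩ := ih ht i m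
      refine ⟨fun k => if k ≤ t then c k else j, by simp [hc0], by simp, ?_⟩
      rw [wt_succ _ _ (Nat.zero_le t)]
      have h1 : wt B (fun k => if k ≤ t then c k else j) 0 t = wt B c 0 t :=
        wt_congr B (fun k _ hk => by simp [hk])
      have h2 : tpow B (t + 1) i j = tpow B t i m + B m j := hm
      rw [h1, h2, hcw]
      simp [hct]
    · have ht0 : t = 0 := by omega
      subst ht0
      refine ⟨fun k => if k = 0 then i else j, by simp, by simp, ?_⟩
      rw [tpow_one hn]
      show ∑ k ∈ Finset.Ico 0 1, _ = B i j
      simp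

/-! ### Gluing walks -/

def glue (c₁ c₂ : ℕ → Fin n) (t₁ : ℕ) : ℕ → Fin n :=
  fun k => if k < t₁ then c₁ k else c₂ (k - t₁)

lemma glue_zero {c₁ c₂ : ℕ → Fin n} {t₁ : ℕ} (h : c₁ t₁ = c₂ 0) :
    glue c₁ c₂ t₁ 0 = c₁ 0 := by
  unfold glue
  by_cases h0 : 0 < t₁
  · simp [h0]
  · have : t₁ = 0 := by omega
    subst this
    simpa using h.symm

lemma glue_end {c₁ c₂ : ℕ → Fin n} (t₁ t₂ : ℕ) :
    glue c₁ c₂ t₁ (t₁ + t₂) = c₂ t₂ := by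
  unfold glue
  rw [if_neg (by omega)]
  congr 1
  omega

lemma glue_pos {c₁ c₂ : ℕ → Fin n} {t₁ : ℕ} (h : c₁ t₁ = c₂ 0) (k : ℕ) (hk : k ≤ t₁) :
    glue c₁ c₂ t₁ k = c₁ k := by
  unfold glue
  by_cases h1 : k < t₁
  · simp [h1]
  · have : k = t₁ := by omega
    subst this
    rw [if_neg (by omega)]
    simpa using h.symm

lemma glue_wt (B : Fin n → Fin n → WithBot ℝ) {c₁ c₂ : ℕ → Fin n} {t₁ : ℕ} (t₂ : ℕ)
    (h : c₁ t₁ = c₂ 0) :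
    wt B (glue c₁ c₂ t₁) 0 (t₁ + t₂) = wt B c₁ 0 t₁ + wt B c₂ 0 t₂ := by
  rw [← wt_split B (glue c₁ c₂ t₁) (Nat.zero_le t₁) (Nat.le_add_right t₁ t₂)]
  congr 1
  · exact wt_congr B (fun k _ hk => glue_pos h k hk)
  · rw [wt_rebase' B (glue c₁ c₂ t₁) (Nat.le_add_right t₁ t₂), Nat.add_sub_cancel_left]
    apply wt_congr
    intro k _ hk
    show glue c₁ c₂ t₁ (t₁ + k) = c₂ k
    unfold glue
    rw [if_neg (by omega)]
    congr 1
    omega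

/-! ### Removing a closed segment -/

def cutW (c : ℕ → Fin n) (a δ : ℕ) : ℕ → Fin n :=
  fun k => if k ≤ a then c k else c (k + δ)

lemma cut_zero (c : ℕ → Fin n) (a δ : ℕ) : cutW c a δ 0 = c 0 := by simp [cutW]

lemma cut_low (c : ℕ → Fin n) {a δ : ℕ} {k : ℕ} (hk : k ≤ a) : cutW c a δ k = c k := by
  simp [cutW, hk]

lemma cut_end {c : ℕ → Fin n} {a b t : ℕ} (hab : a < b) (hbt : b ≤ t) (hc : c a = c b) :
    cutW c a (b - a) (t - (b - a)) = c t := by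
  unfold cutW
  by_cases h : t - (b - a) ≤ a
  · have hb : t = b := by omega
    have ha : t - (b - a) = a := by omega
    rw [if_pos h, ha, hc, hb]
  · rw [if_neg h]
    congr 1
    omega

lemma cut_wt (B : Fin n → Fin n → WithBot ℝ) {c : ℕ → Fin n} {a b t : ℕ}
    (hab : a < b) (hbt : b ≤ t) (hc : c a = c b) :
    wt B c 0 t = wt B (cutW c a (b - a)) 0 (t - (b - a)) + wt B c a b := by
  set δ := b - a with hδ
  set c' := cutW c a δ with hc'
  have key1 : wt B c' 0 a = wt B c 0 a :=
    wt_congr B (fun k _ hk => cut_low c hk)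
  have key2 : wt B c' a (t - δ) = wt B c b t := by
    rw [wt_rebase' B c' (show a ≤ t - δ from by omega), wt_rebase' B c hbt]
    have hlen : t - δ - a = t - b := by omega
    rw [hlen]
    apply wt_congr
    intro k _ hk
    show c' (a + k) = c (b + k)
    unfold c'
    unfold cutW
    by_cases hk0 : k = 0
    · subst hk0
      simp [hc]
    · rw [if_neg (by omega)]
      congr 1
      omega
  rw [← wt_split B c (Nat.zero_le a) (le_trans (le_of_lt hab) hbt),
      ← wt_split B c (le_of_lt hab) hbt]
  rw [← wt_split B c' (Nat.zero_le a) (by omega : a ≤ t - δ)]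
  rw [key1, key2]
  abel

end Stmt5Aux2

namespace Stmt5Aux3
open Stmt5Aux Stmt5Aux2 Finset

variable {n : ℕ}

/-- the normalized matrix `B = A - λ`. -/
noncomputable def Bm (A : Fin n → Fin n → WithBot ℝ) (lam : ℝ) : Fin n → Fin n → WithBot ℝ :=
  fun i j => A i j + ((-lam : ℝ) : WithBot ℝ)

lemma Bm_ne_bot {A : Fin n → Fin n → WithBot ℝ} {lam : ℝ} {i j : Fin n} :
    Bm A lam i j ≠ ⊥ ↔ A i j ≠ ⊥ := by
  unfold Bm
  rw [ne_eq, WithBot.add_eq_bot]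
  simp

lemma tpow_shift (hn : 0 < n) (A : Fin n → Fin n → WithBot ℝ) (lam : ℝ) :
    ∀ t (i j : Fin n), tpow A t i j = tpow (Bm A lam) t i j + (((t : ℝ) * lam : ℝ) : WithBot ℝ) := by
  intro t
  induction t with
  | zero =>
    intro i j
    simp [tpow_zero]
  | succ t ih =>
    intro i j
    show (Finset.univ.sup fun m => tpow A t i m + A m j) = _
    have hrhs : tpow (Bm A lam) (t+1) i j = Finset.univ.sup fun m => tpow (Bm A lam) t i m + Bm A lam m j := rfl
    rw [hrhs, sup_add hn]
    apply Finset.sup_congr rfl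
    intro m _
    rw [ih i m]
    have hc : ((-lam : ℝ) : WithBot ℝ) + ((((t:ℕ)+1 : ℝ)) * lam : ℝ) = (((t:ℕ) : ℝ) * lam : ℝ) := by
      rw [← WithBot.coe_add]
      congr 1
      ring
    show tpow (Bm A lam) t i m + ↑((t:ℝ) * lam) + A m j
        = tpow (Bm A lam) t i m + (A m j + ((-lam : ℝ) : WithBot ℝ)) + ↑(((t+1:ℕ):ℝ) * lam)
    have hco : (((t+1:ℕ):ℝ) * lam) = (((t:ℕ)+1 : ℝ) * lam) := by push_cast; ring
    rw [hco, ← hc]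
    abel

/-- The eigenvector data, in real form. -/
lemma eigvec (hn : 0 < n) {A : Fin n → Fin n → WithBot ℝ}
    (hirr : ∀ i j : Fin n, ∃ (ℓ : ℕ) (c : ℕ → Fin n),
      c 0 = i ∧ c ℓ = j ∧ ∀ k < ℓ, A (c k) (c (k + 1)) ≠ ⊥)
    {lam : ℝ} (heig : IsEigenvalue A (lam : WithBot ℝ)) :
    ∃ x : Fin n → ℝ, (∀ i j, A i j + ((x j : ℝ) : WithBot ℝ) ≤ ((lam + x i : ℝ) : WithBot ℝ)) ∧
      (∀ i, ∃ j, A i j + ((x j : ℝ) : WithBot ℝ) = ((lam + x i : ℝ) : WithBot ℝ) ∧ A i j ≠ ⊥) := by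
  obtain ⟨y, hy0, hy⟩ := heig
  have hex : ∃ j₀, y j₀ ≠ ⊥ := by
    by_contra h
    push_neg at h
    exact hy0 (funext fun i => h i)
  obtain ⟨j₀, hj₀⟩ := hex
  have hall : ∀ i, y i ≠ ⊥ := by
    intro i
    obtain ⟨ℓ, c, hc0, hcl, hce⟩ := hirr i j₀
    have key : ∀ k, k ≤ ℓ → y (c (ℓ - k)) ≠ ⊥ := by
      intro k
      induction k with
      | zero => intro _; simpa [hcl] using hj₀
      | succ k ihk =>
        intro hk
        have h1 : y (c (ℓ - k)) ≠ ⊥ := ihk (by omega)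
        have hedge : A (c (ℓ - (k+1))) (c (ℓ - (k+1) + 1)) ≠ ⊥ := hce _ (by omega)
        have hstep : ℓ - (k+1) + 1 = ℓ - k := by omega
        rw [hstep] at hedge
        have hge : A (c (ℓ - (k+1))) (c (ℓ - k)) + y (c (ℓ - k)) ≤ (lam : WithBot ℝ) + y (c (ℓ - (k+1))) := by
          rw [← hy (c (ℓ - (k+1)))]
          exact Finset.le_sup (f := fun j => A (c (ℓ - (k+1))) j + y j) (Finset.mem_univ _)
        intro hbot
        rw [hbot] at hge
        simp only [WithBot.add_bot] at hge
        have : A (c (ℓ - (k+1))) (c (ℓ - k)) + y (c (ℓ - k)) = ⊥ := le_bot_iff.mp hge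
        rw [WithBot.add_eq_bot] at this
        tauto
    have := key ℓ le_rfl
    simpa [hc0] using this
  set x : Fin n → ℝ := fun i => (y i).unbotD 0 with hx
  have hco : ∀ i, y i = ((x i : ℝ) : WithBot ℝ) := by
    intro i
    cases h : y i with
    | bot => exact absurd h (hall i)
    | coe r => simp [hx, h]
  refine ⟨x, ?_, ?_⟩
  · intro i j
    have h1 : A i j + y j ≤ tdot (A i) y :=
      Finset.le_sup (f := fun j => A i j + y j) (Finset.mem_univ j)
    rw [hy i, hco j, hco i] at h1
    calc A i j + ((x j : ℝ) : WithBot ℝ) ≤ (lam : WithBot ℝ) + ((x i : ℝ) : WithBot ℝ) := h1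
      _ = ((lam + x i : ℝ) : WithBot ℝ) := by rw [← WithBot.coe_add]
  · intro i
    obtain ⟨j, hj⟩ := sup_exists hn (fun j => A i j + y j)
    have h1 : A i j + y j = (lam : WithBot ℝ) + y i := by rw [← hj]; exact (hy i)
    rw [hco j, hco i, ← WithBot.coe_add] at h1
    refine ⟨j, h1, ?_⟩
    intro hbot
    rw [hbot] at h1
    simp only [WithBot.bot_add] at h1
    exact (WithBot.coe_ne_bot (a := lam + x i)) h1.symm

end Stmt5Aux3

namespace Stmt5Aux4
open Stmt5Aux Stmt5Aux2 Stmt5Aux3 Finset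

variable {n : ℕ}

lemma tele {B : Fin n → Fin n → WithBot ℝ} {x : Fin n → ℝ}
    (hB : ∀ i j, B i j + ((x j : ℝ) : WithBot ℝ) ≤ ((x i : ℝ) : WithBot ℝ))
    (c : ℕ → Fin n) (a : ℕ) :
    ∀ b, a ≤ b → wt B c a b + ((x (c b) : ℝ) : WithBot ℝ) ≤ ((x (c a) : ℝ) : WithBot ℝ) := by
  intro b
  induction b with
  | zero =>
    intro hb
    have : a = 0 := by omega
    subst this
    simp [wt_same]
  | succ b ih =>
    intro hb
    by_cases hab : a ≤ b
    · rw [wt_succ B c hab]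
      calc wt B c a b + B (c b) (c (b+1)) + ((x (c (b+1)) : ℝ) : WithBot ℝ)
          = wt B c a b + (B (c b) (c (b+1)) + ((x (c (b+1)) : ℝ) : WithBot ℝ)) := by abel
        _ ≤ wt B c a b + ((x (c b) : ℝ) : WithBot ℝ) := add_le_add_right (hB _ _) _
        _ ≤ _ := ih hab
    · have : a = b + 1 := by omega
      subst this
      simp [wt_same]

lemma closed_le {B : Fin n → Fin n → WithBot ℝ} {x : Fin n → ℝ}
    (hB : ∀ i j, B i j + ((x j : ℝ) : WithBot ℝ) ≤ ((x i : ℝ) : WithBot ℝ))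
    {c : ℕ → Fin n} {a b : ℕ} (hab : a ≤ b) (hc : c a = c b) : wt B c a b ≤ 0 := by
  have := tele hB c a b hab
  rw [hc] at this
  exact wb_le_zero this

lemma wt_eq_circuitWeight (B : Fin n → Fin n → WithBot ℝ) (c : ℕ → Fin n) (ℓ : ℕ) :
    wt B c 0 ℓ = circuitWeight B ℓ c := by
  unfold wt circuitWeight
  rw [Finset.range_eq_Ico]

lemma circuitWeight_Bm (A : Fin n → Fin n → WithBot ℝ) (lam : ℝ) (c : ℕ → Fin n) (ℓ : ℕ) :
    circuitWeight (Bm A lam) ℓ c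
      = circuitWeight A ℓ c + (((ℓ : ℝ) * (-lam) : ℝ) : WithBot ℝ) := by
  unfold circuitWeight Bm
  exact sum_const_add

lemma crit_pad {A : Fin n → Fin n → WithBot ℝ} {lam : ℝ} {v : Fin n} {ℓ : ℕ}
    (h : ℓ ∈ critLengths A lam v) :
    ∃ c : ℕ → Fin n, c 0 = v ∧ c ℓ = v ∧ wt (Bm A lam) c 0 ℓ = 0 ∧ 1 ≤ ℓ := by
  obtain ⟨c, ⟨hl1, hcl, _⟩, hw, hc0⟩ := h
  refine ⟨c, hc0, by rw [hcl, hc0], ?_, hl1⟩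
  rw [wt_eq_circuitWeight, circuitWeight_Bm, hw, ← WithBot.coe_add]
  have : (ℓ:ℝ) * lam + (ℓ:ℝ) * (-lam) = 0 := by ring
  rw [this]
  rfl

lemma crit_of_walk {A : Fin n → Fin n → WithBot ℝ} {lam : ℝ} {c : ℕ → Fin n} {ℓ : ℕ}
    (h0 : wt (Bm A lam) c 0 ℓ = 0) (hℓ : 1 ≤ ℓ) (hcl : c ℓ = c 0) :
    ℓ ∈ critLengths A lam (c 0) := by
  have hnb : wt (Bm A lam) c 0 ℓ ≠ ⊥ := by rw [h0]; exact WithBot.coe_ne_bot (a := (0:ℝ))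
  have hedges : ∀ k < ℓ, A (c k) (c (k+1)) ≠ ⊥ := by
    intro k hk
    exact Bm_ne_bot.mp (wt_ne_bot_edges hnb k (Nat.zero_le k) hk)
  refine ⟨c, ⟨hℓ, hcl, hedges⟩, ?_, rfl⟩
  have h1 : circuitWeight A ℓ c + (((ℓ:ℝ) * (-lam) : ℝ) : WithBot ℝ) = ((0:ℝ) : WithBot ℝ) := by
    rw [← circuitWeight_Bm, ← wt_eq_circuitWeight, h0]
    rfl
  have := wb_eq_coe_sub h1
  rw [this]
  congr 1
  ring

lemma crit_add {A : Fin n → Fin n → WithBot ℝ} {lam : ℝ} {v : Fin n} {ℓ₁ ℓ₂ : ℕ}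
    (h1 : ℓ₁ ∈ critLengths A lam v) (h2 : ℓ₂ ∈ critLengths A lam v) :
    ℓ₁ + ℓ₂ ∈ critLengths A lam v := by
  obtain ⟨c₁, hc10, hc1l, hw1, hl1⟩ := crit_pad h1
  obtain ⟨c₂, hc20, hc2l, hw2, hl2⟩ := crit_pad h2
  have hgl : c₁ ℓ₁ = c₂ 0 := by rw [hc1l, hc20]
  have hz : glue c₁ c₂ ℓ₁ 0 = v := by rw [glue_zero hgl, hc10]
  have hend : glue c₁ c₂ ℓ₁ (ℓ₁ + ℓ₂) = glue c₁ c₂ ℓ₁ 0 := by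
    rw [glue_end, hc2l, hz]
  have hw : wt (Bm A lam) (glue c₁ c₂ ℓ₁) 0 (ℓ₁ + ℓ₂) = 0 := by
    rw [glue_wt _ _ hgl, hw1, hw2, add_zero]
  have := crit_of_walk hw (by omega) hend
  rwa [hz] at this

/-! ### Number theory: gcd representation and numerical semigroups -/

lemma closure_cases {S : Set ℕ} {z : ℕ} (hz : z ∈ AddSubmonoid.closure S)
    (hadd : ∀ a ∈ S, ∀ b ∈ S, a + b ∈ S) : z = 0 ∨ z ∈ S := by
  induction hz using AddSubmonoid.closure_induction with
  | mem x hx => exact Or.inr hx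
  | zero => exact Or.inl rfl
  | add a b _ _ ha hb =>
    rcases ha with rfl | ha
    · simpa using hb
    · rcases hb with rfl | hb
      · right; simpa using ha
      · exact Or.inr (hadd _ ha _ hb)

lemma dvd_closure {S : Set ℕ} {e : ℕ} (he : ∀ s ∈ S, e ∣ s) {z : ℕ}
    (hz : z ∈ AddSubmonoid.closure S) : e ∣ z := by
  induction hz using AddSubmonoid.closure_induction with
  | mem x hx => exact he x hx
  | zero => exact Dvd.intro 0 rfl
  | add a b _ _ ha hb => exact Nat.dvd_add ha hb

lemma gcd_full (S : Set ℕ) (hS : ∃ s ∈ S, 1 ≤ s) :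
    ∃ d : ℕ, 1 ≤ d ∧ IsGCDOf S d ∧
      ∃ P ∈ AddSubmonoid.closure S, ∃ N ∈ AddSubmonoid.closure S, (P : ℤ) - (N : ℤ) = (d : ℤ) := by
  obtain ⟨s, hsS, hs1⟩ := hS
  have hT : ∃ k : ℕ, 1 ≤ k ∧ ∃ P ∈ AddSubmonoid.closure S, ∃ N ∈ AddSubmonoid.closure S,
      (P : ℤ) - (N : ℤ) = (k : ℤ) := by
    exact ⟨s, hs1, s, AddSubmonoid.subset_closure hsS, 0, (AddSubmonoid.closure S).zero_mem, by simp⟩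
  classical
  set d := Nat.find hT with hd
  obtain ⟨hd1, P, hP, N, hN, hPN⟩ := Nat.find_spec hT
  have hdvd : ∀ m ∈ S, d ∣ m := by
    intro m hm
    by_contra hnd
    have hr : m % d ≠ 0 := fun h => hnd (Nat.dvd_of_mod_eq_zero h)
    set q := m / d with hq
    set r := m % d with hrr
    have hmd : m = d * q + r := by rw [hq, hrr]; exact (Nat.div_add_mod m d).symm
    have hrT : 1 ≤ r ∧ ∃ P' ∈ AddSubmonoid.closure S, ∃ N' ∈ AddSubmonoid.closure S,
        (P' : ℤ) - (N' : ℤ) = (r : ℤ) := by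
      refine ⟨by omega, m + q * N, ?_, q * P, ?_, ?_⟩
      · exact (AddSubmonoid.closure S).add_mem (AddSubmonoid.subset_closure hm)
          (by simpa [smul_eq_mul] using (AddSubmonoid.closure S).nsmul_mem hN q)
      · simpa [smul_eq_mul] using (AddSubmonoid.closure S).nsmul_mem hP q
      · push_cast
        have h4 : (q:ℤ) * P - (q:ℤ) * N = (q:ℤ) * d := by rw [← mul_sub, hPN]
        have h5 : (m : ℤ) = d * q + r := by exact_mod_cast hmd
        linarith [h4, h5]
    have : d ≤ r := Nat.find_min' hT hrT
    have : r < d := Nat.mod_lt m (by omega)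
    omega
  refine ⟨d, hd1, ⟨hdvd, ?_⟩, P, hP, N, hN, hPN⟩
  intro e he
  have heP : e ∣ P := dvd_closure he hP
  have heN : e ∣ N := dvd_closure he hN
  have : (e : ℤ) ∣ (d : ℤ) := by
    rw [← hPN]
    exact dvd_sub (Int.natCast_dvd_natCast.mpr heP) (Int.natCast_dvd_natCast.mpr heN)
  exact_mod_cast this

lemma mul_mem_add_closed {S : Set ℕ} (hadd : ∀ a ∈ S, ∀ b ∈ S, a + b ∈ S)
    {s : ℕ} (hs : s ∈ S) : ∀ k, 1 ≤ k → k * s ∈ S := by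
  intro k
  induction k with
  | zero => omega
  | succ k ih =>
    intro _
    by_cases hk : 1 ≤ k
    · have := hadd _ (ih hk) _ hs
      rwa [show (k+1) * s = k * s + s from by ring]
    · have : k = 0 := by omega
      subst this
      simpa using hs

lemma ns_lemma (S : Set ℕ) (hadd : ∀ a ∈ S, ∀ b ∈ S, a + b ∈ S)
    {s₁ : ℕ} (hs₁ : s₁ ∈ S) (h1 : 1 ≤ s₁) {d : ℕ} (hd : IsGCDOf S d) :
    ∃ L, 1 ≤ L ∧ ∀ m, L ≤ m → d ∣ m → m ∈ S := by
  obtain ⟨d', hd'1, hd'gcd, P, hP, N, hN, hPN⟩ := gcd_full S ⟨s₁, hs₁, h1⟩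
  have hdd' : d = d' := Nat.dvd_antisymm (hd'gcd.2 d hd.1) (hd.2 d' hd'gcd.1)
  subst hdd'
  have hds₁ : d ∣ s₁ := hd.1 s₁ hs₁
  -- base unit u with u ≡ d mod s₁, u ∈ closure S
  set u := P + (s₁ - 1) * N with hu
  have huc : u ∈ AddSubmonoid.closure S := by
    refine (AddSubmonoid.closure S).add_mem hP ?_
    simpa [smul_eq_mul] using (AddSubmonoid.closure S).nsmul_mem hN (s₁ - 1)
  have hueq : u = d + s₁ * N := by
    have hPeq : P = N + d := by omega
    obtain ⟨s, rfl⟩ : ∃ s, s₁ = s + 1 := ⟨s₁ - 1, by omega⟩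
    rw [hu, hPeq]
    simp only [Nat.add_sub_cancel]
    ring
  -- e r := r * u ≡ r * d mod s₁
  have hmem : ∀ r : ℕ, r * u ∈ AddSubmonoid.closure S := by
    intro r
    simpa [smul_eq_mul] using (AddSubmonoid.closure S).nsmul_mem huc r
  have hmod : ∀ r : ℕ, r * u ≡ r * d [MOD s₁] := by
    intro r
    show (r * u) % s₁ = (r * d) % s₁
    rw [hueq, show r * (d + s₁ * N) = r * d + (r * N) * s₁ from by ring,
      Nat.add_mul_mod_self_right]
  refine ⟨s₁ * u + s₁, by omega, ?_⟩
  intro m hm hdm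
  set r := (m % s₁) / d with hr
  have hdms : d ∣ m % s₁ := (Nat.dvd_mod_iff hds₁).mpr hdm
  have hrd : r * d = m % s₁ := by
    rw [hr, Nat.div_mul_cancel hdms]
  have hrlt : r < s₁ := by
    have h2 : m % s₁ < s₁ := Nat.mod_lt m (by omega)
    have : r ≤ m % s₁ := by
      rw [hr]
      exact Nat.div_le_self _ _
    omega
  have hcong : m ≡ r * u [MOD s₁] := by
    have h1' : m ≡ m % s₁ [MOD s₁] := (Nat.mod_modEq m s₁).symm
    have h2' : r * u ≡ m % s₁ [MOD s₁] := by rw [← hrd]; exact hmod r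
    exact h1'.trans h2'.symm
  have hle : r * u + s₁ ≤ m := by
    have h5 : r * u + s₁ ≤ s₁ * u + s₁ :=
      add_le_add_left (Nat.mul_le_mul_right u (by omega)) s₁
    exact le_trans h5 hm
  have hmemr := hmem r
  obtain ⟨R, hR⟩ : ∃ R, r * u = R := ⟨_, rfl⟩
  rw [hR] at hcong hle hmemr
  have hsub : s₁ ∣ m - R := (Nat.modEq_iff_dvd' (by omega)).mp hcong.symm
  obtain ⟨k, hk⟩ := hsub
  have hk1 : 1 ≤ k := by
    rcases Nat.eq_zero_or_pos k with h0 | h1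
    · rw [h0, Nat.mul_zero] at hk; omega
    · exact h1
  have hKS : s₁ * k ∈ S := by
    have := mul_mem_add_closed hadd hs₁ k hk1
    rwa [Nat.mul_comm] at this
  obtain ⟨K, hKdef⟩ : ∃ K, s₁ * k = K := ⟨_, rfl⟩
  rw [hKdef] at hk hKS
  have hm_eq : m = R + K := by omega
  rcases closure_cases hmemr hadd with h0 | hS'
  · rw [hm_eq, h0, zero_add]
    exact hKS
  · rw [hm_eq]
    exact hadd _ hS' _ hKS

end Stmt5Aux4

namespace Stmt5Aux5
open Stmt5Aux Stmt5Aux2 Stmt5Aux3 Stmt5Aux4 Finset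

variable {n : ℕ}

lemma cut_high {c : ℕ → Fin n} {a b : ℕ} (hab : a < b) (hc : c a = c b) :
    ∀ k, a ≤ k → cutW c a (b - a) k = c (k + (b - a)) := by
  intro k hk
  unfold cutW
  by_cases h : k ≤ a
  · have hka : k = a := by omega
    rw [hka, if_pos le_rfl, hc, show a + (b - a) = b from by omega]
  · rw [if_neg h]

lemma pigeon (hn : 0 < n) (c : ℕ → Fin n) (s₀ d : ℕ) (hd : 1 ≤ d) :
    ∃ a b : ℕ, s₀ ≤ a ∧ a < b ∧ b ≤ s₀ + n * d ∧ c a = c b ∧ d ∣ (b - a) := by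
  have hcard : Fintype.card (Fin n × Fin d) < Fintype.card (Fin (n * d + 1)) := by
    simp [Fintype.card_prod]
  obtain ⟨k₁, k₂, hne, heq⟩ := Fintype.exists_ne_map_eq_of_card_lt
    (fun k : Fin (n * d + 1) => (c (s₀ + (k : ℕ)), (⟨(k : ℕ) % d, Nat.mod_lt _ (by omega)⟩ : Fin d)))
    hcard
  have hv : c (s₀ + (k₁ : ℕ)) = c (s₀ + (k₂ : ℕ)) := congrArg Prod.fst heq
  have hm : (k₁ : ℕ) % d = (k₂ : ℕ) % d := by
    have := congrArg Prod.snd heq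
    simpa using this
  have hkne : (k₁ : ℕ) ≠ (k₂ : ℕ) := fun h => hne (Fin.ext h)
  rcases Nat.lt_or_ge (k₁ : ℕ) (k₂ : ℕ) with hlt | hge
  · refine ⟨s₀ + k₁, s₀ + k₂, by omega, by omega, by omega, hv, ?_⟩
    have : d ∣ (k₂ : ℕ) - (k₁ : ℕ) := (Nat.modEq_iff_dvd' (by omega)).mp hm
    have heq2 : (s₀ + (k₂:ℕ)) - (s₀ + (k₁:ℕ)) = (k₂:ℕ) - (k₁:ℕ) := by omega
    rwa [heq2]
  · have hlt : (k₂ : ℕ) < (k₁ : ℕ) := by omega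
    refine ⟨s₀ + k₂, s₀ + k₁, by omega, by omega, by omega, hv.symm, ?_⟩
    have : d ∣ (k₁ : ℕ) - (k₂ : ℕ) := (Nat.modEq_iff_dvd' (by omega)).mp hm.symm
    have heq2 : (s₀ + (k₁:ℕ)) - (s₀ + (k₂:ℕ)) = (k₁:ℕ) - (k₂:ℕ) := by omega
    rwa [heq2]

lemma le_of_eq_add_nonpos {u v w : WithBot ℝ} (h : u = v + w) (hw : w ≤ 0) : u ≤ v := by
  rw [h]
  calc v + w ≤ v + 0 := add_le_add_right hw v
    _ = v := add_zero v

lemma shrink_tail (hn : 0 < n) {B : Fin n → Fin n → WithBot ℝ} {x : Fin n → ℝ}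
    (hB : ∀ i j, B i j + ((x j : ℝ) : WithBot ℝ) ≤ ((x i : ℝ) : WithBot ℝ))
    {d : ℕ} (hd : 1 ≤ d) :
    ∀ (K : ℕ) (c : ℕ → Fin n) (t p : ℕ), p + K * (n * d) ≤ t →
    ∃ (c' : ℕ → Fin n) (m : ℕ), d ∣ m ∧ K ≤ m ∧ m ≤ t - p ∧
      (∀ k ≤ p, c' k = c k) ∧ c' (t - m) = c t ∧ wt B c 0 t ≤ wt B c' 0 (t - m) := by
  intro K
  induction K with
  | zero =>
    intro c t p hpt
    exact ⟨c, 0, dvd_zero d, le_rfl, by omega, fun k _ => rfl, by simp, le_rfl⟩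
  | succ K ih =>
    intro c t p hpt
    have hexp : (K+1) * (n*d) = K*(n*d) + n*d := by ring
    obtain ⟨a, b, hpa, hab, hbw, hcab, hdvd⟩ := pigeon hn c p d hd
    have hbt : b ≤ t := by nlinarith [hpt]
    set δ := b - a with hδ
    have hδ1 : 1 ≤ δ := by omega
    have hδnd : δ ≤ n * d := by omega
    set c₁ := cutW c a δ with hc₁
    have hw1 : wt B c 0 t ≤ wt B c₁ 0 (t - δ) :=
      le_of_eq_add_nonpos (cut_wt B hab hbt hcab) (closed_le hB (le_of_lt hab) hcab)
    obtain ⟨c', m', hdvd', hK', hle', hlow', hend', hw'⟩ := ih c₁ (t - δ) p (by omega)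
    refine ⟨c', δ + m', ?_, by omega, by omega, ?_, ?_, ?_⟩
    · exact Nat.dvd_add hdvd hdvd'
    · intro k hk
      rw [hlow' k hk, hc₁, cut_low c (by omega)]
    · rw [show t - (δ + m') = t - δ - m' from by omega, hend', hc₁,
        cut_end hab hbt hcab]
    · calc wt B c 0 t ≤ wt B c₁ 0 (t - δ) := hw1
        _ ≤ wt B c' 0 (t - δ - m') := hw'
        _ = wt B c' 0 (t - (δ + m')) := by rw [show t - δ - m' = t - (δ + m') from by omega]

lemma shrink_head (hn : 0 < n) {B : Fin n → Fin n → WithBot ℝ} {x : Fin n → ℝ}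
    (hB : ∀ i j, B i j + ((x j : ℝ) : WithBot ℝ) ≤ ((x i : ℝ) : WithBot ℝ))
    {d : ℕ} (hd : 1 ≤ d) :
    ∀ (K : ℕ) (c : ℕ → Fin n) (t p : ℕ), K * (n * d) ≤ p → p ≤ t →
    ∃ (c' : ℕ → Fin n) (m : ℕ), d ∣ m ∧ K ≤ m ∧ m ≤ p ∧
      c' 0 = c 0 ∧ c' (p - m) = c p ∧ c' (t - m) = c t ∧ wt B c 0 t ≤ wt B c' 0 (t - m) := by
  intro K
  induction K with
  | zero =>
    intro c t p hp hpt
    exact ⟨c, 0, dvd_zero d, le_rfl, by omega, rfl, by simp, by simp, le_rfl⟩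
  | succ K ih =>
    intro c t p hp hpt
    have hexp : (K+1) * (n*d) = K*(n*d) + n*d := by ring
    obtain ⟨a, b, h0a, hab, hbw, hcab, hdvd⟩ := pigeon hn c 0 d hd
    rw [Nat.zero_add] at hbw
    have hbp : b ≤ p := by nlinarith [hp]
    have hbt : b ≤ t := le_trans hbp hpt
    set δ := b - a with hδ
    have hδ1 : 1 ≤ δ := by omega
    have hδnd : δ ≤ n * d := by omega
    set c₁ := cutW c a δ with hc₁
    have hw1 : wt B c 0 t ≤ wt B c₁ 0 (t - δ) :=
      le_of_eq_add_nonpos (cut_wt B hab hbt hcab) (closed_le hB (le_of_lt hab) hcab)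
    have hc₁p : c₁ (p - δ) = c p := by
      rw [hc₁, cut_high hab hcab _ (by omega), show p - δ + δ = p from by omega]
    obtain ⟨c', m', hdvd', hK', hle', h0', hmid', hend', hw'⟩ :=
      ih c₁ (t - δ) (p - δ) (by omega) (by omega)
    refine ⟨c', δ + m', Nat.dvd_add hdvd hdvd', by omega, by omega, ?_, ?_, ?_, ?_⟩
    · rw [h0', hc₁, cut_zero]
    · rw [show p - (δ + m') = p - δ - m' from by omega, hmid', hc₁p]
    · rw [show t - (δ + m') = t - δ - m' from by omega, hend', hc₁,
        cut_end hab hbt hcab]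
    · calc wt B c 0 t ≤ wt B c₁ 0 (t - δ) := hw1
        _ ≤ wt B c' 0 (t - δ - m') := hw'
        _ = _ := by rw [show t - δ - m' = t - (δ + m') from by omega]

end Stmt5Aux5

namespace Stmt5Aux6
open Stmt5Aux Stmt5Aux2 Stmt5Aux3 Stmt5Aux4 Stmt5Aux5 Finset

variable {n : ℕ}

lemma exists_bounds (hn : 0 < n) (B : Fin n → Fin n → WithBot ℝ) :
    ∃ M M₂ : ℝ, 0 ≤ M ∧ 0 ≤ M₂ ∧ (∀ i j, B i j ≤ ((M : ℝ) : WithBot ℝ)) ∧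
      (∀ i j, B i j ≠ ⊥ → ((-M₂ : ℝ) : WithBot ℝ) ≤ B i j) := by
  have hne : (Finset.univ : Finset (Fin n × Fin n)).Nonempty :=
    ⟨(⟨0, hn⟩, ⟨0, hn⟩), Finset.mem_univ _⟩
  set val : Fin n × Fin n → ℝ := fun p => (B p.1 p.2).unbotD 0 with hval
  refine ⟨max 0 (Finset.univ.sup' hne val), max 0 (-(Finset.univ.inf' hne val)),
    le_max_left _ _, le_max_left _ _, ?_, ?_⟩
  · intro i j
    cases h : B i j with
    | bot => exact bot_le
    | coe r =>
      rw [WithBot.coe_le_coe]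
      have h1 : val (i, j) ≤ Finset.univ.sup' hne val :=
        Finset.le_sup' val (Finset.mem_univ (i, j))
      have h2 : val (i, j) = r := by rw [hval]; simp [h]
      calc r = val (i, j) := h2.symm
        _ ≤ _ := h1
        _ ≤ _ := le_max_right _ _
  · intro i j hb
    cases h : B i j with
    | bot => exact absurd h hb
    | coe r =>
      rw [WithBot.coe_le_coe]
      have h1 : Finset.univ.inf' hne val ≤ val (i, j) :=
        Finset.inf'_le val (Finset.mem_univ (i, j))
      have h2 : val (i, j) = r := by rw [hval]; simp [h]
      have : -(max 0 (-(Finset.univ.inf' hne val))) ≤ Finset.univ.inf' hne val := by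
        have := le_max_right 0 (-(Finset.univ.inf' hne val))
        linarith
      linarith [h1, h2, this]

lemma wt_upper {B : Fin n → Fin n → WithBot ℝ} {M : ℝ}
    (hM : ∀ i j, B i j ≤ ((M : ℝ) : WithBot ℝ)) (hM0 : 0 ≤ M) (c : ℕ → Fin n) (a : ℕ) :
    ∀ b, a ≤ b → wt B c a b ≤ ((((b - a : ℕ) : ℝ) * M : ℝ) : WithBot ℝ) := by
  intro b
  induction b with
  | zero =>
    intro hb
    have : a = 0 := by omega
    subst this
    simp [wt_same]
  | succ b ih =>
    intro hb
    by_cases hab : a ≤ b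
    · rw [wt_succ B c hab]
      calc wt B c a b + B (c b) (c (b+1))
          ≤ ((((b - a : ℕ):ℝ) * M : ℝ) : WithBot ℝ) + ((M:ℝ) : WithBot ℝ) :=
            add_le_add (ih hab) (hM _ _)
        _ = ((((b - a : ℕ):ℝ) * M + M : ℝ) : WithBot ℝ) := by rw [← WithBot.coe_add]
        _ ≤ _ := by
            rw [WithBot.coe_le_coe]
            have h3 : ((b + 1 - a : ℕ) : ℝ) = ((b - a : ℕ) : ℝ) + 1 := by
              have : b + 1 - a = (b - a) + 1 := by omega
              rw [this]; push_cast; ring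
            rw [h3]; nlinarith
    · have : a = b + 1 := by omega
      subst this
      simp [wt_same]

lemma wt_lower {B : Fin n → Fin n → WithBot ℝ} {M₂ : ℝ}
    (hM₂ : ∀ i j, B i j ≠ ⊥ → ((-M₂ : ℝ) : WithBot ℝ) ≤ B i j) (hM0 : 0 ≤ M₂)
    (c : ℕ → Fin n) (a : ℕ) :
    ∀ b, a ≤ b → (∀ k, a ≤ k → k < b → B (c k) (c (k+1)) ≠ ⊥) →
      ((-(((b - a : ℕ) : ℝ) * M₂) : ℝ) : WithBot ℝ) ≤ wt B c a b := by
  intro b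
  induction b with
  | zero =>
    intro hb _
    have : a = 0 := by omega
    subst this
    simp [wt_same]
  | succ b ih =>
    intro hb hval
    by_cases hab : a ≤ b
    · rw [wt_succ B c hab]
      have h1 := ih hab (fun k hk1 hk2 => hval k hk1 (by omega))
      have h2 := hM₂ (c b) (c (b+1)) (hval b hab (by omega))
      calc ((-(((b+1-a:ℕ):ℝ) * M₂) : ℝ) : WithBot ℝ)
          ≤ ((-(((b-a:ℕ):ℝ) * M₂) + -M₂ : ℝ) : WithBot ℝ) := by
            rw [WithBot.coe_le_coe]
            have h3 : ((b + 1 - a : ℕ) : ℝ) = ((b - a : ℕ) : ℝ) + 1 := by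
              have : b + 1 - a = (b - a) + 1 := by omega
              rw [this]; push_cast; ring
            rw [h3]; nlinarith
        _ = ((-(((b-a:ℕ):ℝ) * M₂) : ℝ) : WithBot ℝ) + ((-M₂ : ℝ) : WithBot ℝ) := by
            rw [← WithBot.coe_add]
        _ ≤ _ := add_le_add h1 h2
    · have : a = b + 1 := by omega
      subst this
      simp [wt_same]

end Stmt5Aux6

namespace Stmt5Aux7
open Stmt5Aux Stmt5Aux2 Stmt5Aux3 Stmt5Aux4 Stmt5Aux5 Stmt5Aux6 Finset
open scoped Classical

variable {n : ℕ}

noncomputable def extF (f : Fin (n+1) → Fin n) : ℕ → Fin n :=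
  fun k => if h : k ≤ n then f ⟨k, by omega⟩ else f ⟨0, by omega⟩

lemma extF_le {f : Fin (n+1) → Fin n} {k : ℕ} (hk : k ≤ n) : extF f k = f ⟨k, by omega⟩ := by
  rw [extF, dif_pos hk]

lemma exists_eps (hn : 0 < n) (A : Fin n → Fin n → WithBot ℝ) (lam : ℝ) {x : Fin n → ℝ}
    (hB : ∀ i j, Bm A lam i j + ((x j : ℝ) : WithBot ℝ) ≤ ((x i : ℝ) : WithBot ℝ)) :
    ∃ ε : ℝ, 0 < ε ∧ ∀ (c : ℕ → Fin n) (a b : ℕ), a < b → b - a ≤ n → c a = c b →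
      (∀ k, a ≤ k → k ≤ b → ¬(critLengths A lam (c k)).Nonempty) →
      wt (Bm A lam) c a b ≤ ((-ε : ℝ) : WithBot ℝ) := by
  set B := Bm A lam with hBdef
  set F : ((Fin (n+1) → Fin n) × Fin (n+1)) → WithBot ℝ := fun fp =>
    if (1 ≤ (fp.2 : ℕ) ∧ extF fp.1 (fp.2 : ℕ) = extF fp.1 0 ∧
        ∀ k ≤ (fp.2 : ℕ), ¬(critLengths A lam (extF fp.1 k)).Nonempty)
    then wt B (extF fp.1) 0 (fp.2 : ℕ) else ⊥ with hF
  set s := Finset.univ.sup F with hs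
  have hclaim : ∃ ε : ℝ, 0 < ε ∧ s ≤ ((-ε : ℝ) : WithBot ℝ) := by
    cases hsv : s with
    | bot => exact ⟨1, one_pos, bot_le⟩
    | coe r =>
      have hne : (Finset.univ : Finset ((Fin (n+1) → Fin n) × Fin (n+1))).Nonempty :=
        ⟨(fun _ => ⟨0, hn⟩, 0), Finset.mem_univ _⟩
      obtain ⟨m, -, hm⟩ := Finset.exists_mem_eq_sup _ hne F
      rw [← hs, hsv] at hm
      have hcond : (1 ≤ (m.2 : ℕ) ∧ extF m.1 (m.2 : ℕ) = extF m.1 0 ∧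
          ∀ k ≤ (m.2 : ℕ), ¬(critLengths A lam (extF m.1 k)).Nonempty) := by
        by_contra hc
        rw [hF] at hm
        simp only [if_neg hc] at hm
        exact WithBot.coe_ne_bot (a := r) hm
      have hwt : wt B (extF m.1) 0 (m.2 : ℕ) = ((r : ℝ) : WithBot ℝ) := by
        rw [hF] at hm
        simp only [if_pos hcond] at hm
        exact hm.symm
      have hle0 : wt B (extF m.1) 0 (m.2 : ℕ) ≤ 0 :=
        closed_le hB (Nat.zero_le _) hcond.2.1.symm
      have hr0 : r ≤ 0 := by
        rw [hwt] at hle0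
        exact_mod_cast hle0
      have hrne : r ≠ 0 := by
        intro h0
        subst h0
        have hcrit := crit_of_walk (by rw [← hBdef]; exact hwt) hcond.1 hcond.2.1
        exact hcond.2.2 0 (Nat.zero_le _) ⟨_, hcrit⟩
      refine ⟨-r, by cases lt_or_eq_of_le hr0 with
        | inl h => linarith
        | inr h => exact absurd h hrne, ?_⟩
      exact le_of_eq (by rw [neg_neg])
  obtain ⟨ε, hε0, hsle⟩ := hclaim
  refine ⟨ε, hε0, ?_⟩
  intro c a b hab hbn hcab hnc
  set f : Fin (n+1) → Fin n := fun k => c (a + (k : ℕ)) with hf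
  have hext : ∀ k ≤ n, extF f k = c (a + k) := by
    intro k hk
    rw [extF_le hk]
  have hwt : wt B c a b = wt B (extF f) 0 (b - a) := by
    rw [wt_rebase' B c (le_of_lt hab)]
    apply wt_congr
    intro k _ hk
    rw [hext k (by omega)]
  have hcond : (1 ≤ ((⟨b - a, by omega⟩ : Fin (n+1)) : ℕ) ∧
      extF f ((⟨b - a, by omega⟩ : Fin (n+1)) : ℕ) = extF f 0 ∧
      ∀ k ≤ ((⟨b - a, by omega⟩ : Fin (n+1)) : ℕ),
        ¬(critLengths A lam (extF f k)).Nonempty) := by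
    refine ⟨by simp; omega, ?_, ?_⟩
    · show extF f (b - a) = extF f 0
      rw [hext _ (by omega), hext _ (by omega), show a + (b - a) = b from by omega]
      simp [hcab.symm]
    · intro k hk
      simp only at hk
      rw [hext k (by omega)]
      exact hnc (a + k) (by omega) (by omega)
  have hFP : F (f, ⟨b - a, by omega⟩) = wt B (extF f) 0 (b - a) := by
    rw [hF]
    simp only [if_pos hcond]
  calc wt B c a b = F (f, ⟨b - a, by omega⟩) := by rw [hwt, hFP]
    _ ≤ s := Finset.le_sup (Finset.mem_univ _)
    _ ≤ _ := hsle

lemma decay (hn : 0 < n) (A : Fin n → Fin n → WithBot ℝ) (lam : ℝ) {x : Fin n → ℝ}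
    (hB : ∀ i j, Bm A lam i j + ((x j : ℝ) : WithBot ℝ) ≤ ((x i : ℝ) : WithBot ℝ))
    {M : ℝ} (hM : ∀ i j, Bm A lam i j ≤ ((M : ℝ) : WithBot ℝ)) (hM0 : 0 ≤ M)
    {ε : ℝ} (hε0 : 0 < ε)
    (heps : ∀ (c : ℕ → Fin n) (a b : ℕ), a < b → b - a ≤ n → c a = c b →
      (∀ k, a ≤ k → k ≤ b → ¬(critLengths A lam (c k)).Nonempty) →
      wt (Bm A lam) c a b ≤ ((-ε : ℝ) : WithBot ℝ)) :
    ∀ ℓ (c : ℕ → Fin n), (∀ k ≤ ℓ, ¬(critLengths A lam (c k)).Nonempty) →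
      wt (Bm A lam) c 0 ℓ
        ≤ (((n : ℝ) * M - ε * ((ℓ / (n+1) : ℕ) : ℝ) : ℝ) : WithBot ℝ) := by
  intro ℓ
  induction ℓ using Nat.strong_induction_on with
  | _ ℓ ih =>
    intro c hnc
    by_cases hln : ℓ ≤ n
    · have h1 : ℓ / (n+1) = 0 := Nat.div_eq_of_lt (by omega)
      rw [h1]
      have h2 := wt_upper hM hM0 c 0 ℓ (Nat.zero_le ℓ)
      refine le_trans h2 ?_
      rw [WithBot.coe_le_coe]
      have h5 : ((ℓ - 0 : ℕ) : ℝ) ≤ (n : ℝ) := by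
        simp only [Nat.sub_zero]
        exact_mod_cast hln
      push_cast at h5 ⊢
      nlinarith
    · obtain ⟨a, b, h0a, hab, hbw, hcab, -⟩ := pigeon hn c 0 1 le_rfl
      rw [Nat.zero_add, Nat.mul_one] at hbw
      have hbl : b ≤ ℓ := by omega
      set δ := b - a with hδ
      have hδ1 : 1 ≤ δ := by omega
      have hδn : δ ≤ n := by omega
      have hcut := cut_wt (Bm A lam) hab hbl hcab
      have hmid : wt (Bm A lam) c a b ≤ ((-ε : ℝ) : WithBot ℝ) :=
        heps c a b hab (by omega) hcab (fun k hk1 hk2 => hnc k (by omega))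
      have hnc' : ∀ k ≤ ℓ - δ, ¬(critLengths A lam (cutW c a δ k)).Nonempty := by
        intro k hk
        unfold cutW
        by_cases h : k ≤ a
        · rw [if_pos h]; exact hnc k (by omega)
        · rw [if_neg h]; exact hnc (k + δ) (by omega)
      have hih := ih (ℓ - δ) (by omega) (cutW c a δ) hnc'
      have hq : ((ℓ / (n+1) : ℕ) : ℝ) ≤ (((ℓ - δ) / (n+1) : ℕ) : ℝ) + 1 := by
        have h1 : ℓ / (n+1) ≤ ((ℓ - δ) + (n+1)) / (n+1) :=
          Nat.div_le_div_right (by omega)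
        rw [Nat.add_div_right _ (Nat.succ_pos n)] at h1
        exact_mod_cast h1
      calc wt (Bm A lam) c 0 ℓ
          = wt (Bm A lam) (cutW c a δ) 0 (ℓ - δ) + wt (Bm A lam) c a b := hcut
        _ ≤ (((n : ℝ) * M - ε * (((ℓ - δ) / (n+1) : ℕ) : ℝ) : ℝ) : WithBot ℝ)
            + ((-ε : ℝ) : WithBot ℝ) := add_le_add hih hmid
        _ = (((n : ℝ) * M - ε * (((ℓ - δ) / (n+1) : ℕ) : ℝ) + -ε : ℝ) : WithBot ℝ) := by
            rw [← WithBot.coe_add]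
        _ ≤ _ := by
            rw [WithBot.coe_le_coe]
            nlinarith [hq, hε0.le]

end Stmt5Aux7

namespace Stmt5Aux8
open Stmt5Aux Stmt5Aux2 Stmt5Aux3 Stmt5Aux4 Stmt5Aux5 Stmt5Aux6 Stmt5Aux7 Finset

variable {n : ℕ}

lemma wt_ne_bot_of_valid (B : Fin n → Fin n → WithBot ℝ) (c : ℕ → Fin n) (ℓ : ℕ)
    (h : ∀ k < ℓ, B (c k) (c (k + 1)) ≠ ⊥) : wt B c 0 ℓ ≠ ⊥ := by
  induction ℓ with
  | zero => rw [wt_same]; exact WithBot.coe_ne_bot (a := (0:ℝ))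
  | succ ℓ ih =>
    rw [wt_succ B c (Nat.zero_le ℓ)]
    rw [ne_eq, WithBot.add_eq_bot]
    push_neg
    exact ⟨ih (fun k hk => h k (by omega)), h ℓ (by omega)⟩

lemma sum_coe (g : ℕ → ℝ) (m : ℕ) :
    (∑ k ∈ Finset.range m, ((g k : ℝ) : WithBot ℝ)) = ((∑ k ∈ Finset.range m, g k : ℝ) : WithBot ℝ) := by
  induction m with
  | zero => simp
  | succ m ih => rw [Finset.sum_range_succ, Finset.sum_range_succ, ih, WithBot.coe_add]

/-- Insert a closed walk `e` (of length `pad`, based at `c p`) into `c` at position `p`. -/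
lemma insert_pad (B : Fin n → Fin n → WithBot ℝ) (c e : ℕ → Fin n) (t p pad : ℕ)
    (hpt : p ≤ t) (he0 : e 0 = c p) (heP : e pad = c p) :
    ∃ c'' : ℕ → Fin n, c'' 0 = c 0 ∧ c'' (t + pad) = c t ∧
      wt B c'' 0 (t + pad) = wt B c 0 t + wt B e 0 pad := by
  set tail : ℕ → Fin n := fun k => c (p + k) with htail
  set g1 := glue c e p with hg1
  have hg1e : c p = e 0 := he0.symm
  set c'' := glue g1 tail (p + pad) with hc''
  have hg1end : g1 (p + pad) = tail 0 := by
    rw [hg1, glue_end, heP, htail]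
    simp
  refine ⟨c'', ?_, ?_, ?_⟩
  · rw [hc'', glue_zero hg1end, hg1, glue_zero hg1e]
  · rw [hc'', show t + pad = (p + pad) + (t - p) from by omega, glue_end, htail]
    show c (p + (t - p)) = c t
    rw [show p + (t - p) = t from by omega]
  · rw [hc'', show t + pad = (p + pad) + (t - p) from by omega, glue_wt B (t - p) hg1end,
      hg1, glue_wt B pad hg1e]
    have htw : wt B tail 0 (t - p) = wt B c p t := by
      rw [htail, wt_rebase B c p (t - p), show p + (t - p) = t from by omega]
    rw [htw]
    have := wt_split B c (Nat.zero_le p) hpt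
    rw [← this]
    abel

/-- There exists a critical vertex. -/
lemma crit_exists (hn : 0 < n) (A : Fin n → Fin n → WithBot ℝ) (lam : ℝ) {x : Fin n → ℝ}
    (hsat : ∀ u : Fin n, ∃ w, Bm A lam u w + ((x w : ℝ) : WithBot ℝ) = ((x u : ℝ) : WithBot ℝ)
      ∧ Bm A lam u w ≠ ⊥) :
    ∃ v : Fin n, (critLengths A lam v).Nonempty := by
  classical
  choose sfun hs1 _ using hsat
  set i₀ : Fin n := ⟨0, hn⟩ with hi₀
  have hcard : Fintype.card (Fin n) < Fintype.card (Fin (n + 1)) := by simp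
  obtain ⟨k₁, k₂, hne, heq⟩ := Fintype.exists_ne_map_eq_of_card_lt
    (fun k : Fin (n + 1) => sfun^[(k : ℕ)] i₀) hcard
  wlog hlt : (k₁ : ℕ) < (k₂ : ℕ) generalizing k₁ k₂
  · exact this k₂ k₁ hne.symm heq.symm (by omega)
  set ℓ := (k₂ : ℕ) - (k₁ : ℕ) with hℓ
  set c : ℕ → Fin n := fun k => sfun^[k + (k₁ : ℕ)] i₀ with hc
  have hcl : c ℓ = c 0 := by
    rw [hc]
    simp only [hℓ, Nat.zero_add]
    rw [show (k₂ : ℕ) - (k₁ : ℕ) + (k₁ : ℕ) = (k₂ : ℕ) from by omega]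
    exact heq.symm
  have hstep : ∀ k, c (k + 1) = sfun (c k) := by
    intro k
    rw [hc]
    show sfun^[k + 1 + (k₁ : ℕ)] i₀ = _
    rw [show k + 1 + (k₁ : ℕ) = (k + (k₁ : ℕ)) + 1 from by omega,
      Function.iterate_succ_apply' sfun _ i₀]
  have hedge : ∀ k, Bm A lam (c k) (c (k + 1)) = (((x (c k) - x (c (k + 1))) : ℝ) : WithBot ℝ) := by
    intro k
    rw [hstep k]
    exact wb_eq_coe_sub (hs1 (c k))
  have hwt : wt (Bm A lam) c 0 ℓ = 0 := by
    unfold wt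
    rw [show Finset.Ico 0 ℓ = Finset.range ℓ from by rw [Finset.range_eq_Ico]]
    calc (∑ k ∈ Finset.range ℓ, Bm A lam (c k) (c (k + 1)))
        = ∑ k ∈ Finset.range ℓ, (((x (c k) - x (c (k + 1))) : ℝ) : WithBot ℝ) := by
          exact Finset.sum_congr rfl (fun k _ => hedge k)
      _ = (((∑ k ∈ Finset.range ℓ, (x (c k) - x (c (k + 1)))) : ℝ) : WithBot ℝ) :=
          sum_coe _ _
      _ = (((x (c 0) - x (c ℓ)) : ℝ) : WithBot ℝ) := by
          rw [Finset.sum_range_sub' (fun k => x (c k)) ℓ]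
      _ = 0 := by rw [hcl]; simp
  have hl1 : 1 ≤ ℓ := by omega
  exact ⟨c 0, ℓ, crit_of_walk hwt hl1 hcl⟩

end Stmt5Aux8

namespace Stmt5Aux9
open Stmt5Aux Stmt5Aux2 Stmt5Aux3 Stmt5Aux4 Stmt5Aux5 Stmt5Aux6 Stmt5Aux7 Stmt5Aux8 Finset

variable {n : ℕ}

lemma engine (hn : 0 < n) {A : Fin n → Fin n → WithBot ℝ} {lam : ℝ} {x : Fin n → ℝ}
    (hB : ∀ i j, Bm A lam i j + ((x j : ℝ) : WithBot ℝ) ≤ ((x i : ℝ) : WithBot ℝ))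
    {σ : ℕ} (hσ : 1 ≤ σ)
    {dOf LOf : Fin n → ℕ}
    (hd1 : ∀ v, 1 ≤ dOf v)
    (hdσ : ∀ v, (critLengths A lam v).Nonempty → dOf v ∣ σ)
    (hNS : ∀ v, (critLengths A lam v).Nonempty →
      ∀ m, LOf v ≤ m → dOf v ∣ m → m ∈ critLengths A lam v)
    {Lmax : ℕ} (hLmax : ∀ v, LOf v ≤ Lmax)
    (c : ℕ → Fin n) (t s p : ℕ) (hpt : p ≤ t)
    (hcrit : (critLengths A lam (c p)).Nonempty)
    (hT : 2 * ((Lmax + σ) * (n * σ)) + 2 ≤ t)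
    (hdvd : (σ:ℤ) ∣ (s:ℤ) - (t:ℤ)) (hts : t ≤ s + σ) :
    ∃ c' : ℕ → Fin n, c' 0 = c 0 ∧ c' s = c t ∧
      wt (Bm A lam) c 0 t ≤ wt (Bm A lam) c' 0 s := by
  set B := Bm A lam with hBdef
  set v := c p with hv
  set d := dOf v with hdd
  set L := LOf v with hLL
  set K := Lmax + σ with hK
  have hd1' : 1 ≤ d := hd1 v
  have hdσ' : d ∣ σ := hdσ v hcrit
  have hdle : d ≤ σ := Nat.le_of_dvd (by omega) hdσ'
  have hKnd : K * (n * d) ≤ (Lmax + σ) * (n * σ) :=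
    Nat.mul_le_mul_left K (Nat.mul_le_mul_left n hdle)
  obtain ⟨KND, hKND⟩ : ∃ y, K * (n * d) = y := ⟨_, rfl⟩
  obtain ⟨BND, hBND⟩ : ∃ y, (Lmax + σ) * (n * σ) = y := ⟨_, rfl⟩
  rw [hKND, hBND] at hKnd
  rw [hBND] at hT
  have hshrunk : ∃ (c' : ℕ → Fin n) (m pp : ℕ), d ∣ m ∧ K ≤ m ∧ m ≤ t ∧ pp ≤ t - m ∧
      c' 0 = c 0 ∧ c' pp = v ∧ c' (t - m) = c t ∧ wt B c 0 t ≤ wt B c' 0 (t - m) := by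
    by_cases hcase : KND ≤ t - p
    · obtain ⟨c', m, hdm, hKm, hmle, hlow, hend, hwle⟩ :=
        shrink_tail hn hB hd1' K c t p (by rw [hKND]; omega)
      refine ⟨c', m, p, hdm, hKm, by omega, by omega, hlow 0 (Nat.zero_le p), ?_, hend, hwle⟩
      rw [hlow p le_rfl]
    · have hple : KND ≤ p := by omega
      obtain ⟨c', m, hdm, hKm, hmp, h0', hmid', hend', hwle⟩ :=
        shrink_head hn hB hd1' K c t p (by rw [hKND]; omega) hpt
      exact ⟨c', m, p - m, hdm, hKm, by omega, by omega, h0', hmid', hend', hwle⟩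
  obtain ⟨c', m, pp, hdm, hKm, hmt, hppt, h0', hppv, hend', hwle⟩ := hshrunk
  set t' := t - m with ht'
  set pad := s + m - t with hpad
  have hpadL : L ≤ pad := by
    have h1 : Lmax ≤ K - σ := by omega
    have h2 : L ≤ Lmax := hLmax v
    omega
  have hpadd : (d:ℤ) ∣ (pad:ℤ) := by
    have h1 : (pad:ℤ) = (m:ℤ) + ((s:ℤ) - (t:ℤ)) := by
      rw [hpad]
      push_cast [show t ≤ s + m from by omega]
      ring
    rw [h1]
    exact dvd_add (Int.natCast_dvd_natCast.mpr hdm) (dvd_trans (Int.natCast_dvd_natCast.mpr hdσ') hdvd)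
  have hpadd' : d ∣ pad := Int.natCast_dvd_natCast.mp hpadd
  have hpadcrit : pad ∈ critLengths A lam v := hNS v hcrit pad hpadL hpadd'
  obtain ⟨e, he0, heP, hwt0, -⟩ := crit_pad hpadcrit
  obtain ⟨c'', h0'', hend'', hwt''⟩ := insert_pad B c' e t' pp pad hppt
    (by rw [he0, hppv]) (by rw [heP, hppv])
  have hst : t' + pad = s := by omega
  refine ⟨c'', by rw [h0'', h0'], ?_, ?_⟩
  · rw [← hst, hend'', hend']
  · calc wt B c 0 t ≤ wt B c' 0 t' := hwle
      _ = wt B c' 0 t' + 0 := by rw [add_zero]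
      _ = wt B c' 0 t' + wt B e 0 pad := by rw [hwt0]
      _ = wt B c'' 0 (t' + pad) := hwt''.symm
      _ = wt B c'' 0 s := by rw [hst]

end Stmt5Aux9

namespace Stmt5Aux10
open Stmt5Aux Stmt5Aux2 Stmt5Aux3 Stmt5Aux4 Stmt5Aux5 Stmt5Aux6 Stmt5Aux7 Stmt5Aux8 Finset

variable {n : ℕ}

lemma lower_bound (hn : 0 < n) {A : Fin n → Fin n → WithBot ℝ} {lam : ℝ}
    (hirr : StronglyConnected A)
    {vS : Fin n} {dS LS : ℕ} (hdS1 : 1 ≤ dS)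
    (hgcdS : IsGCDOf (critLengths A lam vS) dS)
    (hNSS : ∀ m, LS ≤ m → dS ∣ m → m ∈ critLengths A lam vS)
    (hvS : (critLengths A lam vS).Nonempty) :
    ∃ (g : ℕ) (C₀ : ℝ) (T_lb : ℕ), 1 ≤ g ∧ g ∣ dS ∧ 0 ≤ C₀ ∧
      ∀ (i j : Fin n) (s t₀ : ℕ) (c₀ : ℕ → Fin n), T_lb ≤ s →
        c₀ 0 = i → c₀ t₀ = j → wt (Bm A lam) c₀ 0 t₀ ≠ ⊥ → (g:ℤ) ∣ (s:ℤ) - (t₀:ℤ) →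
        ∃ c : ℕ → Fin n, c 0 = i ∧ c s = j ∧
          ((-C₀ : ℝ) : WithBot ℝ) ≤ wt (Bm A lam) c 0 s := by
  classical
  set B := Bm A lam with hBdef
  obtain ⟨M, M₂, hM0, hM₂0, hMub, hM₂lb⟩ := exists_bounds hn B
  -- connectors
  have hconn : ∀ u w : Fin n, ∃ (ℓ : ℕ) (cw : ℕ → Fin n),
      cw 0 = u ∧ cw ℓ = w ∧ wt B cw 0 ℓ ≠ ⊥ := by
    intro u w
    obtain ⟨ℓ, cw, h0, hl, he⟩ := hirr u w
    exact ⟨ℓ, cw, h0, hl, wt_ne_bot_of_valid B cw ℓ (fun k hk => Bm_ne_bot.mpr (he k hk))⟩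
  choose ℓc wc hwc0 hwcl hwcne using hconn
  set Pmax := Finset.univ.sup (fun pr : Fin n × Fin n => ℓc pr.1 pr.2) with hPmax
  have hPle : ∀ u w, ℓc u w ≤ Pmax :=
    fun u w => Finset.le_sup (f := fun pr : Fin n × Fin n => ℓc pr.1 pr.2) (Finset.mem_univ (u, w))
  -- closed-walk lengths at vS
  set CW : Set ℕ := {ℓ | 1 ≤ ℓ ∧ ∃ cw : ℕ → Fin n, cw 0 = vS ∧ cw ℓ = vS ∧ wt B cw 0 ℓ ≠ ⊥}
    with hCW
  have hCWadd : ∀ a ∈ CW, ∀ b ∈ CW, a + b ∈ CW := by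
    rintro a ⟨ha1, ca, hca0, hcal, hcane⟩ b ⟨hb1, cb, hcb0, hcbl, hcbne⟩
    refine ⟨by omega, glue ca cb a, ?_, ?_, ?_⟩
    · rw [glue_zero (by rw [hcal, hcb0]), hca0]
    · rw [glue_end, hcbl]
    · rw [glue_wt B b (by rw [hcal, hcb0])]
      rw [ne_eq, WithBot.add_eq_bot]
      push_neg
      exact ⟨hcane, hcbne⟩
  have hcritCW : ∀ ℓ ∈ critLengths A lam vS, ℓ ∈ CW := by
    intro ℓ hℓ
    obtain ⟨cc, hc0, hcl, hw0, h1⟩ := crit_pad hℓ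
    exact ⟨h1, cc, hc0, hcl, by rw [hw0]; exact WithBot.coe_ne_bot (a := (0:ℝ))⟩
  obtain ⟨ℓ₀, hℓ₀⟩ := hvS
  have hℓ₀CW : ℓ₀ ∈ CW := hcritCW ℓ₀ hℓ₀
  obtain ⟨g, hg1, hggcd, P, hPc, N, hNc, hPN⟩ := gcd_full CW ⟨ℓ₀, hℓ₀CW, hℓ₀CW.1⟩
  have hgdS : g ∣ dS := hgcdS.2 g (fun t ht => hggcd.1 t (hcritCW t ht))
  -- residue fixer
  set Z := dS * (P + dS * N) with hZ
  have hzfix : ∀ X : ℕ, g ∣ X → ∃ z : ℕ, z ≤ Z ∧ (z = 0 ∨ z ∈ CW) ∧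
      (dS:ℤ) ∣ (z:ℤ) - (X:ℤ) := by
    intro X hgX
    set k := X / g with hk
    set k' := k % dS with hk'
    set z := k' * P + (k' * (dS - 1)) * N with hz
    have hk'lt : k' < dS := Nat.mod_lt k (by omega)
    refine ⟨z, ?_, ?_, ?_⟩
    · rw [hz, hZ]
      have h1 : k' * P ≤ dS * P := Nat.mul_le_mul_right P (by omega)
      have h2 : (k' * (dS - 1)) * N ≤ (dS * dS) * N := by
        apply Nat.mul_le_mul_right N
        exact Nat.mul_le_mul (by omega) (by omega)
      have h3 : dS * (P + dS * N) = dS * P + (dS * dS) * N := by ring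
      omega
    · apply closure_cases _ hCWadd
      exact (AddSubmonoid.closure CW).add_mem
        (by simpa [smul_eq_mul] using (AddSubmonoid.closure CW).nsmul_mem hPc k')
        (by simpa [smul_eq_mul] using (AddSubmonoid.closure CW).nsmul_mem hNc (k' * (dS - 1)))
    · have hXk : (X:ℤ) = (g:ℤ) * (k:ℤ) := by
        rw [hk]
        exact_mod_cast (Nat.mul_div_cancel' hgX).symm
      have hzz : (z:ℤ) = (k':ℤ) * P + (k':ℤ) * ((dS:ℤ) - 1) * N := by
        rw [hz]
        push_cast [Nat.cast_sub (show 1 ≤ dS from hdS1)]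
        ring
      have h2 : (dS:ℤ) * ((k/dS:ℕ):ℤ) + ((k % dS:ℕ):ℤ) = (k:ℤ) := by
        exact_mod_cast congrArg (Nat.cast : ℕ → ℤ) (Nat.div_add_mod k dS)
      have key : (z:ℤ) - (X:ℤ) = (dS:ℤ) * ((k':ℤ) * N - ((k / dS : ℕ):ℤ) * g) := by
        rw [hzz, hXk]
        have h4 : (k:ℤ) = (dS:ℤ) * ((k / dS : ℕ):ℤ) + (k':ℤ) := by
          rw [hk']; linarith [h2]
        rw [h4]
        linear_combination (k':ℤ) * hPN
      rw [key]
      exact Dvd.intro _ rfl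
  -- final data
  refine ⟨g, ((2 * Pmax + Z : ℕ) : ℝ) * M₂, 2 * Pmax + Z + LS + 1, hg1, hgdS,
    by positivity, ?_⟩
  intro i j s t₀ c₀ hs hc₀0 hc₀t hc₀ne hgs
  set p := ℓc i vS with hp
  set q := ℓc vS j with hq
  set r := ℓc j vS with hr
  set u := ℓc vS i with hu
  have hgcw : ∀ (ℓ : ℕ) (cw : ℕ → Fin n), cw 0 = vS → cw ℓ = vS → wt B cw 0 ℓ ≠ ⊥ → g ∣ ℓ := by
    intro ℓ cw h0 hl hne
    rcases Nat.eq_zero_or_pos ℓ with h | h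
    · rw [h]; exact dvd_zero g
    · exact hggcd.1 ℓ ⟨h, cw, h0, hl, hne⟩
  have h_up : g ∣ u + p := by
    apply hgcw (u + p) (glue (wc vS i) (wc i vS) u)
    · rw [glue_zero (by rw [hwcl, hwc0]), hwc0]
    · rw [glue_end, hwcl]
    · rw [glue_wt B p (by rw [hwcl, hwc0]), ne_eq, WithBot.add_eq_bot]
      push_neg
      exact ⟨hwcne _ _, hwcne _ _⟩
  have h_qr : g ∣ q + r := by
    apply hgcw (q + r) (glue (wc vS j) (wc j vS) q)
    · rw [glue_zero (by rw [hwcl, hwc0]), hwc0]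
    · rw [glue_end, hwcl]
    · rw [glue_wt B r (by rw [hwcl, hwc0]), ne_eq, WithBot.add_eq_bot]
      push_neg
      exact ⟨hwcne _ _, hwcne _ _⟩
  have h_utr : g ∣ u + t₀ + r := by
    apply hgcw (u + t₀ + r) (glue (glue (wc vS i) c₀ u) (wc j vS) (u + t₀))
    · rw [glue_zero, glue_zero (by rw [hwcl, hc₀0]), hwc0]
      rw [glue_end, hc₀t, hwc0]
    · rw [glue_end, hwcl]
    · rw [glue_wt B r (by rw [glue_end, hc₀t, hwc0]),
        glue_wt B t₀ (by rw [hwcl, hc₀0])]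
      rw [ne_eq, WithBot.add_eq_bot, WithBot.add_eq_bot]
      push_neg
      exact ⟨⟨hwcne _ _, hc₀ne⟩, hwcne _ _⟩
  have hpP : p ≤ Pmax := hPle i vS
  have hqP : q ≤ Pmax := hPle vS j
  have hpq : p + q + Z + LS + 1 ≤ s := by
    have := hs
    omega
  set X := s - (p + q) with hX
  have hXval : (X:ℤ) = (s:ℤ) - p - q := by
    rw [hX]
    push_cast [show p + q ≤ s from by omega]
    ring
  have hgX : g ∣ X := by
    have h1 : (g:ℤ) ∣ (X:ℤ) := by
      have e1 : (X:ℤ) = ((s:ℤ) - t₀) + ((u:ℤ) + t₀ + r) - ((u:ℤ) + p) - ((q:ℤ) + r) := by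
        rw [hXval]; ring
      rw [e1]
      have d1 : (g:ℤ) ∣ ((u:ℤ) + t₀ + r) := by exact_mod_cast Int.natCast_dvd_natCast.mpr h_utr
      have d2 : (g:ℤ) ∣ ((u:ℤ) + p) := by exact_mod_cast Int.natCast_dvd_natCast.mpr h_up
      have d3 : (g:ℤ) ∣ ((q:ℤ) + r) := by exact_mod_cast Int.natCast_dvd_natCast.mpr h_qr
      exact dvd_sub (dvd_sub (dvd_add hgs d1) d2) d3
    exact_mod_cast h1
  obtain ⟨z, hzZ, hzmem, hzdvd⟩ := hzfix X hgX
  set pad := X - z with hpad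
  have hXz : z + LS + 1 ≤ X := by omega
  have hpadL : LS ≤ pad := by omega
  have hpadd : dS ∣ pad := by
    have h1 : (dS:ℤ) ∣ (pad:ℤ) := by
      have e1 : (pad:ℤ) = -((z:ℤ) - (X:ℤ)) := by
        rw [hpad]
        push_cast [show z ≤ X from by omega]
        ring
      rw [e1]
      exact dvd_neg.mpr hzdvd
    exact_mod_cast h1
  obtain ⟨ce, hce0, hcel, hcew, -⟩ := crit_pad (hNSS pad hpadL hpadd)
  -- the z-walk
  have hcz : ∃ cz : ℕ → Fin n, cz 0 = vS ∧ cz z = vS ∧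
      ((-((z:ℝ) * M₂) : ℝ) : WithBot ℝ) ≤ wt B cz 0 z := by
    rcases hzmem with h0 | hzCW
    · subst h0
      refine ⟨fun _ => vS, rfl, rfl, ?_⟩
      rw [wt_same]
      show ((-((0:ℕ) * M₂) : ℝ) : WithBot ℝ) ≤ ((0:ℝ) : WithBot ℝ)
      rw [WithBot.coe_le_coe]
      norm_num
    · obtain ⟨hz1, cz, hcz0, hczl, hczne⟩ := hzCW
      refine ⟨cz, hcz0, hczl, ?_⟩
      have := wt_lower hM₂lb hM₂0 cz 0 z (Nat.zero_le z)
        (fun k hk1 hk2 => wt_ne_bot_edges hczne k hk1 hk2)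
      simpa using this
  obtain ⟨cz, hcz0, hczl, hczw⟩ := hcz
  -- lower bounds for connectors
  have hwp : ((-((p:ℝ) * M₂) : ℝ) : WithBot ℝ) ≤ wt B (wc i vS) 0 p := by
    have := wt_lower hM₂lb hM₂0 (wc i vS) 0 p (Nat.zero_le p)
      (fun k hk1 hk2 => wt_ne_bot_edges (hwcne i vS) k hk1 hk2)
    simpa using this
  have hwq : ((-((q:ℝ) * M₂) : ℝ) : WithBot ℝ) ≤ wt B (wc vS j) 0 q := by
    have := wt_lower hM₂lb hM₂0 (wc vS j) 0 q (Nat.zero_le q)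
      (fun k hk1 hk2 => wt_ne_bot_edges (hwcne vS j) k hk1 hk2)
    simpa using this
  -- assemble
  set g₁ := glue (wc i vS) cz p with hg₁
  have hg₁e : (wc i vS) p = cz 0 := by rw [hwcl, hcz0]
  set g₂ := glue g₁ ce (p + z) with hg₂
  have hg₂e : g₁ (p + z) = ce 0 := by rw [hg₁, glue_end, hczl, hce0]
  set g₃ := glue g₂ (wc vS j) (p + z + pad) with hg₃
  have hg₃e : g₂ (p + z + pad) = (wc vS j) 0 := by
    rw [hg₂, show p + z + pad = (p + z) + pad from rfl, glue_end, hcel, hwc0]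
  have hlen : s = p + z + pad + q := by omega
  refine ⟨g₃, ?_, ?_, ?_⟩
  · rw [hg₃, glue_zero hg₃e, hg₂, glue_zero hg₂e, hg₁, glue_zero hg₁e, hwc0]
  · rw [hlen, hg₃, show p + z + pad + q = (p + z + pad) + q from rfl, glue_end, hwcl]
  · rw [hlen, hg₃, show p + z + pad + q = (p + z + pad) + q from rfl, glue_wt B q hg₃e,
      hg₂, show p + z + pad = (p + z) + pad from rfl, glue_wt B pad hg₂e,
      hg₁, glue_wt B z hg₁e, hcew, add_zero]
    have hsum : ((-((p:ℝ) * M₂) : ℝ) : WithBot ℝ) + ((-((z:ℝ) * M₂) : ℝ) : WithBot ℝ)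
        + ((-((q:ℝ) * M₂) : ℝ) : WithBot ℝ)
        ≤ wt B (wc i vS) 0 p + wt B cz 0 z + wt B (wc vS j) 0 q :=
      add_le_add (add_le_add hwp hczw) hwq
    refine le_trans ?_ hsum
    rw [← WithBot.coe_add, ← WithBot.coe_add, WithBot.coe_le_coe]
    have hzZ' : (z:ℝ) ≤ (Z:ℕ) := by exact_mod_cast hzZ
    have hpP' : (p:ℝ) ≤ (Pmax:ℕ) := by exact_mod_cast hpP
    have hqP' : (q:ℝ) ≤ (Pmax:ℕ) := by exact_mod_cast hqP
    have hcast : ((2 * Pmax + Z : ℕ) : ℝ) = 2 * (Pmax:ℝ) + (Z:ℝ) := by push_cast; ring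
    rw [hcast]
    nlinarith [hM₂0]

end Stmt5Aux10

namespace Stmt5Main
open Stmt5Aux Stmt5Aux2 Stmt5Aux3 Stmt5Aux4 Stmt5Aux5 Stmt5Aux6 Stmt5Aux7 Stmt5Aux8 Stmt5Aux9 Stmt5Aux10 Finset

lemma key {n : ℕ} (hn : 1 ≤ n) (A : Fin n → Fin n → WithBot ℝ)
    (hirr : StronglyConnected A) (lam : ℝ)
    (heig : IsEigenvalue A (lam : WithBot ℝ))
    (σ : ℕ) (hσ : 1 ≤ σ) (hcyc : IsCyclicity A lam σ) :
    ∃ T : ℕ, 1 ≤ T ∧ ∀ t : ℕ, T ≤ t → ∀ i j : Fin n,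
      tpow (Bm A lam) (t + σ) i j = tpow (Bm A lam) t i j := by
  classical
  set B := Bm A lam with hBdef
  obtain ⟨x, hxle, hxsat⟩ := eigvec hn hirr heig
  have hcoe : ((lam + ·) : ℝ → ℝ) = fun y => lam + y := rfl
  have hB : ∀ i j, B i j + ((x j : ℝ) : WithBot ℝ) ≤ ((x i : ℝ) : WithBot ℝ) := by
    intro i j
    have h1 := hxle i j
    have h2 : (A i j + ((x j : ℝ) : WithBot ℝ)) + ((-lam : ℝ) : WithBot ℝ)
        ≤ ((lam + x i : ℝ) : WithBot ℝ) + ((-lam : ℝ) : WithBot ℝ) := add_le_add_left h1 _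
    have h3 : B i j + ((x j : ℝ) : WithBot ℝ)
        = (A i j + ((x j : ℝ) : WithBot ℝ)) + ((-lam : ℝ) : WithBot ℝ) := by
      rw [hBdef]; unfold Bm; abel
    have h4 : ((lam + x i : ℝ) : WithBot ℝ) + ((-lam : ℝ) : WithBot ℝ)
        = ((x i : ℝ) : WithBot ℝ) := by
      rw [← WithBot.coe_add]; congr 1; ring
    rw [h3, ← h4]; exact h2
  have hBsat : ∀ u : Fin n, ∃ w, B u w + ((x w : ℝ) : WithBot ℝ) = ((x u : ℝ) : WithBot ℝ)
      ∧ B u w ≠ ⊥ := by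
    intro u
    obtain ⟨w, hw, hne⟩ := hxsat u
    refine ⟨w, ?_, Bm_ne_bot.mpr hne⟩
    have h3 : B u w + ((x w : ℝ) : WithBot ℝ)
        = (A u w + ((x w : ℝ) : WithBot ℝ)) + ((-lam : ℝ) : WithBot ℝ) := by
      rw [hBdef]; unfold Bm; abel
    rw [h3, hw, ← WithBot.coe_add]
    congr 1; ring
  obtain ⟨M, M₂, hM0, hM₂0, hMub, hM₂lb⟩ := exists_bounds hn B
  obtain ⟨ε, hε0, heps⟩ := exists_eps hn A lam hB
  have hdata : ∀ v : Fin n, ∃ d L : ℕ, 1 ≤ d ∧ 1 ≤ L ∧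
      ((critLengths A lam v).Nonempty →
        (IsGCDOf (critLengths A lam v) d ∧ d ∣ σ ∧
         ∀ m, L ≤ m → d ∣ m → m ∈ critLengths A lam v)) := by
    intro v
    by_cases hv : (critLengths A lam v).Nonempty
    · obtain ⟨s₁, hs₁⟩ := hv
      have hs₁1 : 1 ≤ s₁ := by
        obtain ⟨c, hcirc, -, -⟩ := hs₁
        exact hcirc.1
      obtain ⟨d, hd1, hdgcd, -⟩ := gcd_full _ ⟨s₁, hs₁, hs₁1⟩
      obtain ⟨L, hL1, hLspec⟩ :=
        ns_lemma _ (fun a ha b hb => crit_add ha hb) hs₁ hs₁1 hdgcd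
      have hdσ : d ∣ σ := hcyc.1 d ⟨v, ⟨s₁, hs₁⟩, hdgcd⟩
      exact ⟨d, L, hd1, hL1, fun _ => ⟨hdgcd, hdσ, hLspec⟩⟩
    · exact ⟨1, 1, le_rfl, le_rfl, fun h => absurd h hv⟩
  choose dOf LOf hd1 hL1 hspec using hdata
  set Lmax := Finset.univ.sup LOf with hLm
  have hLmax : ∀ v, LOf v ≤ Lmax := fun v => Finset.le_sup (Finset.mem_univ v)
  obtain ⟨vS, hvS⟩ := crit_exists hn A lam hBsat
  obtain ⟨g, C₀, T_lb, hg1, hgdS, hC₀0, hlb⟩ := lower_bound hn hirr (hd1 vS)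
      ((hspec vS hvS).1) ((hspec vS hvS).2.2) hvS
  have hgσ : g ∣ σ := dvd_trans hgdS ((hspec vS hvS).2.1)
  set Q := Nat.ceil (((n:ℝ) * M + C₀) / ε) + 1 with hQ
  obtain ⟨A1, hA1⟩ : ∃ y, (Lmax + σ) * (n * σ) = y := ⟨_, rfl⟩
  obtain ⟨B1, hB1⟩ : ∃ y, (n + 1) * Q = y := ⟨_, rfl⟩
  set T := 2 * A1 + 2 + B1 + T_lb + σ + 1 with hTdef
  have hmatch : ∀ t s : ℕ, ∀ i j : Fin n, T ≤ t → t ≤ s + σ → (σ:ℤ) ∣ (s:ℤ) - (t:ℤ) →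
      T_lb ≤ s → 1 ≤ s → tpow B t i j ≤ tpow B s i j := by
    intro t s i j hTt hts hdvd hsT hs1
    have ht1 : 1 ≤ t := by omega
    obtain ⟨c, hc0, hct, hcw⟩ := walk_attain hn B t ht1 i j
    by_cases hbot : wt B c 0 t = ⊥
    · rw [← hcw, hbot]; exact bot_le
    by_cases hcrit : ∃ p, p ≤ t ∧ (critLengths A lam (c p)).Nonempty
    · obtain ⟨p, hpt, hcp⟩ := hcrit
      obtain ⟨c', h0', hs', hw'⟩ := engine hn hB hσ hd1 (fun v hv => (hspec v hv).2.1)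
        (fun v hv => (hspec v hv).2.2) hLmax c t s p hpt hcp (by rw [hA1]; omega) hdvd hts
      calc tpow B t i j = wt B c 0 t := hcw.symm
        _ ≤ wt B c' 0 s := hw'
        _ ≤ tpow B s (c' 0) (c' s) := walk_le B s c'
        _ = tpow B s i j := by rw [h0', hs', hc0, hct]
    · push_neg at hcrit
      have hnc : ∀ k ≤ t, ¬(critLengths A lam (c k)).Nonempty := by
        intro k hk
        rw [Set.not_nonempty_iff_eq_empty]
        exact hcrit k hk
      have hdec := decay hn A lam hB hMub hM0 hε0 heps t c hnc
      have hgst : (g:ℤ) ∣ (s:ℤ) - (t:ℤ) :=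
        dvd_trans (Int.natCast_dvd_natCast.mpr hgσ) hdvd
      obtain ⟨c'', h0'', hs'', hw''⟩ := hlb i j s t c hsT hc0 hct hbot hgst
      have hQt : Q ≤ t / (n+1) := by
        rw [Nat.le_div_iff_mul_le (by omega)]
        have : (n+1) * Q = Q * (n+1) := by ring
        omega
      have hreal : (n:ℝ) * M - ε * ((t/(n+1) : ℕ) : ℝ) ≤ -C₀ := by
        have h1 : ((n:ℝ) * M + C₀) / ε ≤ (Q:ℝ) := by
          have := Nat.le_ceil (((n:ℝ) * M + C₀) / ε)
          have h2 : ((Nat.ceil (((n:ℝ) * M + C₀) / ε) : ℕ) : ℝ) ≤ (Q:ℝ) := by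
            rw [hQ]; push_cast; linarith
          linarith
        have h2 : (Q:ℝ) ≤ ((t/(n+1) : ℕ) : ℝ) := by exact_mod_cast hQt
        have h3 : ((n:ℝ) * M + C₀) / ε * ε ≤ ((t/(n+1) : ℕ) : ℝ) * ε := by
          apply mul_le_mul_of_nonneg_right _ hε0.le
          linarith
        rw [div_mul_cancel₀ _ (ne_of_gt hε0)] at h3
        nlinarith
      calc tpow B t i j = wt B c 0 t := hcw.symm
        _ ≤ (((n:ℝ) * M - ε * ((t/(n+1) : ℕ) : ℝ) : ℝ) : WithBot ℝ) := hdec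
        _ ≤ ((-C₀ : ℝ) : WithBot ℝ) := by rw [WithBot.coe_le_coe]; exact hreal
        _ ≤ wt B c'' 0 s := hw''
        _ ≤ tpow B s (c'' 0) (c'' s) := walk_le B s c''
        _ = tpow B s i j := by rw [h0'', hs'']
  refine ⟨T, by omega, ?_⟩
  intro t hTt i j
  apply le_antisymm
  · apply hmatch (t + σ) t i j (by omega) (by omega) ?_ (by omega) (by omega)
    exact ⟨-1, by push_cast; ring⟩
  · apply hmatch t (t + σ) i j hTt (by omega) ?_ (by omega) (by omega)
    exact ⟨1, by push_cast; ring⟩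

end Stmt5Main

/-- Cyclicity Theorem: for an irreducible `A` with unique eigenvalue `lam ∈ ℝ`
and cyclicity `σ ≥ 1`, there is `T ≥ 1` with `A^{⊗(t+σ)} = σ·lam + A^{⊗t}` for all `t ≥ T`. -/
theorem stmt_5 {n : ℕ} (hn : 1 ≤ n) (A : Fin n → Fin n → WithBot ℝ)
    (hirr : StronglyConnected A) (lam : ℝ)
    (heig : IsEigenvalue A (lam : WithBot ℝ))
    (huniq : ∀ μ : WithBot ℝ, IsEigenvalue A μ → μ = (lam : WithBot ℝ))
    (σ : ℕ) (hσ : 1 ≤ σ) (hcyc : IsCyclicity A lam σ) :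
    ∃ T : ℕ, 1 ≤ T ∧ ∀ t : ℕ, T ≤ t → ∀ i j : Fin n,
      tpow A (t + σ) i j = (((σ : ℝ) * lam : ℝ) : WithBot ℝ) + tpow A t i j := by
  obtain ⟨T, hT1, hT⟩ := Stmt5Main.key hn A hirr lam heig σ hσ hcyc
  refine ⟨T, hT1, ?_⟩
  intro t ht i j
  have h1 := Stmt5Aux3.tpow_shift hn A lam (t + σ) i j
  have h2 := Stmt5Aux3.tpow_shift hn A lam t i j
  rw [h1, hT t ht i j, h2]
  have h3 : (((t + σ : ℕ) : ℝ) * lam) = ((σ:ℝ) * lam) + (((t:ℕ):ℝ) * lam) := by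
    push_cast; ring
  rw [h3, WithBot.coe_add]
  abel
end

section
/- Let A ∈ ℝ_max^{n×n} and suppose its maximum eigenvalue λ is a real number (λ ∈ ℝ). Then there exists a finite vector x = (x_1,…,x_n)ᵀ ∈ ℝ^n such that A_{ij} + x_j = λ + x_i for every critical edge (i,j) of G(A), and A_{ij} + x_j < λ + x_i for every pair (i,j) that is not a critical edge (where for A_{ij} = -∞ the left side is -∞ and the strict inequality holds). -/
open Filter Topology

/-- `(i,j)` is a critical edge of `G(A)`: it lies on some circuit whose average weight equals
the maximum average circuit weight `lam`. -/
def IsCriticalEdge {n : ℕ} (A : Fin n → Fin n → WithBot ℝ) (lam : ℝ) (i j : Fin n) : Prop :=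
  ∃ (ℓ : ℕ) (c : ℕ → Fin n) (k : ℕ), IsCircuit A ℓ c ∧
    circuitWeight A ℓ c = (((ℓ : ℝ) * lam : ℝ) : WithBot ℝ) ∧
    k < ℓ ∧ c k = i ∧ c (k + 1) = j

section Aux
variable {n : ℕ}

noncomputable def wt (u : Fin n → Fin n → WithBot ℝ) (ℓ : ℕ) (c : ℕ → Fin n) : WithBot ℝ :=
  ∑ k ∈ Finset.range ℓ, u (c k) (c (k + 1))

lemma wt_congr {u : Fin n → Fin n → WithBot ℝ} {ℓ : ℕ} {c c' : ℕ → Fin n}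
    (h : ∀ k ≤ ℓ, c k = c' k) : wt u ℓ c = wt u ℓ c' := by
  unfold wt
  refine Finset.sum_congr rfl fun k hk => ?_
  rw [Finset.mem_range] at hk
  rw [h k (by omega), h (k+1) (by omega)]

lemma wt_splice (u : Fin n → Fin n → WithBot ℝ) (ℓ a b : ℕ) (c : ℕ → Fin n)
    (hab : a < b) (hbl : b ≤ ℓ) (hc : c a = c b) :
    wt u ℓ c = wt u (ℓ - (b - a)) (fun k => if k ≤ a then c k else c (k + (b - a)))
      + wt u (b - a) (fun k => c (a + k)) := by
  set m := b - a with hm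
  have hl' : a ≤ ℓ - m := by omega
  have h1 : wt u ℓ c = (∑ k ∈ Finset.Ico 0 a, u (c k) (c (k+1)))
      + (∑ k ∈ Finset.Ico a b, u (c k) (c (k+1)))
      + (∑ k ∈ Finset.Ico b ℓ, u (c k) (c (k+1))) := by
    unfold wt
    rw [Finset.range_eq_Ico, ← Finset.sum_Ico_consecutive _ (Nat.zero_le b) hbl,
      ← Finset.sum_Ico_consecutive _ (Nat.zero_le a) (le_of_lt hab)]
  have h2 : wt u (b - a) (fun k => c (a + k)) = ∑ k ∈ Finset.Ico a b, u (c k) (c (k+1)) := by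
    unfold wt
    rw [Finset.sum_Ico_eq_sum_range]
    refine Finset.sum_congr rfl fun k hk => ?_
    have e1 : a + (k + 1) = a + k + 1 := by omega
    simp only [e1]
  have h3 : wt u (ℓ - m) (fun k => if k ≤ a then c k else c (k + m))
      = (∑ k ∈ Finset.Ico 0 a, u (c k) (c (k+1)))
      + (∑ k ∈ Finset.Ico b ℓ, u (c k) (c (k+1))) := by
    unfold wt
    rw [Finset.range_eq_Ico, ← Finset.sum_Ico_consecutive _ (Nat.zero_le a) hl']
    congr 1
    · refine Finset.sum_congr rfl fun k hk => ?_
      rw [Finset.mem_Ico] at hk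
      simp only
      rw [if_pos (by omega : k ≤ a), if_pos (by omega : k + 1 ≤ a)]
    · have key : ∀ k ∈ Finset.Ico a (ℓ - m),
          u ((fun k => if k ≤ a then c k else c (k + m)) k)
            ((fun k => if k ≤ a then c k else c (k + m)) (k+1))
          = u (c (k + m)) (c (k + m + 1)) := by
        intro k hk
        rw [Finset.mem_Ico] at hk
        have e1 : k + 1 + m = k + m + 1 := by omega
        simp only
        rw [if_neg (by omega : ¬ k + 1 ≤ a), e1]
        rcases Nat.eq_or_lt_of_le hk.1 with h | h
        · rw [if_pos (by omega : k ≤ a)]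
          congr 1
          rw [← h, hc]
          congr 1
          omega
        · rw [if_neg (by omega : ¬ k ≤ a)]
      rw [Finset.sum_congr rfl key, Finset.sum_Ico_eq_sum_range,
        Finset.sum_Ico_eq_sum_range]
      have e2 : ℓ - m - a = ℓ - b := by omega
      rw [e2]
      refine Finset.sum_congr rfl fun k hk => ?_
      have e3 : a + k + m = b + k := by omega
      rw [e3]
  rw [h1, h3, h2, add_right_comm]

end Aux

section Aux2
variable {n : ℕ}

def H0 (u : Fin n → Fin n → WithBot ℝ) : Prop :=
  ∀ ℓ c, 1 ≤ ℓ → c ℓ = c 0 → wt u ℓ c ≤ 0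

lemma pigeon (hn : 0 < n) {ℓ : ℕ} (_hno : n < ℓ) (c : ℕ → Fin n) :
    ∃ a b, a < b ∧ b ≤ n ∧ c a = c b := by
  have : Nonempty (Fin n) := ⟨⟨0, hn⟩⟩
  have := Fintype.exists_ne_map_eq_of_card_lt (fun k : Fin (n+1) => c k) (by simp)
  obtain ⟨a, b, hab, h⟩ := this
  rcases lt_or_gt_of_ne (Fin.val_ne_of_ne hab) with h' | h'
  · exact ⟨a, b, h', Nat.lt_succ_iff.mp b.isLt, h⟩
  · exact ⟨b, a, h', Nat.lt_succ_iff.mp a.isLt, h.symm⟩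

lemma splice_c0 {c : ℕ → Fin n} {a m : ℕ} :
    (if (0:ℕ) ≤ a then c 0 else c (0 + m)) = c 0 := if_pos (Nat.zero_le a)

lemma splice_end {c : ℕ → Fin n} {a b ℓ : ℕ} (hab : a < b) (hbl : b < ℓ) :
    (if ℓ - (b - a) ≤ a then c (ℓ - (b - a)) else c (ℓ - (b - a) + (b - a))) = c ℓ := by
  rw [if_neg (by omega)]
  congr 1
  omega

lemma mid_closed {c : ℕ → Fin n} {a b : ℕ} (hab : a < b) (hc : c a = c b) :
    (fun k => c (a + k)) (b - a) = (fun k => c (a + k)) 0 := by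
  simp only
  have e : a + (b - a) = b := by omega
  rw [e, Nat.add_zero, hc]

lemma h0_of_short (hn : 0 < n) (u : Fin n → Fin n → WithBot ℝ)
    (h : ∀ ℓ c, 1 ≤ ℓ → ℓ ≤ n → c ℓ = c 0 → wt u ℓ c ≤ 0) : H0 u := by
  intro ℓ
  induction ℓ using Nat.strong_induction_on with
  | _ ℓ IH =>
  intro c h1 hcl
  by_cases hle : ℓ ≤ n
  · exact h ℓ c h1 hle hcl
  push_neg at hle
  obtain ⟨a, b, hab, hbn, hc⟩ := pigeon hn hle c
  rw [wt_splice u ℓ a b c hab (by omega) hc]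
  refine add_nonpos ?_ (h (b - a) _ (by omega) (by omega) (mid_closed hab hc))
  refine IH (ℓ - (b - a)) (by omega) _ (by omega) ?_
  show (if ℓ - (b - a) ≤ a then c (ℓ - (b - a)) else c (ℓ - (b - a) + (b - a)))
      = (if (0:ℕ) ≤ a then c 0 else c (0 + (b - a)))
  rw [splice_end hab (by omega), splice_c0, hcl]

lemma trim (hn : 0 < n) (u : Fin n → Fin n → WithBot ℝ) (h0 : H0 u) :
    ∀ ℓ c, ∃ ℓ' c', ℓ' ≤ n ∧ c' 0 = c 0 ∧ c' ℓ' = c ℓ ∧ wt u ℓ c ≤ wt u ℓ' c' := by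
  intro ℓ
  induction ℓ using Nat.strong_induction_on with
  | _ ℓ IH =>
  intro c
  by_cases hle : ℓ ≤ n
  · exact ⟨ℓ, c, hle, rfl, rfl, le_rfl⟩
  push_neg at hle
  obtain ⟨a, b, hab, hbn, hc⟩ := pigeon hn hle c
  have key : wt u ℓ c ≤ wt u (ℓ - (b - a)) (fun k => if k ≤ a then c k else c (k + (b - a))) := by
    rw [wt_splice u ℓ a b c hab (by omega) hc]
    calc _ ≤ wt u (ℓ - (b-a)) (fun k => if k ≤ a then c k else c (k + (b - a))) + 0 :=
          add_le_add_right (h0 (b - a) _ (by omega) (mid_closed hab hc)) _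
      _ = _ := add_zero _
  obtain ⟨ℓ', c'', h1, h2, h3, h4⟩ := IH (ℓ - (b - a)) (by omega) _
  refine ⟨ℓ', c'', h1, ?_, ?_, key.trans h4⟩
  · rw [h2]
    exact splice_c0
  · rw [h3]
    exact splice_end hab (by omega)

noncomputable def bell (u : Fin n → Fin n → WithBot ℝ) (f : Fin n → WithBot ℝ) :
    Fin n → WithBot ℝ :=
  fun i => Finset.univ.sup fun j => u i j + f j

lemma le_bell (u : Fin n → Fin n → WithBot ℝ) (f : Fin n → WithBot ℝ) (i j : Fin n) :
    u i j + f j ≤ bell u f i := by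
  exact Finset.le_sup (f := fun j => u i j + f j) (Finset.mem_univ j)

lemma bell_mono (u : Fin n → Fin n → WithBot ℝ) {f g : Fin n → WithBot ℝ}
    (h : ∀ j, f j ≤ g j) (i : Fin n) : bell u f i ≤ bell u g i :=
  Finset.sup_mono_fun fun j _ => add_le_add_right (h j) _

lemma walk_le_iter (u : Fin n → Fin n → WithBot ℝ) (f : Fin n → WithBot ℝ) :
    ∀ k (c : ℕ → Fin n), wt u k c + f (c k) ≤ (bell u)^[k] f (c 0) := by
  intro k
  induction k with
  | zero => intro c; simp [wt]
  | succ k IH =>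
    intro c
    rw [Function.iterate_succ_apply']
    have h1 : wt u (k+1) c = wt u k (fun m => c (m+1)) + u (c 0) (c 1) := by
      unfold wt
      rw [Finset.sum_range_succ']
    calc wt u (k+1) c + f (c (k+1))
        = u (c 0) (c 1) + (wt u k (fun m => c (m+1)) + f (c (k+1))) := by rw [h1]; abel
      _ ≤ u (c 0) (c 1) + (bell u)^[k] f ((fun m => c (m+1)) 0) :=
          add_le_add_right (IH (fun m => c (m+1))) _
      _ ≤ _ := le_bell u _ (c 0) (c 1)

end Aux2

section Aux3
variable {n : ℕ}

lemma iter_le_walk (hn : 0 < n) (u : Fin n → Fin n → WithBot ℝ) (f : Fin n → WithBot ℝ) :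
    ∀ k (i : Fin n), ∃ c : ℕ → Fin n, c 0 = i ∧ (bell u)^[k] f i ≤ wt u k c + f (c k) := by
  intro k
  induction k with
  | zero => intro i; exact ⟨fun _ => i, rfl, by simp [wt]⟩
  | succ k IH =>
    intro i
    rw [Function.iterate_succ_apply']
    obtain ⟨j, -, hj⟩ := Finset.exists_mem_eq_sup Finset.univ ⟨⟨0, hn⟩, Finset.mem_univ _⟩
      (fun j => u i j + (bell u)^[k] f j)
    obtain ⟨c', hc0, hc⟩ := IH j
    refine ⟨fun m => Nat.casesOn m i (fun m' => c' m'), rfl, ?_⟩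
    have h1 : wt u (k+1) (fun m => Nat.casesOn m i (fun m' => c' m'))
        = wt u k c' + u i j := by
      unfold wt
      rw [Finset.sum_range_succ']
      congr 1
      show u i (c' 0) = u i j
      rw [hc0]
    have h2 : bell u ((bell u)^[k] f) i = u i j + (bell u)^[k] f j := hj
    rw [h2, h1]
    calc u i j + (bell u)^[k] f j ≤ u i j + (wt u k c' + f (c' k)) := add_le_add_right hc _
      _ = wt u k c' + u i j + f (c' k) := by abel

noncomputable def supvec (u : Fin n → Fin n → WithBot ℝ) (f : Fin n → WithBot ℝ) :
    Fin n → WithBot ℝ :=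
  fun i => (Finset.range (n+1)).sup fun k => (bell u)^[k] f i

lemma iter_le_supvec_of_le {u : Fin n → Fin n → WithBot ℝ} {f : Fin n → WithBot ℝ}
    {k : ℕ} (hk : k ≤ n) (i : Fin n) : (bell u)^[k] f i ≤ supvec u f i :=
  Finset.le_sup (f := fun k => (bell u)^[k] f i) (Finset.mem_range.2 (by omega))

lemma iter_le_supvec (hn : 0 < n) (u : Fin n → Fin n → WithBot ℝ) (f : Fin n → WithBot ℝ)
    (h0 : H0 u) (m : ℕ) (i : Fin n) : (bell u)^[m] f i ≤ supvec u f i := by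
  obtain ⟨c, hc0, hc⟩ := iter_le_walk hn u f m i
  obtain ⟨ℓ', c', hl', h2, h3, h4⟩ := trim hn u h0 m c
  calc (bell u)^[m] f i ≤ wt u m c + f (c m) := hc
    _ ≤ wt u ℓ' c' + f (c' ℓ') := by rw [h3]; exact add_le_add_left h4 _
    _ ≤ (bell u)^[ℓ'] f (c' 0) := walk_le_iter u f ℓ' c'
    _ = (bell u)^[ℓ'] f i := by rw [h2, hc0]
    _ ≤ supvec u f i := iter_le_supvec_of_le hl' i

lemma bell_supvec_le (hn : 0 < n) (u : Fin n → Fin n → WithBot ℝ) (f : Fin n → WithBot ℝ)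
    (h0 : H0 u) (i : Fin n) : bell u (supvec u f) i ≤ supvec u f i := by
  show (Finset.univ.sup fun j => u i j + supvec u f j) ≤ supvec u f i
  refine Finset.sup_le fun j _ => ?_
  show u i j + ((Finset.range (n+1)).sup fun k => (bell u)^[k] f j) ≤ supvec u f i
  induction (Finset.range (n+1)) using Finset.cons_induction with
  | empty => rw [Finset.sup_empty, WithBot.add_bot]; exact bot_le
  | cons x s hx IH =>
    rw [Finset.sup_cons]
    have hdist : u i j + ((bell u)^[x] f j ⊔ s.sup fun k => (bell u)^[k] f j)
        = (u i j + (bell u)^[x] f j) ⊔ (u i j + s.sup fun k => (bell u)^[k] f j) := by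
      rcases le_total ((bell u)^[x] f j) (s.sup fun k => (bell u)^[k] f j) with h | h
      · rw [sup_eq_right.2 h, sup_eq_right.2 (add_le_add_right h _)]
      · rw [sup_eq_left.2 h, sup_eq_left.2 (add_le_add_right h _)]
    rw [hdist]
    refine sup_le ?_ IH
    calc u i j + (bell u)^[x] f j ≤ bell u ((bell u)^[x] f) i := le_bell u _ i j
      _ = (bell u)^[x+1] f i := congrFun (Function.iterate_succ_apply' (bell u) x f).symm i
      _ ≤ supvec u f i := iter_le_supvec hn u f h0 (x+1) i

lemma supvec_le_bell (hn : 0 < n) (u : Fin n → Fin n → WithBot ℝ) (f : Fin n → WithBot ℝ)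
    (hf : ∀ i, f i ≤ bell u (supvec u f) i) (i : Fin n) :
    supvec u f i ≤ bell u (supvec u f) i := by
  show ((Finset.range (n+1)).sup fun k => (bell u)^[k] f i) ≤ _
  refine Finset.sup_le fun k hk => ?_
  rw [Finset.mem_range] at hk
  cases k with
  | zero => exact hf i
  | succ k =>
    rw [Function.iterate_succ_apply']
    exact bell_mono u (fun j => iter_le_supvec_of_le (by omega) j) i

end Aux3

section Aux4
variable {n : ℕ}

noncomputable def ra (A : Fin n → Fin n → WithBot ℝ) (i j : Fin n) : ℝ := (A i j).unbotD 0

noncomputable def rwt (A : Fin n → Fin n → WithBot ℝ) (ℓ : ℕ) (c : ℕ → Fin n) : ℝ :=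
  ∑ k ∈ Finset.range ℓ, ra A (c k) (c (k+1))

def IsWalk (A : Fin n → Fin n → WithBot ℝ) (ℓ : ℕ) (c : ℕ → Fin n) : Prop :=
  ∀ k < ℓ, A (c k) (c (k+1)) ≠ ⊥

lemma coe_ra {A : Fin n → Fin n → WithBot ℝ} {i j : Fin n} (h : A i j ≠ ⊥) :
    A i j = ((ra A i j : ℝ) : WithBot ℝ) := by
  unfold ra
  cases hA : A i j with
  | bot => exact absurd hA h
  | coe r => rfl

lemma wt_eq_coe {A : Fin n → Fin n → WithBot ℝ} {ℓ : ℕ} {c : ℕ → Fin n}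
    (h : IsWalk A ℓ c) : wt A ℓ c = ((rwt A ℓ c : ℝ) : WithBot ℝ) := by
  have h2 : ((rwt A ℓ c : ℝ) : WithBot ℝ)
      = ∑ k ∈ Finset.range ℓ, ((ra A (c k) (c (k+1)) : ℝ) : WithBot ℝ) := by
    exact_mod_cast rfl
  rw [h2]
  unfold wt
  refine Finset.sum_congr rfl fun k hk => ?_
  rw [Finset.mem_range] at hk
  exact coe_ra (h k hk)

lemma wt_eq_bot {u : Fin n → Fin n → WithBot ℝ} {ℓ : ℕ} {c : ℕ → Fin n}
    (k : ℕ) (hk : k < ℓ) (h : u (c k) (c (k+1)) = ⊥) : wt u ℓ c = ⊥ := by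
  unfold wt
  rw [WithBot.sum_eq_bot_iff]
  exact ⟨k, Finset.mem_range.2 hk, h⟩

lemma wt_shift (A : Fin n → Fin n → WithBot ℝ) (r : ℝ) (ℓ : ℕ) (c : ℕ → Fin n) :
    wt (fun i j => A i j + (r : WithBot ℝ)) ℓ c = wt A ℓ c + ((ℓ * r : ℝ) : WithBot ℝ) := by
  unfold wt
  rw [Finset.sum_add_distrib, Finset.sum_const, Finset.card_range]
  congr 1
  rw [← WithBot.coe_nsmul]
  congr 1
  simp [nsmul_eq_mul]

lemma isWalk_congr {A : Fin n → Fin n → WithBot ℝ} {ℓ : ℕ} {c c' : ℕ → Fin n}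
    (h : ∀ k ≤ ℓ, c k = c' k) (hw : IsWalk A ℓ c) : IsWalk A ℓ c' := by
  intro k hk
  rw [← h k (by omega), ← h (k+1) (by omega)]
  exact hw k hk

lemma rwt_congr {A : Fin n → Fin n → WithBot ℝ} {ℓ : ℕ} {c c' : ℕ → Fin n}
    (h : ∀ k ≤ ℓ, c k = c' k) : rwt A ℓ c = rwt A ℓ c' := by
  unfold rwt
  refine Finset.sum_congr rfl fun k hk => ?_
  rw [Finset.mem_range] at hk
  rw [h k (by omega), h (k+1) (by omega)]

end Aux4


section Aux5
variable {n : ℕ}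

def extd (d : Fin (n+1) → Fin n) : ℕ → Fin n := fun k => d ⟨min k n, by omega⟩

lemma extd_res (c : ℕ → Fin n) {k : ℕ} (hk : k ≤ n) :
    extd (fun m : Fin (n+1) => c m) k = c k := by
  unfold extd
  simp only
  congr 1
  omega

open scoped Classical in
noncomputable def meanSet (A : Fin n → Fin n → WithBot ℝ) (P : ℕ → (ℕ → Fin n) → Prop) :
    Finset ℝ :=
  ((Finset.Icc 1 n ×ˢ (Finset.univ : Finset (Fin (n+1) → Fin n))).filter
    (fun p => IsWalk A p.1 (extd p.2) ∧ extd p.2 p.1 = extd p.2 0 ∧ P p.1 (extd p.2))).image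
    (fun p => rwt A p.1 (extd p.2) / p.1)

lemma mem_meanSet {A : Fin n → Fin n → WithBot ℝ} {P : ℕ → (ℕ → Fin n) → Prop}
    {ℓ : ℕ} {c : ℕ → Fin n} (h1 : 1 ≤ ℓ) (h2 : ℓ ≤ n) (hw : IsWalk A ℓ c)
    (hcl : c ℓ = c 0) (hP : P ℓ (extd (fun m : Fin (n+1) => c m))) :
    rwt A ℓ c / ℓ ∈ meanSet A P := by
  classical
  have hco : ∀ k ≤ ℓ, c k = extd (fun m : Fin (n+1) => c m) k :=
    fun k hk => (extd_res c (le_trans hk h2)).symm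
  refine Finset.mem_image.2 ⟨(ℓ, fun m : Fin (n+1) => c m), Finset.mem_filter.2 ⟨?_, ?_, ?_, hP⟩, ?_⟩
  · exact Finset.mem_product.2 ⟨Finset.mem_Icc.2 ⟨h1, h2⟩, Finset.mem_univ _⟩
  · exact isWalk_congr hco hw
  · rw [← hco ℓ le_rfl, ← hco 0 (by omega), hcl]
  · rw [← rwt_congr hco]

lemma of_mem_meanSet {A : Fin n → Fin n → WithBot ℝ} {P : ℕ → (ℕ → Fin n) → Prop} {x : ℝ}
    (hx : x ∈ meanSet A P) :
    ∃ ℓ c, 1 ≤ ℓ ∧ ℓ ≤ n ∧ IsWalk A ℓ c ∧ c ℓ = c 0 ∧ P ℓ c ∧ x = rwt A ℓ c / ℓ := by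
  classical
  obtain ⟨p, hp, hval⟩ := Finset.mem_image.1 hx
  obtain ⟨hmem, hw, hcl, hP⟩ := Finset.mem_filter.1 hp
  obtain ⟨hIcc, -⟩ := Finset.mem_product.1 hmem
  obtain ⟨h1, h2⟩ := Finset.mem_Icc.1 hIcc
  exact ⟨p.1, extd p.2, h1, h2, hw, hcl, hP, hval.symm⟩

end Aux5


section Aux6
variable {n : ℕ}

lemma add_sup_withbot (a b c : WithBot ℝ) : a + (b ⊔ c) = (a + b) ⊔ (a + c) := by
  rcases le_total b c with h | h
  · rw [sup_eq_right.2 h, sup_eq_right.2 (add_le_add_right h a)]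
  · rw [sup_eq_left.2 h, sup_eq_left.2 (add_le_add_right h a)]

lemma add_finset_sup {ι : Type*} (a : WithBot ℝ) (s : Finset ι) (g : ι → WithBot ℝ) :
    a + s.sup g = s.sup (fun j => a + g j) := by
  induction s using Finset.cons_induction with
  | empty => simp [WithBot.add_bot]
  | cons x s hx IH => rw [Finset.sup_cons, Finset.sup_cons, add_sup_withbot, IH]

lemma sub_add_cancel_withbot (z : WithBot ℝ) (r : ℝ) :
    (z + ((-r : ℝ) : WithBot ℝ)) + (r : WithBot ℝ) = z := by
  cases z with
  | bot => rw [WithBot.bot_add, WithBot.bot_add]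
  | coe a =>
    rw [← WithBot.coe_add, ← WithBot.coe_add]
    norm_num

/-- If all short closed genuine walks have average weight at most `mu`, then the
shifted matrix `A - mu` satisfies `H0`. -/
lemma H0_of_mean_le (hn : 0 < n) (A : Fin n → Fin n → WithBot ℝ) (mu : ℝ)
    (h : ∀ ℓ c, 1 ≤ ℓ → ℓ ≤ n → IsWalk A ℓ c → c ℓ = c 0 → rwt A ℓ c ≤ ℓ * mu) :
    H0 (fun i j => A i j + ((-mu : ℝ) : WithBot ℝ)) := by
  refine h0_of_short hn _ fun ℓ c h1 h2 hcl => ?_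
  by_cases hw : IsWalk A ℓ c
  · rw [wt_shift A (-mu) ℓ c, wt_eq_coe hw, ← WithBot.coe_add]
    have : rwt A ℓ c + ℓ * (-mu) ≤ 0 := by
      have := h ℓ c h1 h2 hw hcl
      nlinarith
    exact_mod_cast this
  · unfold IsWalk at hw
    push_neg at hw
    obtain ⟨k, hk, hbot⟩ := hw
    rw [wt_eq_bot k hk (by rw [hbot, WithBot.bot_add])]
    exact bot_le

/-- If there is a closed genuine walk of average weight exactly `mu`, and `A - mu`
satisfies `H0`, then `mu` is an eigenvalue of `A`. -/
lemma eigen_of_zero_walk (hn : 0 < n) (A : Fin n → Fin n → WithBot ℝ) (mu : ℝ)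
    (h0 : H0 (fun i j => A i j + ((-mu : ℝ) : WithBot ℝ)))
    (ℓ0 : ℕ) (c0 : ℕ → Fin n) (h1 : 1 ≤ ℓ0) (h2 : ℓ0 ≤ n) (hw : IsWalk A ℓ0 c0)
    (hcl : c0 ℓ0 = c0 0) (hmean : rwt A ℓ0 c0 = ℓ0 * mu) :
    IsEigenvalue A ((mu : ℝ) : WithBot ℝ) := by
  classical
  set u : Fin n → Fin n → WithBot ℝ := fun i j => A i j + ((-mu : ℝ) : WithBot ℝ) with hu
  set v : Fin n := c0 0 with hv
  set dv : Fin n → WithBot ℝ := fun j => if j = v then (0 : WithBot ℝ) else ⊥ with hdv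
  set x : Fin n → WithBot ℝ := supvec u dv with hx
  have hwt0 : wt u ℓ0 c0 = 0 := by
    rw [hu, wt_shift A (-mu) ℓ0 c0, wt_eq_coe hw, ← WithBot.coe_add, hmean]
    norm_num
  -- x v ≥ 0
  have hxv : (0 : WithBot ℝ) ≤ x v := by
    have h00 : dv v = 0 := if_pos rfl
    calc (0 : WithBot ℝ) = dv v := h00.symm
      _ = (bell u)^[0] dv v := rfl
      _ ≤ x v := iter_le_supvec_of_le (by omega) v
  -- bell u x ≤ x
  have hble : ∀ i, bell u x i ≤ x i := fun i => bell_supvec_le hn u dv h0 i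
  -- x ≤ bell u x
  have hgeb : ∀ i, x i ≤ bell u x i := by
    refine fun i => supvec_le_bell hn u dv ?_ i
    intro i
    by_cases hiv : i = v
    · subst hiv
      rw [hdv]
      simp only [if_pos rfl]
      -- 0 ≤ bell u x i
      have key : (0 : WithBot ℝ) ≤ (bell u)^[ℓ0] dv v := by
        have := walk_le_iter u dv ℓ0 c0
        rw [hwt0, hcl] at this
        simpa [hdv, hv] using this
      have hsplit : (bell u)^[ℓ0] dv v ≤ bell u x v := by
        have hsucc : ℓ0 = (ℓ0 - 1) + 1 := by omega
        rw [hsucc, Function.iterate_succ_apply']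
        exact bell_mono u (fun j => iter_le_supvec_of_le (by omega) j) v
      exact le_trans key hsplit
    · rw [hdv]
      simp only [if_neg hiv]
      exact bot_le
  have hbeq : ∀ i, bell u x i = x i := fun i => le_antisymm (hble i) (hgeb i)
  refine ⟨x, ?_, ?_⟩
  · intro hbot
    have : x v = ⊥ := by rw [hbot]; rfl
    rw [this] at hxv
    exact absurd (le_antisymm hxv bot_le).symm (by simp)
  · intro i
    have hA : ∀ j, A i j + x j = ((mu : ℝ) : WithBot ℝ) + (u i j + x j) := by
      intro j
      conv_lhs => rw [← sub_add_cancel_withbot (A i j) mu]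
      show u i j + (mu : WithBot ℝ) + x j = _
      abel
    unfold tdot
    calc (Finset.univ.sup fun j => A i j + x j)
        = Finset.univ.sup (fun j => ((mu : ℝ) : WithBot ℝ) + (u i j + x j)) := by
          exact Finset.sup_congr rfl fun j _ => hA j
      _ = ((mu : ℝ) : WithBot ℝ) + Finset.univ.sup (fun j => u i j + x j) :=
          (add_finset_sup _ _ _).symm
      _ = ((mu : ℝ) : WithBot ℝ) + x i := by rw [← hbeq i]; rfl

end Aux6


section Aux7
variable {n : ℕ}

lemma chase (A : Fin n → Fin n → WithBot ℝ) (lam : ℝ)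
    (heig : IsEigenvalue A ((lam : ℝ) : WithBot ℝ)) :
    0 < n ∧ ∃ ℓ c, 1 ≤ ℓ ∧ ℓ ≤ n ∧ IsWalk A ℓ c ∧ c ℓ = c 0 ∧ rwt A ℓ c = ℓ * lam := by
  classical
  obtain ⟨xe, hne, hEq⟩ := heig
  have hsupp : ∃ i0, xe i0 ≠ ⊥ := by
    by_contra h
    push_neg at h
    exact hne (funext fun i => h i)
  obtain ⟨i0, hi0⟩ := hsupp
  have hn : 0 < n := i0.pos
  refine ⟨hn, ?_⟩
  set xr : Fin n → ℝ := fun i => (xe i).unbotD 0 with hxr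
  have step : ∀ i, xe i ≠ ⊥ →
      ∃ j, xe j ≠ ⊥ ∧ A i j ≠ ⊥ ∧ ra A i j + xr j = lam + xr i := by
    intro i hi
    have htd := hEq i
    obtain ⟨j, -, hj⟩ := Finset.exists_mem_eq_sup Finset.univ ⟨i, Finset.mem_univ i⟩
      (fun j => A i j + xe j)
    have hj' : A i j + xe j = ((lam : ℝ) : WithBot ℝ) + xe i := by
      rw [← hj]
      exact htd
    have hxei : xe i = ((xr i : ℝ) : WithBot ℝ) := by
      rw [hxr]
      cases hc : xe i with
      | bot => exact absurd hc hi
      | coe r => simp [hc]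
    have hne2 : A i j + xe j ≠ ⊥ := by
      rw [hj', hxei, ← WithBot.coe_add]
      exact WithBot.coe_ne_bot
    have hAne : A i j ≠ ⊥ := fun hb => hne2 (by rw [hb, WithBot.bot_add])
    have hxne : xe j ≠ ⊥ := fun hb => hne2 (by rw [hb, WithBot.add_bot])
    have hxej : xe j = ((xr j : ℝ) : WithBot ℝ) := by
      rw [hxr]
      cases hc : xe j with
      | bot => exact absurd hc hxne
      | coe r => simp [hc]
    refine ⟨j, hxne, hAne, ?_⟩
    rw [coe_ra hAne, hxej, hxei, ← WithBot.coe_add, ← WithBot.coe_add] at hj'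
    exact WithBot.coe_inj.1 hj'
  set succ : {i : Fin n // xe i ≠ ⊥} → {i : Fin n // xe i ≠ ⊥} :=
    fun p => ⟨(step p.1 p.2).choose, (step p.1 p.2).choose_spec.1⟩ with hsucc
  set c : ℕ → Fin n := fun k => (succ^[k] ⟨i0, hi0⟩).1 with hc
  have hedge : ∀ k, A (c k) (c (k+1)) ≠ ⊥ ∧ ra A (c k) (c (k+1)) + xr (c (k+1)) = lam + xr (c k) := by
    intro k
    set p : {i : Fin n // xe i ≠ ⊥} := succ^[k] ⟨i0, hi0⟩ with hp
    have hck : c k = p.1 := rfl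
    have h2 : c (k+1) = (step p.1 p.2).choose := by
      show (succ^[k+1] (⟨i0, hi0⟩ : {i : Fin n // xe i ≠ ⊥})).1 = _
      rw [Function.iterate_succ_apply' succ k _]
    rw [h2, hck]
    exact ⟨(step p.1 p.2).choose_spec.2.1, (step p.1 p.2).choose_spec.2.2⟩
  have hcard : Fintype.card {i : Fin n // xe i ≠ ⊥} < Fintype.card (Fin (n+1)) := by
    have h := Fintype.card_subtype_le (fun i : Fin n => xe i ≠ ⊥)
    simp only [Fintype.card_fin] at h ⊢
    omega
  obtain ⟨a, b, hab, habeq⟩ := Fintype.exists_ne_map_eq_of_card_lt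
    (fun k : Fin (n+1) => succ^[(k : ℕ)] (⟨i0, hi0⟩ : {i : Fin n // xe i ≠ ⊥})) hcard
  have hmain : ∀ (a b : ℕ), a < b → b ≤ n →
      succ^[a] (⟨i0, hi0⟩ : {i : Fin n // xe i ≠ ⊥}) = succ^[b] (⟨i0, hi0⟩ : {i : Fin n // xe i ≠ ⊥}) →
      ∃ ℓ c', 1 ≤ ℓ ∧ ℓ ≤ n ∧ IsWalk A ℓ c' ∧ c' ℓ = c' 0 ∧ rwt A ℓ c' = ℓ * lam := by
    intro a b hab hbn habeq
    set ℓ := b - a with hℓ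
    set c' : ℕ → Fin n := fun k => c (a + k) with hc'
    have hcab : c a = c b := congrArg Subtype.val habeq
    have hclosed : c' ℓ = c' 0 := by
      rw [hc']
      simp only
      rw [Nat.add_zero]
      have e : a + ℓ = b := by omega
      rw [e, ← hcab]
    have hwalk : IsWalk A ℓ c' := by
      intro k hk
      have e : a + (k + 1) = a + k + 1 := by omega
      rw [hc']
      simp only
      rw [e]
      exact (hedge (a + k)).1
    refine ⟨ℓ, c', by omega, by omega, hwalk, hclosed, ?_⟩
    have hterm : ∀ k, ra A (c' k) (c' (k+1)) = lam + (xr (c' k) - xr (c' (k+1))) := by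
      intro k
      have e : a + (k + 1) = a + k + 1 := by omega
      rw [hc']
      simp only
      rw [e]
      have := (hedge (a + k)).2
      linarith
    have : rwt A ℓ c' = ∑ k ∈ Finset.range ℓ, (lam + (xr (c' k) - xr (c' (k+1)))) :=
      Finset.sum_congr rfl fun k _ => hterm k
    rw [this, Finset.sum_add_distrib, Finset.sum_const, Finset.card_range,
      Finset.sum_range_sub' (fun k => xr (c' k)) ℓ]
    have : xr (c' 0) - xr (c' ℓ) = 0 := by rw [hclosed]; ring
    rw [this]
    simp [nsmul_eq_mul]
  rcases lt_or_gt_of_ne (Fin.val_ne_of_ne hab) with h' | h'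
  · exact hmain a b h' (Nat.lt_succ_iff.mp b.isLt) habeq
  · exact hmain b a h' (Nat.lt_succ_iff.mp a.isLt) habeq.symm

end Aux7


/-- visualization, Sergeev: if the maximum eigenvalue `lam` of `A` is real, then
there is a finite vector `x ∈ ℝ^n` with `A_{ij} + x_j = lam + x_i` on critical edges and
`A_{ij} + x_j < lam + x_i` otherwise. -/
theorem stmt_6 {n : ℕ} (A : Fin n → Fin n → WithBot ℝ) (lam : ℝ)
    (heig : IsEigenvalue A (lam : WithBot ℝ))
    (hmax : ∀ μ : WithBot ℝ, IsEigenvalue A μ → μ ≤ (lam : WithBot ℝ)) :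
    ∃ x : Fin n → ℝ, ∀ i j : Fin n,
      (IsCriticalEdge A lam i j →
        A i j + ((x j : ℝ) : WithBot ℝ) = ((lam + x i : ℝ) : WithBot ℝ)) ∧
      (¬ IsCriticalEdge A lam i j →
        A i j + ((x j : ℝ) : WithBot ℝ) < ((lam + x i : ℝ) : WithBot ℝ)) := by
  classical
  obtain ⟨hn, ℓe, ce, he1, he2, hew, hecl, herwt⟩ := chase A lam heig
  -- the maximum short closed-walk mean
  set S := meanSet A (fun _ _ => True) with hS
  have hSmem : rwt A ℓe ce / ℓe ∈ S := mem_meanSet he1 he2 hew hecl trivial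
  have hSne : S.Nonempty := ⟨_, hSmem⟩
  set mu := S.max' hSne with hmu
  have hlpos : (0 : ℝ) < (ℓe : ℝ) := by exact_mod_cast he1
  have hmu_ge : lam ≤ mu := by
    have hval : rwt A ℓe ce / ℓe = lam := by
      rw [herwt, mul_div_cancel_left₀ _ (ne_of_gt hlpos)]
    calc lam = rwt A ℓe ce / ℓe := hval.symm
      _ ≤ mu := Finset.le_max' S _ hSmem
  have hmean_le : ∀ ℓ c, 1 ≤ ℓ → ℓ ≤ n → IsWalk A ℓ c → c ℓ = c 0 → rwt A ℓ c ≤ ℓ * mu := by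
    intro ℓ c h1 h2 hw hcl
    have hl : (0 : ℝ) < (ℓ : ℝ) := by exact_mod_cast h1
    have := Finset.le_max' S _ (mem_meanSet h1 h2 hw hcl trivial)
    rw [div_le_iff₀ hl] at this
    linarith [this]
  have h0mu : H0 (fun i j => A i j + ((-mu : ℝ) : WithBot ℝ)) := H0_of_mean_le hn A mu hmean_le
  obtain ⟨ℓ0, c0, h01, h02, h0w, h0cl, -, h0val⟩ := of_mem_meanSet (S.max'_mem hSne)
  have h0l : (0 : ℝ) < (ℓ0 : ℝ) := by exact_mod_cast h01
  have h0rwt : rwt A ℓ0 c0 = ℓ0 * mu := by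
    rw [← hmu] at h0val
    rw [h0val]
    field_simp
  have heigmu : IsEigenvalue A ((mu : ℝ) : WithBot ℝ) :=
    eigen_of_zero_walk hn A mu h0mu ℓ0 c0 h01 h02 h0w h0cl h0rwt
  have hmueq : mu = lam := le_antisymm (WithBot.coe_le_coe.1 (hmax _ heigmu)) hmu_ge
  have hmean_lam : ∀ ℓ c, 1 ≤ ℓ → ℓ ≤ n → IsWalk A ℓ c → c ℓ = c 0 → rwt A ℓ c ≤ ℓ * lam := by
    rw [← hmueq]
    exact hmean_le
  -- every zero-mean short closed walk consists of critical edges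
  have hall_crit : ∀ ℓ c, 1 ≤ ℓ → ℓ ≤ n → IsWalk A ℓ c → c ℓ = c 0 →
      rwt A ℓ c = ℓ * lam → ∀ k < ℓ, IsCriticalEdge A lam (c k) (c (k+1)) := by
    intro ℓ c h1 h2 hw hcl hr k hk
    refine ⟨ℓ, c, k, ⟨h1, hcl, hw⟩, ?_, hk, rfl, rfl⟩
    have : circuitWeight A ℓ c = wt A ℓ c := rfl
    rw [this, wt_eq_coe hw, hr]
  -- strict gap for short closed walks through a non-critical edge
  set NS := meanSet A (fun ℓ c => ∃ k < ℓ, ¬ IsCriticalEdge A lam (c k) (c (k+1))) with hNS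
  have hNSlt : ∀ y ∈ NS, y < lam := by
    intro y hy
    obtain ⟨ℓ, c, h1, h2, hw, hcl, hP, hval⟩ := of_mem_meanSet hy
    obtain ⟨k, hk, hnc⟩ := hP
    have hl : (0 : ℝ) < (ℓ : ℝ) := by exact_mod_cast h1
    have hle := hmean_lam ℓ c h1 h2 hw hcl
    have hlt : rwt A ℓ c < ℓ * lam := by
      rcases lt_or_eq_of_le hle with h | h
      · exact h
      · exact absurd (hall_crit ℓ c h1 h2 hw hcl h k hk) hnc
    rw [hval, div_lt_iff₀ hl]
    linarith
  have hδ : ∃ δ : ℝ, 0 < δ ∧ ∀ y ∈ NS, y ≤ lam - δ := by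
    rcases NS.eq_empty_or_nonempty with h | h
    · exact ⟨1, one_pos, by simp [h]⟩
    · refine ⟨lam - NS.max' h, by linarith [hNSlt _ (NS.max'_mem h)], fun y hy => ?_⟩
      linarith [Finset.le_max' NS y hy]
  obtain ⟨δ, hδpos, hδle⟩ := hδ
  have hnR : (0 : ℝ) < (n : ℝ) := by exact_mod_cast hn
  set ε := δ / (2 * n) with hε
  have hεpos : 0 < ε := by positivity
  have hnε : (n : ℝ) * ε ≤ δ / 2 := le_of_eq (by rw [hε]; field_simp)
  -- the perturbed matrix
  set A' : Fin n → Fin n → WithBot ℝ :=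
    fun i j => if IsCriticalEdge A lam i j then A i j else A i j + ((ε : ℝ) : WithBot ℝ) with hA'
  have hA'bot : ∀ i j, A' i j = ⊥ ↔ A i j = ⊥ := by
    intro i j
    rw [hA']
    simp only
    split
    · exact Iff.rfl
    · constructor
      · intro h
        rcases WithBot.add_eq_bot.1 h with h | h
        · exact h
        · exact absurd h WithBot.coe_ne_bot
      · intro h
        rw [h, WithBot.bot_add]
  have hA'ra : ∀ i j, A i j ≠ ⊥ →
      ra A' i j = ra A i j + (if ¬ IsCriticalEdge A lam i j then ε else 0) := by
    intro i j hne
    rw [hA']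
    unfold ra
    simp only
    by_cases hcr : IsCriticalEdge A lam i j
    · rw [if_pos hcr, if_neg (not_not_intro hcr), add_zero]
    · rw [if_neg hcr, if_pos hcr, coe_ra hne, ← WithBot.coe_add]
      rfl
  have hA'walk : ∀ ℓ c, IsWalk A' ℓ c ↔ IsWalk A ℓ c := by
    intro ℓ c
    constructor <;> intro h k hk <;> have := h k hk
    · exact fun hb => this ((hA'bot _ _).2 hb)
    · exact fun hb => this ((hA'bot _ _).1 hb)
  have hA'rwt : ∀ ℓ c, IsWalk A ℓ c → rwt A' ℓ c = rwt A ℓ c +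
      ((Finset.range ℓ).filter (fun k => ¬ IsCriticalEdge A lam (c k) (c (k+1)))).card * ε := by
    intro ℓ c hw
    unfold rwt
    have h1 : ∀ k ∈ Finset.range ℓ, ra A' (c k) (c (k+1))
        = ra A (c k) (c (k+1)) + (if ¬ IsCriticalEdge A lam (c k) (c (k+1)) then ε else 0) := by
      intro k hk
      exact hA'ra _ _ (hw k (Finset.mem_range.1 hk))
    rw [Finset.sum_congr rfl h1, Finset.sum_add_distrib]
    congr 1
    rw [← Finset.sum_filter, Finset.sum_const, nsmul_eq_mul]
  have hA'mean : ∀ ℓ c, 1 ≤ ℓ → ℓ ≤ n → IsWalk A' ℓ c → c ℓ = c 0 → rwt A' ℓ c ≤ ℓ * lam := by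
    intro ℓ c h1 h2 hw' hcl
    have hw := (hA'walk ℓ c).1 hw'
    rw [hA'rwt ℓ c hw]
    set m := ((Finset.range ℓ).filter (fun k => ¬ IsCriticalEdge A lam (c k) (c (k+1)))).card with hm
    have hmℓ : m ≤ ℓ := le_trans (Finset.card_filter_le _ _) (le_of_eq (Finset.card_range ℓ))
    rcases Nat.eq_zero_or_pos m with h0 | h0
    · rw [h0]
      push_cast
      have := hmean_lam ℓ c h1 h2 hw hcl
      linarith
    · have hex : ∃ k < ℓ, ¬ IsCriticalEdge A lam (c k) (c (k+1)) := by
        have : (Finset.range ℓ).filter (fun k => ¬ IsCriticalEdge A lam (c k) (c (k+1))) ≠ ∅ := by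
          intro hemp
          rw [hm, hemp] at h0
          simp at h0
        obtain ⟨k, hk⟩ := Finset.nonempty_iff_ne_empty.2 this
        rw [Finset.mem_filter, Finset.mem_range] at hk
        exact ⟨k, hk.1, hk.2⟩
      have hmem : rwt A ℓ c / ℓ ∈ NS := by
        refine mem_meanSet h1 h2 hw hcl ?_
        obtain ⟨k, hk, hnc⟩ := hex
        refine ⟨k, hk, ?_⟩
        rw [extd_res c (by omega), extd_res c (by omega)]
        exact hnc
      have hl : (0 : ℝ) < (ℓ : ℝ) := by exact_mod_cast h1
      have hyd := hδle _ hmem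
      rw [div_le_iff₀ hl] at hyd
      have hcast : (m : ℝ) ≤ (n : ℝ) := by exact_mod_cast le_trans hmℓ h2
      have hmul : (m : ℝ) * ε ≤ (n : ℝ) * ε := by nlinarith
      have hl1 : (1 : ℝ) ≤ (ℓ : ℝ) := by exact_mod_cast h1
      nlinarith
  have h0' : H0 (fun i j => A' i j + ((-lam : ℝ) : WithBot ℝ)) := H0_of_mean_le hn A' lam hA'mean
  set u' : Fin n → Fin n → WithBot ℝ := fun i j => A' i j + ((-lam : ℝ) : WithBot ℝ) with hu'
  set xW : Fin n → WithBot ℝ := supvec u' (fun _ => (0 : WithBot ℝ)) with hxW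
  have hxW0 : ∀ j, (0 : WithBot ℝ) ≤ xW j := by
    intro j
    calc (0 : WithBot ℝ) = (bell u')^[0] (fun _ => (0 : WithBot ℝ)) j := rfl
      _ ≤ xW j := iter_le_supvec_of_le (by omega) j
  set x : Fin n → ℝ := fun j => (xW j).unbotD 0 with hx
  have hxWc : ∀ j, xW j = ((x j : ℝ) : WithBot ℝ) := by
    intro j
    have hne : xW j ≠ ⊥ := by
      intro hb
      have := hxW0 j
      rw [hb] at this
      simp at this
    rw [hx]
    cases hc : xW j with
    | bot => exact absurd hc hne
    | coe r => simp [hc]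
  have hkey : ∀ i j, u' i j + xW j ≤ xW i := by
    intro i j
    calc u' i j + xW j ≤ bell u' xW i := le_bell u' xW i j
      _ ≤ xW i := bell_supvec_le hn u' _ h0' i
  -- real inequalities on genuine edges
  have hreal : ∀ i j, A i j ≠ ⊥ →
      ra A i j + (if ¬ IsCriticalEdge A lam i j then ε else 0) + x j ≤ lam + x i := by
    intro i j hne
    have h := hkey i j
    rw [hu'] at h
    simp only at h
    have hA'ne : A' i j ≠ ⊥ := fun hb => hne ((hA'bot i j).1 hb)
    rw [coe_ra hA'ne, hxWc i, hxWc j, ← WithBot.coe_add, ← WithBot.coe_add] at h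
    have := WithBot.coe_le_coe.1 h
    rw [hA'ra i j hne] at this
    linarith
  have hle_all : ∀ i j, A i j + ((x j : ℝ) : WithBot ℝ) ≤ ((lam + x i : ℝ) : WithBot ℝ) := by
    intro i j
    by_cases hne : A i j = ⊥
    · rw [hne, WithBot.bot_add]
      exact bot_le
    · rw [coe_ra hne, ← WithBot.coe_add]
      refine WithBot.coe_le_coe.2 ?_
      have := hreal i j hne
      by_cases hcr : IsCriticalEdge A lam i j
      · rw [if_neg (not_not_intro hcr), add_zero] at this
        linarith
      · rw [if_pos hcr] at this
        linarith
  -- equality on critical edges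
  have hcrit_eq : ∀ i j, IsCriticalEdge A lam i j → ra A i j + x j = lam + x i := by
    intro i j hcr
    obtain ⟨ℓ, c, k, ⟨hl1, hcl, hedge⟩, hwt, hkl, hci, hcj⟩ := hcr
    have hrwt : rwt A ℓ c = ℓ * lam := by
      have h1 : circuitWeight A ℓ c = wt A ℓ c := rfl
      rw [h1, wt_eq_coe hedge] at hwt
      exact_mod_cast hwt
    have hterm : ∀ m ∈ Finset.range ℓ,
        (0 : ℝ) ≤ (lam + x (c m)) - (ra A (c m) (c (m+1)) + x (c (m+1))) := by
      intro m hm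
      rw [Finset.mem_range] at hm
      have h := hle_all (c m) (c (m+1))
      rw [coe_ra (hedge m hm), ← WithBot.coe_add] at h
      have := WithBot.coe_le_coe.1 h
      linarith
    have hsum : ∑ m ∈ Finset.range ℓ,
        ((lam + x (c m)) - (ra A (c m) (c (m+1)) + x (c (m+1)))) = 0 := by
      have he : ∀ m ∈ Finset.range ℓ,
          (lam + x (c m)) - (ra A (c m) (c (m+1)) + x (c (m+1)))
          = lam - ra A (c m) (c (m+1)) + (x (c m) - x (c (m+1))) := by
        intro m hm
        ring
      rw [Finset.sum_congr rfl he, Finset.sum_add_distrib,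
        Finset.sum_range_sub' (fun m => x (c m)) ℓ, Finset.sum_sub_distrib,
        Finset.sum_const, Finset.card_range, hcl]
      have : ∑ m ∈ Finset.range ℓ, ra A (c m) (c (m+1)) = rwt A ℓ c := rfl
      rw [this, hrwt]
      push_cast
      ring
    have hzero := (Finset.sum_eq_zero_iff_of_nonneg hterm).1 hsum k (Finset.mem_range.2 hkl)
    rw [hci, hcj] at hzero
    linarith
  refine ⟨x, fun i j => ⟨fun hcr => ?_, fun hncr => ?_⟩⟩
  · have hne : A i j ≠ ⊥ := by
      obtain ⟨ℓ, c, k, ⟨hl1, hcl, hedge⟩, hwt, hkl, hci, hcj⟩ := hcr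
      rw [← hci, ← hcj]
      exact hedge k hkl
    rw [coe_ra hne, ← WithBot.coe_add]
    exact WithBot.coe_inj.2 (hcrit_eq i j hcr)
  · by_cases hne : A i j = ⊥
    · rw [hne, WithBot.bot_add]
      exact WithBot.bot_lt_coe _
    · rw [coe_ra hne, ← WithBot.coe_add]
      refine WithBot.coe_lt_coe.2 ?_
      have := hreal i j hne
      rw [if_pos hncr] at this
      linarith
end

section
/- Let A ∈ ℝ_max^{n×n} be irreducible, i.e., the digraph G(A) is strongly connected. Then A has a unique eigenvalue: there exists λ ∈ ℝ_max that is an eigenvalue of A, and any two eigenvalues of A are equal. -/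
open Filter Topology

lemma wb_add_neg_cancel (a : WithBot ℝ) (r : ℝ) : a + ↑r + ↑(-r) = a := by
  induction a with
  | bot => simp
  | coe a => rw [← WithBot.coe_add, ← WithBot.coe_add]; norm_num

lemma wb_add_le_add_right {a b : WithBot ℝ} (h : a ≤ b) (c : WithBot ℝ) : a + c ≤ b + c :=
  add_le_add_left h c

lemma wb_add_le_add_left {a b : WithBot ℝ} (h : a ≤ b) (c : WithBot ℝ) : c + a ≤ c + b :=
  add_le_add_right h c

lemma wsum_ne_bot {ι : Type*} {s : Finset ι} {f : ι → WithBot ℝ} (h : ∀ i ∈ s, f i ≠ ⊥) :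
    ∑ i ∈ s, f i ≠ ⊥ := by
  induction s using Finset.cons_induction with
  | empty => simp
  | cons a s ha ih =>
    rw [Finset.sum_cons]
    simp only [ne_eq, WithBot.add_eq_bot, not_or]
    exact ⟨h a (Finset.mem_cons_self a s), ih fun i hi => h i (Finset.mem_cons.2 (Or.inr hi))⟩

lemma wsum_term_ne_bot {ι : Type*} {s : Finset ι} {f : ι → WithBot ℝ}
    (h : ∑ i ∈ s, f i ≠ ⊥) : ∀ i ∈ s, f i ≠ ⊥ := by
  classical
  intro i hi hbot
  apply h
  rw [Finset.sum_eq_sum_sdiff_singleton_add hi f, hbot]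
  simp

lemma sup_add_coe {ι : Type*} (s : Finset ι) (f : ι → WithBot ℝ) (r : ℝ) :
    (s.sup fun i => f i + ↑r) = s.sup f + ↑r := by
  apply le_antisymm
  · exact Finset.sup_le fun i hi =>
      wb_add_le_add_right (Finset.le_sup (f := f) hi) _
  · have h1 : s.sup f ≤ (s.sup fun i => f i + ↑r) + ↑(-r) := by
      apply Finset.sup_le
      intro i hi
      calc f i = f i + ↑r + ↑(-r) := (wb_add_neg_cancel _ _).symm
        _ ≤ _ := wb_add_le_add_right (Finset.le_sup (f := fun i => f i + ↑r) hi) _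
    calc s.sup f + ↑r ≤ ((s.sup fun i => f i + ↑r) + ↑(-r)) + ↑r := wb_add_le_add_right h1 _
      _ = _ := by rw [add_assoc, ← WithBot.coe_add]; norm_num

lemma sup_add_any {ι : Type*} (s : Finset ι) (hs : s.Nonempty) (f : ι → WithBot ℝ)
    (a : WithBot ℝ) : (s.sup fun i => f i + a) = s.sup f + a := by
  induction a with
  | bot =>
    simp only [WithBot.add_bot]
    apply le_antisymm
    · exact Finset.sup_le fun i _ => bot_le
    · exact bot_le
  | coe r => exact sup_add_coe s f r

lemma add_sup_any {ι : Type*} (s : Finset ι) (hs : s.Nonempty) (f : ι → WithBot ℝ)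
    (a : WithBot ℝ) : (s.sup fun i => a + f i) = a + s.sup f := by
  rw [add_comm a, ← sup_add_any s hs f a]
  simp only [add_comm]

lemma tmul_assoc {n : ℕ} (hn : 1 ≤ n) (A B C : Fin n → Fin n → WithBot ℝ) :
    tmul (tmul A B) C = tmul A (tmul B C) := by
  have hne : (Finset.univ : Finset (Fin n)).Nonempty := ⟨⟨0, hn⟩, Finset.mem_univ _⟩
  funext i j
  show (Finset.univ.sup fun k => tmul A B i k + C k j)
      = Finset.univ.sup fun k => A i k + tmul B C k j
  have L : (Finset.univ.sup fun k => tmul A B i k + C k j)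
      = Finset.univ.sup fun k => Finset.univ.sup fun m => A i m + B m k + C k j := by
    apply Finset.sup_congr rfl
    intro k _
    exact (sup_add_any Finset.univ hne (fun m => A i m + B m k) (C k j)).symm
  have R : (Finset.univ.sup fun k => A i k + tmul B C k j)
      = Finset.univ.sup fun k => Finset.univ.sup fun m => A i k + (B k m + C m j) := by
    apply Finset.sup_congr rfl
    intro k _
    exact (add_sup_any Finset.univ hne (fun m => B k m + C m j) (A i k)).symm
  rw [L, R, Finset.sup_comm]
  apply Finset.sup_congr rfl
  intro m _
  apply Finset.sup_congr rfl
  intro k _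
  rw [add_assoc]

lemma tmul_tpow {n : ℕ} (hn : 1 ≤ n) (A : Fin n → Fin n → WithBot ℝ) (k : ℕ) :
    tmul A (tpow A k) = tpow A (k + 1) := by
  induction k with
  | zero =>
    funext i j
    show (Finset.univ.sup fun m => A i m + tpow A 0 m j)
        = Finset.univ.sup fun m => tpow A 0 i m + A m j
    apply le_antisymm
    · apply Finset.sup_le
      intro m _
      by_cases h : m = j
      · subst h
        have h1 : A i m + tpow A 0 m m = tpow A 0 i i + A i m := by
          simp [tpow, add_zero, zero_add]
        rw [h1]
        exact Finset.le_sup (f := fun m' => tpow A 0 i m' + A m' m) (Finset.mem_univ i)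
      · simp [tpow, h]
    · apply Finset.sup_le
      intro m _
      by_cases h : i = m
      · subst h
        have h1 : tpow A 0 i i + A i j = A i j + tpow A 0 j j := by
          simp [tpow, add_zero, zero_add]
        rw [h1]
        exact Finset.le_sup (f := fun m' => A i m' + tpow A 0 m' j) (Finset.mem_univ j)
      · simp [tpow, h]
  | succ k ih =>
    show tmul A (tmul (tpow A k) A) = tmul (tpow A (k+1)) A
    rw [← tmul_assoc hn, ih]

lemma tpow_ge_path {n : ℕ} (B : Fin n → Fin n → WithBot ℝ) (c : ℕ → Fin n) (ℓ : ℕ) :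
    ∑ k ∈ Finset.range ℓ, B (c k) (c (k+1)) ≤ tpow B ℓ (c 0) (c ℓ) := by
  induction ℓ with
  | zero => simp [tpow]
  | succ m ih =>
    rw [Finset.sum_range_succ]
    calc ∑ k ∈ Finset.range m, B (c k) (c (k+1)) + B (c m) (c (m+1))
        ≤ tpow B m (c 0) (c m) + B (c m) (c (m+1)) := wb_add_le_add_right ih _
      _ ≤ _ := Finset.le_sup (f := fun k => tpow B m (c 0) k + B k (c (m+1)))
          (Finset.mem_univ (c m))

lemma tpow_attained {n : ℕ} (hn : 1 ≤ n) (B : Fin n → Fin n → WithBot ℝ) :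
    ∀ (m : ℕ) (i j : Fin n), tpow B m i j ≠ ⊥ →
    ∃ c : ℕ → Fin n, c 0 = i ∧ c m = j ∧
      tpow B m i j = ∑ k ∈ Finset.range m, B (c k) (c (k+1)) := by
  intro m
  induction m with
  | zero =>
    intro i j h
    by_cases hij : i = j
    · subst hij
      exact ⟨fun _ => i, rfl, rfl, by simp [tpow]⟩
    · exact absurd (by simp [tpow, hij]) h
  | succ m ih =>
    intro i j h
    have hne : (Finset.univ : Finset (Fin n)).Nonempty := ⟨⟨0, hn⟩, Finset.mem_univ _⟩
    obtain ⟨k, _, hk⟩ := Finset.exists_mem_eq_sup Finset.univ hne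
      (fun k => tpow B m i k + B k j)
    have heq : tpow B (m+1) i j = tpow B m i k + B k j := hk
    rw [heq] at h
    rw [ne_eq, WithBot.add_eq_bot, not_or] at h
    obtain ⟨c', hc0, hcm, hval⟩ := ih i k h.1
    refine ⟨fun t => if t = m+1 then j else c' t, by simp [hc0], by simp, ?_⟩
    rw [Finset.sum_range_succ]
    have h1 : ∀ t ∈ Finset.range m,
        B (if t = m+1 then j else c' t) (if t+1 = m+1 then j else c' (t+1))
        = B (c' t) (c' (t+1)) := by
      intro t ht
      rw [Finset.mem_range] at ht
      rw [if_neg (by omega), if_neg (by omega)]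
    rw [Finset.sum_congr rfl h1, heq, hval]
    congr 1
    simp [hcm]

lemma exists_repeat {n : ℕ} (c : ℕ → Fin n) : ∃ p q, p < q ∧ q ≤ n ∧ c p = c q := by
  have := Fintype.exists_ne_map_eq_of_card_lt (fun t : Fin (n+1) => c t)
    (by simp)
  obtain ⟨x, y, hxy, hc⟩ := this
  rcases lt_or_gt_of_ne hxy with h | h
  · exact ⟨x, y, h, Nat.lt_succ_iff.mp y.2, hc⟩
  · exact ⟨y, x, h, Nat.lt_succ_iff.mp x.2, hc.symm⟩

lemma circuit_short {n : ℕ} (A : Fin n → Fin n → WithBot ℝ)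
    (h : ∃ ℓ c, IsCircuit A ℓ c) : ∃ ℓ c, IsCircuit A ℓ c ∧ ℓ ≤ n := by
  obtain ⟨ℓ, c, h1, h2, h3⟩ := h
  by_cases hln : ℓ ≤ n
  · exact ⟨ℓ, c, ⟨h1, h2, h3⟩, hln⟩
  · push_neg at hln
    obtain ⟨p, q, hpq, hqn, hcpq⟩ := exists_repeat c
    refine ⟨q - p, fun k => c (p + k), ⟨by omega, ?_, ?_⟩, by omega⟩
    · show c (p + (q - p)) = c (p + 0)
      rw [Nat.add_sub_cancel' (le_of_lt hpq), Nat.add_zero]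
      exact hcpq.symm
    · intro k hk
      have := h3 (p + k) (by omega)
      rwa [show p + k + 1 = p + (k + 1) from by omega] at this

lemma telescope {n : ℕ} (x : Fin n → WithBot ℝ) (c : ℕ → Fin n) {ℓ : ℕ}
    (hℓ : 1 ≤ ℓ) (hc : c ℓ = c 0) :
    ∑ k ∈ Finset.range ℓ, x (c (k+1)) = ∑ k ∈ Finset.range ℓ, x (c k) := by
  obtain ⟨m, rfl⟩ : ∃ m, ℓ = m + 1 := ⟨ℓ - 1, by omega⟩
  rw [Finset.sum_range_succ, Finset.sum_range_succ' (fun k => x (c k)) m, hc]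

lemma nsmul_bot_wb {ℓ : ℕ} (h : 1 ≤ ℓ) : (ℓ • (⊥ : WithBot ℝ)) = ⊥ := by
  obtain ⟨m, rfl⟩ : ∃ m, ℓ = m + 1 := ⟨ℓ - 1, by omega⟩
  rw [succ_nsmul, WithBot.add_bot]

lemma eigvec_ne_bot {n : ℕ} (A : Fin n → Fin n → WithBot ℝ)
    (hirr : StronglyConnected A) {lam : WithBot ℝ} {x : Fin n → WithBot ℝ}
    (hx : x ≠ botVec n) (he : ∀ i, tdot (A i) x = lam + x i) : ∀ i, x i ≠ ⊥ := by
  have hj : ∃ j, x j ≠ ⊥ := by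
    by_contra hc
    push_neg at hc
    exact hx (funext fun i => hc i)
  obtain ⟨j, hj⟩ := hj
  intro i
  obtain ⟨ℓ, c, hc0, hcl, hce⟩ := hirr i j
  have key : ∀ k, k ≤ ℓ → x (c (ℓ - k)) ≠ ⊥ := by
    intro k
    induction k with
    | zero => intro _; simpa [hcl]
    | succ k ih =>
      intro hk
      set t := ℓ - (k + 1) with ht
      have ht1 : t + 1 = ℓ - k := by omega
      have hedge : A (c t) (c (t + 1)) ≠ ⊥ := hce t (by omega)
      have hxt1 : x (c (t + 1)) ≠ ⊥ := by rw [ht1]; exact ih (by omega)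
      have hle : A (c t) (c (t + 1)) + x (c (t + 1)) ≤ lam + x (c t) := by
        rw [← he (c t)]
        exact Finset.le_sup (f := fun m => A (c t) m + x m) (Finset.mem_univ (c (t+1)))
      have hne : lam + x (c t) ≠ ⊥ := by
        intro hb
        rw [hb, le_bot_iff, WithBot.add_eq_bot] at hle
        tauto
      rw [ne_eq, WithBot.add_eq_bot, not_or] at hne
      exact hne.2
  have := key ℓ le_rfl
  simpa [hc0] using this

lemma eigen_circuit_le {n : ℕ} {A : Fin n → Fin n → WithBot ℝ}
    {lam : WithBot ℝ} {x : Fin n → WithBot ℝ} (hxb : ∀ i, x i ≠ ⊥)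
    (he : ∀ i, tdot (A i) x = lam + x i) {ℓ : ℕ} {c : ℕ → Fin n}
    (hc : IsCircuit A ℓ c) : circuitWeight A ℓ c ≤ ℓ • lam := by
  obtain ⟨hl1, hcl, hce⟩ := hc
  have step : ∀ k ∈ Finset.range ℓ,
      A (c k) (c (k+1)) + x (c (k+1)) ≤ lam + x (c k) := by
    intro k _
    rw [← he (c k)]
    exact Finset.le_sup (f := fun m => A (c k) m + x m) (Finset.mem_univ (c (k+1)))
  have hsum := Finset.sum_le_sum step
  rw [Finset.sum_add_distrib, Finset.sum_add_distrib, Finset.sum_const,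
    Finset.card_range, telescope x c hl1 hcl] at hsum
  have hS : (∑ k ∈ Finset.range ℓ, x (c k)) ≠ ⊥ :=
    wsum_ne_bot fun k _ => hxb (c k)
  exact (WithBot.add_le_add_iff_right hS).mp hsum

lemma eigen_circuit_ge {n : ℕ} (hn : 1 ≤ n) {A : Fin n → Fin n → WithBot ℝ}
    {lam : WithBot ℝ} (hlam : lam ≠ ⊥) {x : Fin n → WithBot ℝ} (hxb : ∀ i, x i ≠ ⊥)
    (he : ∀ i, tdot (A i) x = lam + x i) :
    ∃ ℓ c, IsCircuit A ℓ c ∧ (ℓ • lam : WithBot ℝ) ≤ circuitWeight A ℓ c := by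
  have hne : (Finset.univ : Finset (Fin n)).Nonempty := ⟨⟨0, hn⟩, Finset.mem_univ _⟩
  have hsel : ∀ i : Fin n, ∃ m : Fin n, A i m + x m = lam + x i ∧ A i m ≠ ⊥ := by
    intro i
    obtain ⟨m, _, hm⟩ := Finset.exists_mem_eq_sup Finset.univ hne
      (fun m => A i m + x m)
    have heq : A i m + x m = lam + x i := by rw [← hm, ← he i]; rfl
    refine ⟨m, heq, ?_⟩
    intro hb
    have : lam + x i = ⊥ := by rw [← heq, hb, WithBot.bot_add]
    rw [WithBot.add_eq_bot] at this
    rcases this with h | h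
    · exact hlam h
    · exact hxb i h
  choose j hj hjne using hsel
  set c : ℕ → Fin n := fun k => j^[k] ⟨0, hn⟩ with hcdef
  have hcsucc : ∀ k, c (k + 1) = j (c k) := fun k => Function.iterate_succ_apply' j k _
  obtain ⟨p, q, hpq, hqn, hcpq⟩ := exists_repeat c
  set ℓ := q - p with hldef
  set c' : ℕ → Fin n := fun k => c (p + k) with hc'def
  have hcirc : IsCircuit A ℓ c' := by
    refine ⟨by omega, ?_, ?_⟩
    · show c (p + (q - p)) = c (p + 0)
      rw [Nat.add_sub_cancel' (le_of_lt hpq), Nat.add_zero]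
      exact hcpq.symm
    · intro k _
      show A (c (p + k)) (c (p + k + 1)) ≠ ⊥
      rw [hcsucc (p + k)]
      exact hjne _
  have hstep : ∀ k ∈ Finset.range ℓ,
      A (c' k) (c' (k+1)) + x (c' (k+1)) = lam + x (c' k) := by
    intro k _
    show A (c (p + k)) (c (p + (k + 1))) + x (c (p + (k+1))) = lam + x (c (p + k))
    rw [show p + (k + 1) = (p + k) + 1 from by omega, hcsucc (p + k)]
    exact hj (c (p + k))
  have hsum : ∑ k ∈ Finset.range ℓ, (A (c' k) (c' (k+1)) + x (c' (k+1)))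
      = ∑ k ∈ Finset.range ℓ, (lam + x (c' k)) := Finset.sum_congr rfl hstep
  rw [Finset.sum_add_distrib, Finset.sum_add_distrib, Finset.sum_const,
    Finset.card_range, telescope x c' (by omega) hcirc.2.1] at hsum
  have hS : (∑ k ∈ Finset.range ℓ, x (c' k)) ≠ ⊥ :=
    wsum_ne_bot fun k _ => hxb (c' k)
  refine ⟨ℓ, c', hcirc, le_of_eq ?_⟩
  have := (WithBot.add_le_add_iff_right hS).mp (le_of_eq hsum)
  have := (WithBot.add_le_add_iff_right hS).mp (le_of_eq hsum.symm)
  exact le_antisymm (by assumption) (by assumption)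

lemma eigen_unique {n : ℕ} (hn : 1 ≤ n) (A : Fin n → Fin n → WithBot ℝ)
    (hirr : StronglyConnected A) :
    ∀ lam mu : WithBot ℝ, IsEigenvalue A lam → IsEigenvalue A mu → lam = mu := by
  have main : ∀ lam mu : WithBot ℝ, lam ≠ ⊥ →
      IsEigenvalue A lam → IsEigenvalue A mu → lam ≤ mu := by
    intro lam mu hlam ⟨x, hx, hex⟩ ⟨y, hy, hey⟩
    have hxb := eigvec_ne_bot A hirr hx hex
    have hyb := eigvec_ne_bot A hirr hy hey
    obtain ⟨ℓ, c, hcirc, hge⟩ := eigen_circuit_ge hn hlam hxb hex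
    have hle := eigen_circuit_le hyb hey hcirc
    have h2 : (ℓ • lam : WithBot ℝ) ≤ ℓ • mu := le_trans hge hle
    obtain ⟨a, rfl⟩ : ∃ a : ℝ, lam = ↑a := ⟨lam.unbot hlam, (WithBot.coe_unbot _ _).symm⟩
    induction mu with
    | bot =>
      rw [nsmul_bot_wb hcirc.1, le_bot_iff, ← WithBot.coe_nsmul] at h2
      exact absurd h2 (WithBot.coe_ne_bot)
    | coe b =>
      rw [← WithBot.coe_nsmul, ← WithBot.coe_nsmul, WithBot.coe_le_coe,
        nsmul_eq_mul, nsmul_eq_mul] at h2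
      rw [WithBot.coe_le_coe]
      have hl0 : (0 : ℝ) < (ℓ : ℝ) := by
        have := hcirc.1; positivity
      nlinarith
  intro lam mu h1 h2
  by_cases hlam : lam = ⊥
  · by_cases hmu : mu = ⊥
    · rw [hlam, hmu]
    · exact absurd (main mu lam hmu h2 h1) (by rw [hlam]; simp [le_bot_iff, hmu])
  · by_cases hmu : mu = ⊥
    · exact absurd (main lam mu hlam h1 h2) (by rw [hmu]; simp [le_bot_iff, hlam])
    · exact le_antisymm (main lam mu hlam h1 h2) (main mu lam hmu h2 h1)

lemma exists_eigen {n : ℕ} (hn : 1 ≤ n) (A : Fin n → Fin n → WithBot ℝ) (lam : ℝ)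
    (hub : ∀ ℓ c, IsCircuit A ℓ c → ℓ ≤ n → circuitWeight A ℓ c ≤ ↑((ℓ : ℝ) * lam))
    (hcrit : ∃ ℓ c, IsCircuit A ℓ c ∧ ℓ ≤ n ∧ circuitWeight A ℓ c = ↑((ℓ : ℝ) * lam)) :
    IsEigenvalue A ↑lam := by
  classical
  have hne : (Finset.univ : Finset (Fin n)).Nonempty := ⟨⟨0, hn⟩, Finset.mem_univ _⟩
  set B : Fin n → Fin n → WithBot ℝ := fun i j => A i j + ↑(-lam) with hBdef
  have hBbot : ∀ i j, B i j = ⊥ ↔ A i j = ⊥ := by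
    intro i j
    simp [hBdef, WithBot.add_eq_bot]
  have cwB : ∀ (ℓ : ℕ) (c : ℕ → Fin n),
      circuitWeight B ℓ c = circuitWeight A ℓ c + ↑(-((ℓ : ℝ) * lam)) := by
    intro ℓ c
    show ∑ k ∈ Finset.range ℓ, (A (c k) (c (k+1)) + ↑(-lam)) = _
    rw [Finset.sum_add_distrib, Finset.sum_const, Finset.card_range]
    congr 1
    rw [← WithBot.coe_nsmul, WithBot.coe_inj, nsmul_eq_mul]
    ring
  have hubB : ∀ ℓ c, IsCircuit A ℓ c → ℓ ≤ n → circuitWeight B ℓ c ≤ 0 := by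
    intro ℓ c hc hl
    rw [cwB]
    calc circuitWeight A ℓ c + ↑(-((ℓ:ℝ) * lam))
        ≤ ↑((ℓ:ℝ) * lam) + ↑(-((ℓ:ℝ) * lam)) := wb_add_le_add_right (hub ℓ c hc hl) _
      _ = 0 := by rw [← WithBot.coe_add]; norm_num
  obtain ⟨ℓ0, c0, hcirc0, hl0n, hw0⟩ := hcrit
  set s : Fin n := c0 0 with hsdef
  have hcritB : circuitWeight B ℓ0 c0 = 0 := by
    rw [cwB, hw0, ← WithBot.coe_add]
    norm_num
  set x : Fin n → WithBot ℝ :=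
    fun i => (Finset.range (n+1)).sup fun ℓ => tpow B ℓ i s with hxdef
  -- x s ≥ 0
  have hxs : (0 : WithBot ℝ) ≤ x s := by
    have h0 : tpow B 0 s s = 0 := by simp [tpow]
    rw [← h0]
    exact Finset.le_sup (f := fun ℓ => tpow B ℓ s s) (Finset.mem_range.2 (by omega))
  -- critical circuit: 0 ≤ tpow B ℓ0 s s
  have hcritpow : (0 : WithBot ℝ) ≤ tpow B ℓ0 s s := by
    rw [← hcritB]
    have := tpow_ge_path B c0 ℓ0
    rwa [hcirc0.2.1, ← hsdef] at this
  -- the splice bound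
  have hD : ∀ i, tpow B (n+1) i s ≤ x i := by
    intro i
    by_cases hb : tpow B (n+1) i s = ⊥
    · rw [hb]; exact bot_le
    obtain ⟨c, hc0, hcn, hval⟩ := tpow_attained hn B (n+1) i s hb
    set w : ℕ → WithBot ℝ := fun k => B (c k) (c (k+1)) with hwdef
    have hterm : ∀ k ∈ Finset.range (n+1), w k ≠ ⊥ :=
      wsum_term_ne_bot (by rw [← hval]; exact hb)
    obtain ⟨p, q, hpq, hqn, hcpq⟩ := exists_repeat c
    set m' : ℕ := (n+1) - (q - p) with hm'def
    have hm1 : 1 ≤ m' := by omega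
    have hm2 : m' ≤ n := by omega
    have hpm : p < m' := by omega
    set c'' : ℕ → Fin n := fun t => if t ≤ p then c t else c (t + (q - p)) with hc''def
    -- cycle is a circuit
    have hcyc : IsCircuit A (q - p) (fun k => c (p + k)) := by
      refine ⟨by omega, ?_, ?_⟩
      · show c (p + (q - p)) = c (p + 0)
        rw [Nat.add_sub_cancel' (le_of_lt hpq), Nat.add_zero]
        exact hcpq.symm
      · intro k hk
        show A (c (p + k)) (c (p + (k + 1))) ≠ ⊥
        intro hA
        have hBk : w (p + k) ≠ ⊥ := hterm (p + k) (Finset.mem_range.2 (by omega))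
        apply hBk
        show B (c (p + k)) (c (p + k + 1)) = ⊥
        rw [show p + k + 1 = p + (k + 1) from by omega]
        exact (hBbot _ _).2 hA
    have hcycW : circuitWeight B (q - p) (fun k => c (p + k)) ≤ 0 := by
      have hq : q - p ≤ n := by omega
      refine hubB _ _ hcyc hq
    have hcycW' : ∑ t ∈ Finset.Ico p q, w t ≤ 0 := by
      rw [Finset.sum_Ico_eq_sum_range]
      have : ∀ k ∈ Finset.range (q - p), w (p + k)
          = B (c (p + k)) (c (p + (k+1))) := by
        intro k _
        show B (c (p + k)) (c (p + k + 1)) = B (c (p + k)) (c (p + (k+1)))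
        rw [show p + k + 1 = p + (k + 1) from by omega]
      rw [Finset.sum_congr rfl this]
      exact hcycW
    -- spliced sum
    have hsplice : ∑ t ∈ Finset.range m', B (c'' t) (c'' (t+1))
        = ∑ t ∈ Finset.range (n+1) \ Finset.Ico p q, w t := by
      apply Finset.sum_nbij' (fun t => if t < p then t else t + (q - p))
        (fun t => if t < p then t else t - (q - p))
      · intro a ha
        rw [Finset.mem_range] at ha
        simp only [Finset.mem_sdiff, Finset.mem_range, Finset.mem_Ico]
        split <;> omega
      · intro a ha
        simp only [Finset.mem_sdiff, Finset.mem_range, Finset.mem_Ico] at ha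
        rw [Finset.mem_range]
        split <;> omega
      · intro a ha
        rw [Finset.mem_range] at ha
        by_cases h : a < p
        · rw [if_pos h, if_pos h]
        · rw [if_neg h, if_neg (by omega : ¬ a + (q - p) < p)]
          omega
      · intro a ha
        simp only [Finset.mem_sdiff, Finset.mem_range, Finset.mem_Ico] at ha
        by_cases h : a < p
        · rw [if_pos h, if_pos h]
        · rw [if_neg h, if_neg (by omega : ¬ a - (q - p) < p)]
          omega
      · intro t ht
        rw [Finset.mem_range] at ht
        show B (if t ≤ p then c t else c (t + (q - p)))
            (if t + 1 ≤ p then c (t + 1) else c (t + 1 + (q - p)))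
            = w (if t < p then t else t + (q - p))
        rcases lt_trichotomy t p with h | h | h
        · rw [if_pos (le_of_lt h), if_pos (by omega : t + 1 ≤ p), if_pos h]
        · rw [if_pos (le_of_eq h), if_neg (by omega : ¬ t + 1 ≤ p), if_neg (by omega : ¬ t < p)]
          show B (c t) (c (t + 1 + (q - p))) = B (c (t + (q - p))) (c (t + (q - p) + 1))
          rw [show t + 1 + (q - p) = t + (q - p) + 1 from by omega,
            show t + (q - p) = q from by omega, h, hcpq]
        · rw [if_neg (by omega : ¬ t ≤ p), if_neg (by omega : ¬ t + 1 ≤ p),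
            if_neg (by omega : ¬ t < p)]
          show B (c (t + (q - p))) (c (t + 1 + (q - p))) = B (c (t + (q - p))) (c (t + (q - p) + 1))
          rw [show t + 1 + (q - p) = t + (q - p) + 1 from by omega]
    have hdecomp : tpow B (n+1) i s
        = (∑ t ∈ Finset.range m', B (c'' t) (c'' (t+1))) + ∑ t ∈ Finset.Ico p q, w t := by
      rw [hval, hsplice, Finset.sum_sdiff]
      intro t ht
      rw [Finset.mem_Ico] at ht
      exact Finset.mem_range.2 (by omega)
    calc tpow B (n+1) i s
        ≤ (∑ t ∈ Finset.range m', B (c'' t) (c'' (t+1))) + 0 := by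
          rw [hdecomp]
          exact wb_add_le_add_left hcycW' _
      _ = ∑ t ∈ Finset.range m', B (c'' t) (c'' (t+1)) := add_zero _
      _ ≤ tpow B m' (c'' 0) (c'' m') := tpow_ge_path B c'' m'
      _ = tpow B m' i s := by
          rw [hc''def]
          simp only [if_pos (by omega : (0:ℕ) ≤ p), if_neg (by omega : ¬ m' ≤ p)]
          rw [hc0, show m' + (q - p) = n + 1 from by omega, hcn]
      _ ≤ x i := Finset.le_sup (f := fun ℓ => tpow B ℓ i s) (Finset.mem_range.2 (by omega))
  -- the fixed point equation for B
  have hfix : ∀ i, tdot (B i) x = x i := by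
    intro i
    have h2a : tdot (B i) x = (Finset.range (n+1)).sup fun ℓ => tpow B (ℓ+1) i s := by
      show (Finset.univ.sup fun jj => B i jj + x jj) = _
      have e1 : (Finset.univ.sup fun jj => B i jj + x jj)
          = Finset.univ.sup fun jj => (Finset.range (n+1)).sup
              fun ℓ => B i jj + tpow B ℓ jj s := by
        apply Finset.sup_congr rfl
        intro jj _
        rw [add_sup_any _ ⟨0, Finset.mem_range.2 (by omega)⟩ _ (B i jj)]
      rw [e1, Finset.sup_comm]
      apply Finset.sup_congr rfl
      intro ℓ _
      show (Finset.univ.sup fun jj => B i jj + tpow B ℓ jj s) = tpow B (ℓ+1) i s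
      rw [← tmul_tpow hn B ℓ]
      rfl
    rw [h2a]
    apply le_antisymm
    · apply Finset.sup_le
      intro ℓ hℓ
      rw [Finset.mem_range] at hℓ
      by_cases hcase : ℓ + 1 ≤ n
      · exact Finset.le_sup (f := fun ℓ => tpow B ℓ i s) (Finset.mem_range.2 (by omega))
      · have : ℓ = n := by omega
        subst this
        exact hD i
    · apply Finset.sup_le
      intro ℓ hℓ
      rw [Finset.mem_range] at hℓ
      by_cases hℓ1 : 1 ≤ ℓ
      · have : tpow B ℓ i s = tpow B ((ℓ-1)+1) i s := by congr 1; omega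
        rw [this]
        exact Finset.le_sup (f := fun m => tpow B (m+1) i s) (Finset.mem_range.2 (by omega))
      · have hℓ0 : ℓ = 0 := by omega
        subst hℓ0
        by_cases his : i = s
        · rw [his]
          have h0 : tpow B 0 s s = 0 := by simp [tpow]
          rw [h0]
          calc (0 : WithBot ℝ) ≤ tpow B ℓ0 s s := hcritpow
            _ ≤ _ := by
              have e : ℓ0 = (ℓ0 - 1) + 1 := by have := hcirc0.1; omega
              rw [e]
              exact Finset.le_sup (f := fun m => tpow B (m+1) s s)
                (Finset.mem_range.2 (by have := hcirc0.1; omega))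
        · have h0 : tpow B 0 i s = ⊥ := by simp [tpow, his]
          rw [h0]; exact bot_le
  -- convert B fixed point to A eigen equation
  refine ⟨x, ?_, ?_⟩
  · intro hbot
    have : x s = ⊥ := by rw [hbot]; rfl
    rw [this, le_bot_iff] at hxs
    exact (by simp : (0 : WithBot ℝ) ≠ ⊥) hxs
  · intro i
    have hBA : tdot (B i) x = tdot (A i) x + ↑(-lam) := by
      show (Finset.univ.sup fun j => A i j + ↑(-lam) + x j) = _
      have : ∀ j ∈ Finset.univ, A i j + ↑(-lam) + x j = (A i j + x j) + ↑(-lam) := by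
        intro j _
        rw [add_right_comm]
      rw [Finset.sup_congr rfl this, sup_add_any _ hne _ _]
      rfl
    have := hfix i
    rw [hBA] at this
    have h2 : tdot (A i) x = x i + ↑lam := by
      have h3 := wb_add_neg_cancel (tdot (A i) x) (-lam)
      rw [neg_neg] at h3
      rw [← h3, this]
    rw [h2, add_comm]

lemma circuitWeight_ne_bot {n : ℕ} {A : Fin n → Fin n → WithBot ℝ} {ℓ : ℕ} {c : ℕ → Fin n}
    (hc : IsCircuit A ℓ c) : circuitWeight A ℓ c ≠ ⊥ :=
  wsum_ne_bot fun k hk => hc.2.2 k (Finset.mem_range.mp hk)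

def extf {n : ℕ} (f : Fin (n+1) → Fin n) : ℕ → Fin n :=
  fun k => f ⟨min k n, Nat.lt_succ_of_le (min_le_right k n)⟩

lemma extf_eq {n : ℕ} (c : ℕ → Fin n) {k : ℕ} (hk : k ≤ n) :
    extf (fun i => c i) k = c k := by
  simp only [extf]
  congr 1
  omega

lemma encode_circuit {n : ℕ} {A : Fin n → Fin n → WithBot ℝ} {ℓ : ℕ} {c : ℕ → Fin n}
    (hc : IsCircuit A ℓ c) (hl : ℓ ≤ n) :
    IsCircuit A ℓ (extf (fun i => c i)) ∧
      circuitWeight A ℓ (extf (fun i => c i)) = circuitWeight A ℓ c := by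
  obtain ⟨h1, h2, h3⟩ := hc
  constructor
  · refine ⟨h1, ?_, ?_⟩
    · rw [extf_eq c hl, extf_eq c (by omega), h2]
    · intro k hk
      rw [extf_eq c (by omega), extf_eq c (by omega)]
      exact h3 k hk
  · apply Finset.sum_congr rfl
    intro k hk
    rw [Finset.mem_range] at hk
    rw [extf_eq c (by omega), extf_eq c (by omega)]

lemma no_circuit_eigen {n : ℕ} (hn : 1 ≤ n) (A : Fin n → Fin n → WithBot ℝ)
    (hirr : StronglyConnected A) (hnc : ¬ ∃ ℓ c, IsCircuit A ℓ c) :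
    IsEigenvalue A ⊥ := by
  have hAbot : ∀ i j, A i j = ⊥ := by
    intro i j
    by_contra hA
    obtain ⟨ℓ, c, hc0, hcl, hce⟩ := hirr j i
    apply hnc
    refine ⟨ℓ + 1, fun k => if k = 0 then i else c (k - 1), by omega, ?_, ?_⟩
    · simp only [if_neg (by omega : ¬ ℓ + 1 = 0), if_pos rfl]
      simpa using hcl
    · intro k hk
      by_cases hk0 : k = 0
      · subst hk0
        simp only [if_pos rfl, if_neg (by omega : ¬ (0:ℕ) + 1 = 0)]
        simpa [hc0] using hA
      · simp only [if_neg hk0, if_neg (by omega : ¬ k + 1 = 0)]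
        rw [show k + 1 - 1 = (k - 1) + 1 from by omega]
        exact hce (k - 1) (by omega)
  refine ⟨fun _ => (0 : WithBot ℝ), ?_, ?_⟩
  · intro h
    have := congrFun h ⟨0, hn⟩
    simp [botVec] at this
  · intro i
    have : tdot (A i) (fun _ => (0 : WithBot ℝ)) = ⊥ := by
      apply le_bot_iff.mp
      apply Finset.sup_le
      intro j _
      rw [hAbot i j, WithBot.bot_add]
    rw [this, WithBot.bot_add]


/-- an irreducible matrix has a unique eigenvalue: some `lam ∈ ℝ_max` is an
eigenvalue of `A`, and any two eigenvalues of `A` coincide. -/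
theorem stmt_7 {n : ℕ} (hn : 1 ≤ n) (A : Fin n → Fin n → WithBot ℝ)
    (hirr : StronglyConnected A) :
    (∃ lam : WithBot ℝ, IsEigenvalue A lam) ∧
      ∀ lam μ : WithBot ℝ, IsEigenvalue A lam → IsEigenvalue A μ → lam = μ := by
  classical
  refine ⟨?_, eigen_unique hn A hirr⟩
  by_cases hnc : ∃ ℓ c, IsCircuit A ℓ c
  · -- build the maximum cycle mean
    obtain ⟨ℓ1, c1, hc1, hl1⟩ := circuit_short A hnc
    set F : Finset (ℕ × (Fin (n+1) → Fin n)) :=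
      (Finset.Icc 1 n ×ˢ Finset.univ).filter
        (fun p => IsCircuit A p.1 (extf p.2)) with hFdef
    set mean : ℕ × (Fin (n+1) → Fin n) → ℝ :=
      fun p => (circuitWeight A p.1 (extf p.2)).unbotD 0 / (p.1 : ℝ) with hmeandef
    have hmem : ∀ {ℓ : ℕ} {c : ℕ → Fin n}, IsCircuit A ℓ c → ℓ ≤ n →
        (ℓ, fun i : Fin (n+1) => c i) ∈ F := by
      intro ℓ c hc hl
      rw [hFdef, Finset.mem_filter]
      refine ⟨Finset.mem_product.2 ⟨Finset.mem_Icc.2 ⟨hc.1, hl⟩, Finset.mem_univ _⟩, ?_⟩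
      exact (encode_circuit hc hl).1
    have hFne : F.Nonempty := ⟨_, hmem hc1 hl1⟩
    set lam : ℝ := (F.image mean).max' (hFne.image mean) with hlamdef
    have hub : ∀ ℓ c, IsCircuit A ℓ c → ℓ ≤ n → circuitWeight A ℓ c ≤ ↑((ℓ : ℝ) * lam) := by
      intro ℓ c hc hl
      obtain ⟨hcirc', hw'⟩ := encode_circuit hc hl
      obtain ⟨r, hr⟩ : ∃ r : ℝ, circuitWeight A ℓ c = ↑r :=
        ⟨(circuitWeight A ℓ c).unbot (circuitWeight_ne_bot hc),
          (WithBot.coe_unbot _ _).symm⟩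
      have hmean : mean (ℓ, fun i : Fin (n+1) => c i) = r / ℓ := by
        rw [hmeandef]
        simp only
        rw [hw', hr]
        rfl
      have hle : r / ℓ ≤ lam := by
        rw [← hmean, hlamdef]
        exact Finset.le_max' _ _ (Finset.mem_image_of_mem mean (hmem hc hl))
      rw [hr, WithBot.coe_le_coe]
      have hl0 : (0 : ℝ) < (ℓ : ℝ) := by
        have := hc.1; positivity
      rw [div_le_iff₀ hl0] at hle
      nlinarith
    have hcrit : ∃ ℓ c, IsCircuit A ℓ c ∧ ℓ ≤ n ∧
        circuitWeight A ℓ c = ↑((ℓ : ℝ) * lam) := by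
      have hmax : lam ∈ F.image mean := Finset.max'_mem _ _
      rw [Finset.mem_image] at hmax
      obtain ⟨p, hpF, hpmean⟩ := hmax
      rw [hFdef, Finset.mem_filter] at hpF
      obtain ⟨hpmem, hpcirc⟩ := hpF
      rw [Finset.mem_product, Finset.mem_Icc] at hpmem
      refine ⟨p.1, extf p.2, hpcirc, hpmem.1.2, ?_⟩
      obtain ⟨r, hr⟩ : ∃ r : ℝ, circuitWeight A p.1 (extf p.2) = ↑r :=
        ⟨(circuitWeight A p.1 (extf p.2)).unbot (circuitWeight_ne_bot hpcirc),
          (WithBot.coe_unbot _ _).symm⟩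
      rw [hr, WithBot.coe_inj]
      rw [hmeandef] at hpmean
      simp only at hpmean
      rw [hr] at hpmean
      have hl0 : (0 : ℝ) < (p.1 : ℝ) := by
        have := hpmem.1.1; positivity
      field_simp at hpmean
      exact hpmean
    exact ⟨↑lam, exists_eigen hn A lam hub hcrit⟩
  · exact ⟨⊥, no_circuit_eigen hn A hirr hnc⟩
end

section
/- Let m ≥ 1 and let c_1,…,c_m ∈ ℝ_max be coefficients of the tropical polynomial function g : ℝ_max → ℝ_max, g(x) = max_{1 ≤ k ≤ m} (c_k + k·x) (with (-∞) + t = -∞ and g(-∞) = -∞). Then the tropical linear form c_1 + x is a tropical linear approximation of g at ε: |E(g(x)) − E(c_1 + x)| / E(x) → 0 as x → -∞ (x ∈ ℝ). -/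
open Filter Topology

lemma E_bot : E ⊥ = 0 := rfl
lemma E_coe (r : ℝ) : E r = Real.exp r := rfl

lemma E_mono : Monotone E := by
  intro a b h
  induction a using WithBot.recBotCoe with
  | bot =>
    induction b using WithBot.recBotCoe <;> simp [E_bot, E_coe, (Real.exp_pos _).le]
  | coe a =>
    induction b using WithBot.recBotCoe with
    | bot => exact absurd h (by simp)
    | coe b => exact Real.exp_le_exp.2 (WithBot.coe_le_coe.1 h)

lemma E_add (a b : WithBot ℝ) : E (a + b) = E a * E b := by
  induction a using WithBot.recBotCoe with
  | bot => simp [E_bot]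
  | coe a =>
    induction b using WithBot.recBotCoe with
    | bot => simp [E_bot]
    | coe b =>
      rw [← WithBot.coe_add]
      exact Real.exp_add a b

lemma E_nonneg (a : WithBot ℝ) : 0 ≤ E a := by
  induction a using WithBot.recBotCoe <;> simp [E_bot, E_coe, (Real.exp_pos _).le]

lemma coe_nsmul' (n : ℕ) (x : ℝ) : (n • (x : WithBot ℝ)) = ((n • x : ℝ) : WithBot ℝ) := by
  induction n with
  | zero => simp
  | succ n ih => rw [succ_nsmul, succ_nsmul, ih, WithBot.coe_add]


/-- for a tropical polynomial `g(x) = max_{1 ≤ k ≤ m} (c_k + k·x)` (the index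
`k : Fin m` encodes the monomial `c_{k+1} ⊗ x^{⊗(k+1)}`), the tropical linear form `c_1 + x`
is a tropical linear approximation of `g` at `ε`: `|E(g(x)) − E(c_1 + x)|/e^x → 0` as
`x → -∞` along the reals. -/
theorem stmt_8 (m : ℕ) (hm : 1 ≤ m) (c : Fin m → WithBot ℝ) :
    Filter.Tendsto (fun x : ℝ =>
      |E (Finset.univ.sup fun k : Fin m => c k + (k.1 + 1) • ((x : ℝ) : WithBot ℝ)) -
        E (c ⟨0, hm⟩ + ((x : ℝ) : WithBot ℝ))| / Real.exp x)
      Filter.atBot (nhds 0) := by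
  have hne : (Finset.univ : Finset (Fin m)).Nonempty := ⟨⟨0, hm⟩, Finset.mem_univ _⟩
  set k0 : Fin m := ⟨0, hm⟩ with hk0
  -- the bounding function
  set G : ℝ → ℝ := fun x => ∑ k : Fin m,
    (if k = k0 then 0 else E (c k) * Real.exp (k.1 * x)) with hG
  have hGlim : Tendsto G atBot (nhds 0) := by
    rw [hG]
    have : (0 : ℝ) = ∑ _k : Fin m, 0 := by simp
    rw [this]
    apply tendsto_finset_sum
    intro k _
    by_cases h : k = k0
    · simp [h]
    · simp only [h, if_false]
      rw [show (0:ℝ) = E (c k) * 0 by ring]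
      apply Tendsto.const_mul
      have hk1 : (1:ℝ) ≤ (k.1 : ℝ) := by
        have : k.1 ≠ 0 := fun h0 => h (Fin.ext h0)
        exact_mod_cast Nat.one_le_iff_ne_zero.2 this
      apply Real.tendsto_exp_atBot.comp
      exact tendsto_id.const_mul_atBot (by linarith)
  apply squeeze_zero ?_ ?_ hGlim
  · intro x
    positivity
  · intro x
    rw [div_le_iff₀ (Real.exp_pos x)]
    -- identify E of the sup
    have hsup : E (Finset.univ.sup fun k : Fin m => c k + (k.1 + 1) • ((x : ℝ) : WithBot ℝ))
        = Finset.univ.sup' hne (fun k : Fin m => E (c k) * Real.exp ((k.1 + 1) * x)) := by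
      rw [← Finset.sup'_eq_sup hne]
      rw [Finset.comp_sup'_eq_sup'_comp hne E (fun a b => E_mono.map_sup a b)]
      apply Finset.sup'_congr hne rfl
      intro k _
      simp only [Function.comp_apply]
      rw [coe_nsmul', E_add, E_coe, nsmul_eq_mul]
      push_cast
      ring_nf
    have ha0 : E (c k0 + ((x : ℝ) : WithBot ℝ)) = E (c k0) * Real.exp (((k0.1 : ℝ) + 1) * x) := by
      rw [E_add, E_coe, hk0]
      norm_num
    rw [hsup, ha0]
    -- abs is the difference
    have hle : E (c k0) * Real.exp (((k0.1 : ℝ) + 1) * x)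
        ≤ Finset.univ.sup' hne (fun k : Fin m => E (c k) * Real.exp ((k.1 + 1) * x)) := by
      have := Finset.le_sup' (fun k : Fin m => E (c k) * Real.exp ((k.1 + 1) * x))
        (Finset.mem_univ k0)
      exact this
    rw [abs_of_nonneg (by linarith)]
    rw [sub_le_iff_le_add]
    apply Finset.sup'_le
    intro k _
    by_cases h : k = k0
    · subst h
      have : 0 ≤ G x * Real.exp x := by
        apply mul_nonneg _ (Real.exp_pos x).le
        apply Finset.sum_nonneg
        intro i _
        split
        · exact le_refl 0
        · exact mul_nonneg (E_nonneg _) (Real.exp_pos _).le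
      linarith
    · have hterm : E (c k) * Real.exp ((k.1 + 1) * x)
          = (if k = k0 then 0 else E (c k) * Real.exp (k.1 * x)) * Real.exp x := by
        simp only [h, if_false]
        rw [mul_assoc, ← Real.exp_add]
        ring_nf
      rw [hterm]
      have hsum : (if k = k0 then 0 else E (c k) * Real.exp (k.1 * x)) ≤ G x := by
        apply Finset.single_le_sum (f := fun i : Fin m =>
          (if i = k0 then 0 else E (c i) * Real.exp (i.1 * x))) ?_ (Finset.mem_univ k)
        intro i _
        split
        · exact le_refl 0
        · exact mul_nonneg (E_nonneg _) (Real.exp_pos _).le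
      have hb : 0 ≤ E (c k0) * Real.exp (((k0.1 : ℝ) + 1) * x) :=
        mul_nonneg (E_nonneg _) (Real.exp_pos _).le
      have := mul_le_mul_of_nonneg_right hsum (Real.exp_pos x).le
      linarith
end
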